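/- arXiv:2105.14297 — 5 statements merged into one kernel-verified Lean document; each statement's English description precedes it below -/
import Mathlib

section
/- Let ε > 0, let u_0, u_1, u_{0,ε}, u_{1,ε} be real numbers, and let u_ε be the associated shadow wave net. Then for every test function φ ∈ C_c^∞(ℝ × (0,∞)) one has the exact Rankine–Hugoniot identity for the time derivative: −∫_0^∞ ∫_ℝ u_ε(x,t) ∂_t φ(x,t) dx dt = ε (u_{0,ε} − u_0) ∫_0^∞ φ(−εt, t) dt + ε (u_{1,ε} − u_1) ∫_0^∞ φ(εt, t) dt. -/
open MeasureTheory Filter Set Topology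

/-- The shadow wave net centered at `x = 0`: for fixed `ε > 0`,
`u_ε(x,t) = u0` for `x < -εt`, `u0e` for `-εt < x < 0`,
`u1e` for `0 < x < εt` and `u1` for `x > εt`. -/
noncomputable def sdw (u0 u1 u0e u1e ε x t : ℝ) : ℝ :=
  if x < -(ε * t) then u0
  else if x < 0 then u0e
  else if x < ε * t then u1e
  else u1

/-- The two-flux function `f(x,u) = f_l(u)` for `x < 0`, `f_r(u)` for `x > 0`. -/
noncomputable def twoFlux (fl fr : ℝ → ℝ) (x u : ℝ) : ℝ :=
  if x < 0 then fl u else fr u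

/-- Test functions `φ ∈ C_c^∞(ℝ × (0,∞))`. -/
def IsTestFun (φ : ℝ × ℝ → ℝ) : Prop :=
  ContDiff ℝ (⊤ : ℕ∞) φ ∧ HasCompactSupport φ ∧ ∀ p : ℝ × ℝ, p.2 ≤ 0 → φ p = 0

/-- The net `(u_ε)` (with intermediate states `u0e ε`, `u1e ε`) is a weak asymptotic
solution of `∂_t u + ∂_x f(x,u) = 0`. -/
def WeakAsymptoticSolution (fl fr : ℝ → ℝ) (u0 u1 : ℝ) (u0e u1e : ℝ → ℝ) : Prop :=
  ∀ φ : ℝ × ℝ → ℝ, IsTestFun φ →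
    Tendsto (fun ε : ℝ =>
        ∫ t in Ioi (0:ℝ), ∫ x : ℝ,
          (sdw u0 u1 (u0e ε) (u1e ε) ε x t * fderiv ℝ φ (x, t) (0, 1) +
           twoFlux fl fr x (sdw u0 u1 (u0e ε) (u1e ε) ε x t) * fderiv ℝ φ (x, t) (1, 0)))
      (𝓝[>] (0:ℝ)) (𝓝 0)

/-- The net `(u_ε)` converges distributionally to `U(x) + k t δ(x)`,
where `U(x) = u0` for `x < 0` and `u1` for `x > 0`. -/
def ConvergesToDeltaShock (u0 u1 : ℝ) (u0e u1e : ℝ → ℝ) (k : ℝ) : Prop :=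
  ∀ φ : ℝ × ℝ → ℝ, IsTestFun φ →
    Tendsto (fun ε : ℝ =>
        ∫ t in Ioi (0:ℝ), ∫ x : ℝ, sdw u0 u1 (u0e ε) (u1e ε) ε x t * φ (x, t))
      (𝓝[>] (0:ℝ))
      (𝓝 ((∫ t in Ioi (0:ℝ), ∫ x : ℝ, (if x < 0 then u0 else u1) * φ (x, t)) +
           k * ∫ t in Ioi (0:ℝ), t * φ (0, t)))

section RHaux

variable {φ : ℝ × ℝ → ℝ}

lemma tf_cont (hφ : IsTestFun φ) :
    Continuous fun p : ℝ × ℝ => fderiv ℝ φ p (0, 1) :=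
  ((hφ.1.continuous_fderiv (by simp)).clm_apply continuous_const)

lemma tf_hcs (hφ : IsTestFun φ) :
    HasCompactSupport fun p : ℝ × ℝ => fderiv ℝ φ p (0, 1) :=
  HasCompactSupport.fderiv_apply (𝕜 := ℝ) hφ.2.1 (0, 1)

lemma tf_int (hφ : IsTestFun φ) :
    Integrable (fun p : ℝ × ℝ => fderiv ℝ φ p (0, 1)) :=
  (tf_cont hφ).integrable_of_hasCompactSupport (tf_hcs hφ)

lemma tf_deriv (hφ : IsTestFun φ) (x t : ℝ) :
    HasDerivAt (fun s => φ (x, s)) (fderiv ℝ φ (x, t) (0, 1)) t := by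
  have hF : HasFDerivAt φ (fderiv ℝ φ (x, t)) (x, t) :=
    (hφ.1.differentiable (by simp) (x, t)).hasFDerivAt
  have hc : HasDerivAt (fun s : ℝ => (x, s)) ((0 : ℝ), (1 : ℝ)) t := by
    simpa using ((hasDerivAt_const t x).prodMk (hasDerivAt_id t))
  exact hF.comp_hasDerivAt t hc

lemma tf_zero (hφ : IsTestFun φ) (p : ℝ × ℝ) (hp : p.2 ≤ 0) :
    fderiv ℝ φ p (0, 1) = 0 := by
  have hneg : ∀ q : ℝ × ℝ, q.2 < 0 → fderiv ℝ φ q (0, 1) = 0 := by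
    intro q hq
    have hopen : IsOpen {r : ℝ × ℝ | r.2 < 0} := isOpen_lt continuous_snd continuous_const
    have hev : φ =ᶠ[nhds q] (fun _ => 0) := by
      filter_upwards [hopen.mem_nhds hq] with r hr
      exact hφ.2.2 r (le_of_lt hr)
    rw [hev.fderiv_eq, fderiv_fun_const]
    simp
  rcases lt_or_eq_of_le hp with h | h
  · exact hneg p h
  obtain ⟨x, t⟩ := p
  simp only at h; subst h
  have h1 : Tendsto (fun s : ℝ => fderiv ℝ φ (x, s) (0, 1)) (𝓝[<] 0)
      (𝓝 (fderiv ℝ φ (x, 0) (0, 1))) := by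
    have hcont : Continuous fun s : ℝ => fderiv ℝ φ (x, s) (0, 1) :=
      (tf_cont hφ).comp ((continuous_const (y := x)).prodMk continuous_id)
    exact (hcont.tendsto 0).mono_left nhdsWithin_le_nhds
  have h2 : Tendsto (fun s : ℝ => fderiv ℝ φ (x, s) (0, 1)) (𝓝[<] 0) (𝓝 0) := by
    apply Tendsto.congr' _ tendsto_const_nhds
    filter_upwards [self_mem_nhdsWithin] with s hs
    exact (hneg (x, s) hs).symm
  exact tendsto_nhds_unique h1 h2

lemma tf_bound (hφ : IsTestFun φ) : ∃ R : ℝ, 0 < R ∧ ∀ x t : ℝ, R < |t| ∨ R < |x| →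
    φ (x, t) = 0 ∧ fderiv ℝ φ (x, t) (0, 1) = 0 := by
  obtain ⟨R, hR0, hR⟩ := (hφ.2.1.isBounded.subset_closedBall_lt 0 0)
  refine ⟨R, hR0, fun x t h => ?_⟩
  have hnot : (x, t) ∉ tsupport φ := by
    intro hmem
    have := mem_closedBall_zero_iff.mp (hR hmem)
    have hx : |x| ≤ R := by
      calc |x| ≤ ‖((x : ℝ), t)‖ := by rw [Prod.norm_def]; exact le_max_left _ _
      _ ≤ R := this
    have ht : |t| ≤ R := by
      calc |t| ≤ ‖((x : ℝ), t)‖ := by rw [Prod.norm_def]; exact le_max_right _ _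
      _ ≤ R := this
    rcases h with h | h <;> linarith
  constructor
  · exact image_eq_zero_of_notMem_tsupport hnot
  · have hnot2 : (x, t) ∉ tsupport (fderiv ℝ φ) :=
      fun hm => hnot (tsupport_fderiv_subset ℝ hm)
    rw [image_eq_zero_of_notMem_tsupport hnot2]; simp

lemma tf_slice_t (hφ : IsTestFun φ) (x : ℝ) :
    Integrable (fun t => fderiv ℝ φ (x, t) (0, 1)) := by
  obtain ⟨R, hR0, hR⟩ := tf_bound hφ
  have hc : Continuous fun t : ℝ => fderiv ℝ φ (x, t) (0, 1) :=
    (tf_cont hφ).comp ((continuous_const (y := x)).prodMk continuous_id)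
  have hcs : HasCompactSupport fun t : ℝ => fderiv ℝ φ (x, t) (0, 1) := by
    apply HasCompactSupport.intro (isCompact_Icc (a := -R) (b := R))
    intro t ht
    have : R < |t| := by
      simp only [mem_Icc, not_and_or, not_le] at ht
      rcases ht with h | h
      · rw [abs_of_neg (by linarith)]; linarith
      · rw [abs_of_pos (by linarith)]; exact h
    exact (hR x t (Or.inl this)).2
  exact hc.integrable_of_hasCompactSupport hcs

lemma tf_slice_x (hφ : IsTestFun φ) (t : ℝ) :
    Integrable (fun x => fderiv ℝ φ (x, t) (0, 1)) := by
  obtain ⟨R, hR0, hR⟩ := tf_bound hφ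
  have hc : Continuous fun x : ℝ => fderiv ℝ φ (x, t) (0, 1) :=
    (tf_cont hφ).comp (continuous_id.prodMk (continuous_const (y := t)))
  have hcs : HasCompactSupport fun x : ℝ => fderiv ℝ φ (x, t) (0, 1) := by
    apply HasCompactSupport.intro (isCompact_Icc (a := -R) (b := R))
    intro x hx
    have : R < |x| := by
      simp only [mem_Icc, not_and_or, not_le] at hx
      rcases hx with h | h
      · rw [abs_of_neg (by linarith)]; linarith
      · rw [abs_of_pos (by linarith)]; exact h
    exact (hR x t (Or.inr this)).2
  exact hc.integrable_of_hasCompactSupport hcs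

lemma tf_ftc (hφ : IsTestFun φ) (x a : ℝ) :
    ∫ t in Ioi a, fderiv ℝ φ (x, t) (0, 1) = -φ (x, a) := by
  obtain ⟨R, hR0, hR⟩ := tf_bound hφ
  have htend : Tendsto (fun s => φ (x, s)) atTop (𝓝 0) := by
    apply Tendsto.congr' _ tendsto_const_nhds
    filter_upwards [eventually_gt_atTop R] with s hs
    exact ((hR x s (Or.inl (lt_of_lt_of_le hs (le_abs_self s)))).1).symm
  have := integral_Ioi_of_hasDerivAt_of_tendsto
    (f := fun s => φ (x, s)) (f' := fun t => fderiv ℝ φ (x, t) (0, 1)) (a := a)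
    (((hφ.1.continuous.comp ((continuous_const (y := x)).prodMk continuous_id)).continuousWithinAt))
    (fun s _ => tf_deriv hφ x s) ((tf_slice_t hφ x).integrableOn) htend
  rw [this, zero_sub]

lemma ext_Ioi {h : ℝ → ℝ} (h0 : ∀ t ≤ (0:ℝ), h t = 0) :
    ∫ t in Ioi (0:ℝ), h t = ∫ t, h t :=
  setIntegral_eq_integral_of_forall_compl_eq_zero fun t ht =>
    h0 t (by simpa using ht)

lemma my_swap_integral {F : ℝ × ℝ → ℝ} (hF : Integrable F) :
    ∫ t : ℝ, ∫ x : ℝ, F (x, t) = ∫ x : ℝ, ∫ t : ℝ, F (x, t) := by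
  have hF' : Integrable F ((volume : Measure ℝ).prod volume) := by
    rwa [← Measure.volume_eq_prod]
  have h : Integrable (F ∘ Prod.swap) ((volume : Measure ℝ).prod volume) := hF'.swap
  exact integral_integral_swap (f := fun t x => F (x, t)) h

lemma term_whole (hφ : IsTestFun φ) :
    ∫ t in Ioi (0:ℝ), ∫ x : ℝ, fderiv ℝ φ (x, t) (0, 1) = 0 := by
  have h0 : ∀ t ≤ (0:ℝ), ∫ x : ℝ, fderiv ℝ φ (x, t) (0, 1) = 0 := fun t ht => by
    have he : (fun x : ℝ => fderiv ℝ φ (x, t) (0, 1)) = fun _ => (0:ℝ) :=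
      funext fun x => tf_zero hφ (x, t) ht
    rw [he, integral_zero]
  rw [ext_Ioi h0, my_swap_integral (tf_int hφ)]
  have hinner : ∀ x : ℝ, ∫ t : ℝ, fderiv ℝ φ (x, t) (0, 1) = 0 := fun x => by
    rw [← ext_Ioi (fun t ht => tf_zero hφ (x, t) ht), tf_ftc hφ, hφ.2.2 (x, 0) le_rfl, neg_zero]
  simp only [hinner, integral_zero]

lemma term_half (hφ : IsTestFun φ) :
    ∫ t in Ioi (0:ℝ), ∫ x : ℝ,
      ({p : ℝ × ℝ | 0 ≤ p.1}.indicator (fun p => fderiv ℝ φ p (0, 1))) (x, t) = 0 := by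
  set ψ : ℝ × ℝ → ℝ := fun p => fderiv ℝ φ p (0, 1) with hψ
  set S : Set (ℝ × ℝ) := {p : ℝ × ℝ | 0 ≤ p.1} with hS
  have hSm : MeasurableSet S := measurableSet_le measurable_const measurable_fst
  have hzero : ∀ x t : ℝ, t ≤ 0 → S.indicator ψ (x, t) = 0 := fun x t ht => by
    rw [indicator_apply]
    split
    · exact tf_zero hφ (x, t) ht
    · rfl
  have h0 : ∀ t ≤ (0:ℝ), ∫ x : ℝ, S.indicator ψ (x, t) = 0 := fun t ht => by
    have he : (fun x : ℝ => S.indicator ψ (x, t)) = fun _ => (0:ℝ) :=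
      funext fun x => hzero x t ht
    rw [he, integral_zero]
  rw [ext_Ioi h0, my_swap_integral ((tf_int hφ).indicator hSm)]
  have hinner : ∀ x : ℝ, ∫ t : ℝ, S.indicator ψ (x, t) = 0 := fun x => by
    by_cases hx : (0:ℝ) ≤ x
    · have he : (fun t : ℝ => S.indicator ψ (x, t)) = fun t => ψ (x, t) :=
        funext fun t => indicator_of_mem (by simpa [hS] using hx) ψ
      rw [he, ← ext_Ioi (fun t ht => tf_zero hφ (x, t) ht), tf_ftc hφ,
        hφ.2.2 (x, 0) le_rfl, neg_zero]
    · have he : (fun t : ℝ => S.indicator ψ (x, t)) = fun _ => (0:ℝ) :=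
        funext fun t => indicator_of_notMem (by simpa [hS] using hx) ψ
      rw [he, integral_zero]
  simp only [← hψ, hinner, integral_zero]

lemma term_left (hφ : IsTestFun φ) {ε : ℝ} (hε : 0 < ε) :
    ∫ t in Ioi (0:ℝ), ∫ x : ℝ,
      ({p : ℝ × ℝ | -(ε * p.2) < p.1 ∧ p.1 < 0}.indicator
        (fun p => fderiv ℝ φ p (0, 1))) (x, t)
      = -(ε * ∫ t in Ioi (0:ℝ), φ (-(ε * t), t)) := by
  set ψ : ℝ × ℝ → ℝ := fun p => fderiv ℝ φ p (0, 1) with hψ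
  set S : Set (ℝ × ℝ) := {p : ℝ × ℝ | -(ε * p.2) < p.1 ∧ p.1 < 0} with hS
  have hSm : MeasurableSet S :=
    (measurableSet_lt ((measurable_const.mul measurable_snd).neg) measurable_fst).inter
      (measurableSet_lt measurable_fst measurable_const)
  have hzero : ∀ x t : ℝ, t ≤ 0 → S.indicator ψ (x, t) = 0 := fun x t ht => by
    rw [indicator_apply]
    split
    · exact tf_zero hφ (x, t) ht
    · rfl
  have h0 : ∀ t ≤ (0:ℝ), ∫ x : ℝ, S.indicator ψ (x, t) = 0 := fun t ht => by
    have he : (fun x : ℝ => S.indicator ψ (x, t)) = fun _ => (0:ℝ) :=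
      funext fun x => hzero x t ht
    rw [he, integral_zero]
  rw [ext_Ioi h0, my_swap_integral ((tf_int hφ).indicator hSm)]
  have hinner : ∀ x : ℝ,
      (∫ t : ℝ, S.indicator ψ (x, t)) =
        (Iio (0:ℝ)).indicator (fun x => -φ (x, -x / ε)) x := fun x => by
    by_cases hx : x < 0
    · have he : (fun t : ℝ => S.indicator ψ (x, t)) =
          (Ioi (-x / ε)).indicator (fun t => ψ (x, t)) := by
        funext t
        rw [indicator_apply, indicator_apply]
        have hiff : (x, t) ∈ S ↔ t ∈ Ioi (-x / ε) := by
          simp only [hS, mem_setOf_eq, mem_Ioi, div_lt_iff₀ hε]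
          constructor
          · rintro ⟨h1, _⟩; nlinarith
          · intro h1; constructor <;> nlinarith
        by_cases hm : (x, t) ∈ S
        · rw [if_pos hm, if_pos (hiff.mp hm)]
        · rw [if_neg hm, if_neg (fun h => hm (hiff.mpr h))]
      rw [he, integral_indicator measurableSet_Ioi, tf_ftc hφ,
        indicator_of_mem (mem_Iio.mpr hx)]
    · have he : (fun t : ℝ => S.indicator ψ (x, t)) = fun _ => (0:ℝ) := by
        funext t
        refine indicator_of_notMem (fun h => ?_) ψ
        exact hx h.2
      rw [he, integral_zero, indicator_of_notMem (by simpa using hx)]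
  rw [show (fun x : ℝ => ∫ t : ℝ, S.indicator ψ (x, t)) =
      (Iio (0:ℝ)).indicator (fun x => -φ (x, -x / ε)) from funext hinner]
  rw [integral_indicator measurableSet_Iio]
  have e1 : ∫ x in Iio (0:ℝ), -φ (x, -x / ε) = ∫ x in Ioi (0:ℝ), -φ (-x, x / ε) := by
    rw [← integral_Iic_eq_integral_Iio]
    have h := integral_comp_neg_Ioi (0:ℝ) (fun x => -φ (x, -x / ε))
    simp only [neg_zero, neg_neg] at h
    exact h.symm
  have e2 : ∫ x in Ioi (0:ℝ), -φ (-x, x / ε) = ε * ∫ t in Ioi (0:ℝ), -φ (-(ε * t), t) := by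
    have h := integral_comp_mul_left_Ioi (fun y => -φ (-y, y / ε)) 0 hε
    simp only [mul_zero, smul_eq_mul] at h
    have hsimp : (fun x : ℝ => -φ (-(ε * x), ε * x / ε)) = fun x => -φ (-(ε * x), x) := by
      funext x; rw [mul_div_cancel_left₀ x hε.ne']
    rw [hsimp] at h
    rw [h, ← mul_assoc, mul_inv_cancel₀ hε.ne', one_mul]
  rw [e1, e2, integral_neg]
  ring

lemma term_right (hφ : IsTestFun φ) {ε : ℝ} (hε : 0 < ε) :
    ∫ t in Ioi (0:ℝ), ∫ x : ℝ,
      ({p : ℝ × ℝ | 0 < p.1 ∧ p.1 < ε * p.2}.indicator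
        (fun p => fderiv ℝ φ p (0, 1))) (x, t)
      = -(ε * ∫ t in Ioi (0:ℝ), φ (ε * t, t)) := by
  set ψ : ℝ × ℝ → ℝ := fun p => fderiv ℝ φ p (0, 1) with hψ
  set S : Set (ℝ × ℝ) := {p : ℝ × ℝ | 0 < p.1 ∧ p.1 < ε * p.2} with hS
  have hSm : MeasurableSet S :=
    (measurableSet_lt measurable_const measurable_fst).inter
      (measurableSet_lt measurable_fst (measurable_const.mul measurable_snd))
  have hzero : ∀ x t : ℝ, t ≤ 0 → S.indicator ψ (x, t) = 0 := fun x t ht => by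
    rw [indicator_apply]
    split
    · exact tf_zero hφ (x, t) ht
    · rfl
  have h0 : ∀ t ≤ (0:ℝ), ∫ x : ℝ, S.indicator ψ (x, t) = 0 := fun t ht => by
    have he : (fun x : ℝ => S.indicator ψ (x, t)) = fun _ => (0:ℝ) :=
      funext fun x => hzero x t ht
    rw [he, integral_zero]
  rw [ext_Ioi h0, my_swap_integral ((tf_int hφ).indicator hSm)]
  have hinner : ∀ x : ℝ,
      (∫ t : ℝ, S.indicator ψ (x, t)) =
        (Ioi (0:ℝ)).indicator (fun x => -φ (x, x / ε)) x := fun x => by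
    by_cases hx : 0 < x
    · have he : (fun t : ℝ => S.indicator ψ (x, t)) =
          (Ioi (x / ε)).indicator (fun t => ψ (x, t)) := by
        funext t
        rw [indicator_apply, indicator_apply]
        have hiff : (x, t) ∈ S ↔ t ∈ Ioi (x / ε) := by
          simp only [hS, mem_setOf_eq, mem_Ioi, div_lt_iff₀ hε]
          constructor
          · rintro ⟨_, h2⟩; nlinarith
          · intro h1; constructor <;> nlinarith
        by_cases hm : (x, t) ∈ S
        · rw [if_pos hm, if_pos (hiff.mp hm)]
        · rw [if_neg hm, if_neg (fun h => hm (hiff.mpr h))]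
      rw [he, integral_indicator measurableSet_Ioi, tf_ftc hφ,
        indicator_of_mem (mem_Ioi.mpr hx)]
    · have he : (fun t : ℝ => S.indicator ψ (x, t)) = fun _ => (0:ℝ) := by
        funext t
        refine indicator_of_notMem (fun h => ?_) ψ
        exact hx h.1
      rw [he, integral_zero, indicator_of_notMem (by simpa using hx)]
  rw [show (fun x : ℝ => ∫ t : ℝ, S.indicator ψ (x, t)) =
      (Ioi (0:ℝ)).indicator (fun x => -φ (x, x / ε)) from funext hinner]
  rw [integral_indicator measurableSet_Ioi]
  have e2 : ∫ x in Ioi (0:ℝ), -φ (x, x / ε) = ε * ∫ t in Ioi (0:ℝ), -φ (ε * t, t) := by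
    have h := integral_comp_mul_left_Ioi (fun y => -φ (y, y / ε)) 0 hε
    simp only [mul_zero, smul_eq_mul] at h
    have hsimp : (fun x : ℝ => -φ (ε * x, ε * x / ε)) = fun x => -φ (ε * x, x) := by
      funext x; rw [mul_div_cancel_left₀ x hε.ne']
    rw [hsimp] at h
    rw [h, ← mul_assoc, mul_inv_cancel₀ hε.ne', one_mul]
  rw [e2, integral_neg]
  ring

end RHaux

/-- exact Rankine–Hugoniot identity for the time-derivative term of a
shadow wave net, for fixed `ε > 0`. -/
theorem rankine_hugoniot_time_identity
    (ε u0 u1 u0e u1e : ℝ) (hε : 0 < ε)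
    (φ : ℝ × ℝ → ℝ) (hφ : IsTestFun φ) :
    -(∫ t in Ioi (0:ℝ), ∫ x : ℝ, sdw u0 u1 u0e u1e ε x t * fderiv ℝ φ (x, t) (0, 1)) =
      ε * (u0e - u0) * (∫ t in Ioi (0:ℝ), φ (-(ε * t), t)) +
      ε * (u1e - u1) * (∫ t in Ioi (0:ℝ), φ (ε * t, t)) := by
  have hψc := tf_cont hφ
  set ψ : ℝ × ℝ → ℝ := fun p => fderiv ℝ φ p (0, 1) with hψ
  set S2 : Set (ℝ × ℝ) := {p : ℝ × ℝ | 0 ≤ p.1} with hS2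
  set S3 : Set (ℝ × ℝ) := {p : ℝ × ℝ | -(ε * p.2) < p.1 ∧ p.1 < 0} with hS3
  set S4 : Set (ℝ × ℝ) := {p : ℝ × ℝ | 0 < p.1 ∧ p.1 < ε * p.2} with hS4
  have hS2m : MeasurableSet S2 := measurableSet_le measurable_const measurable_fst
  have hS3m : MeasurableSet S3 :=
    (measurableSet_lt ((measurable_const.mul measurable_snd).neg) measurable_fst).inter
      (measurableSet_lt measurable_fst measurable_const)
  have hS4m : MeasurableSet S4 :=
    (measurableSet_lt measurable_const measurable_fst).inter
      (measurableSet_lt measurable_fst (measurable_const.mul measurable_snd))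
  -- inner decomposition for t > 0
  have hdecomp : ∀ t ∈ Ioi (0:ℝ),
      (∫ x : ℝ, sdw u0 u1 u0e u1e ε x t * ψ (x, t)) =
      u0 * (∫ x : ℝ, ψ (x, t)) +
      ((u1 - u0) * (∫ x : ℝ, S2.indicator ψ (x, t)) +
      ((u0e - u0) * (∫ x : ℝ, S3.indicator ψ (x, t)) +
      (u1e - u1) * (∫ x : ℝ, S4.indicator ψ (x, t)))) := by
    intro t ht
    rw [mem_Ioi] at ht
    have hεt : 0 < ε * t := mul_pos hε ht
    have hae : (fun x : ℝ => sdw u0 u1 u0e u1e ε x t * ψ (x, t)) =ᵐ[volume]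
        (fun x : ℝ => u0 * ψ (x, t) +
          ((u1 - u0) * S2.indicator ψ (x, t) +
          ((u0e - u0) * S3.indicator ψ (x, t) +
          (u1e - u1) * S4.indicator ψ (x, t)))) := by
      have hZ : (volume : Measure ℝ) {-(ε * t), 0, ε * t} = 0 :=
        (Set.toFinite _).measure_zero _
      filter_upwards [measure_eq_zero_iff_ae_notMem.mp hZ] with x hx
      simp only [mem_insert_iff, mem_singleton_iff, not_or] at hx
      obtain ⟨hx1, hx2, hx3⟩ := hx
      have m2 : (x, t) ∈ S2 ↔ 0 ≤ x := Iff.rfl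
      have m3 : (x, t) ∈ S3 ↔ (-(ε * t) < x ∧ x < 0) := Iff.rfl
      have m4 : (x, t) ∈ S4 ↔ (0 < x ∧ x < ε * t) := Iff.rfl
      rcases lt_or_gt_of_ne hx1 with h1 | h1
      · have hx0 : x < 0 := by linarith
        rw [show sdw u0 u1 u0e u1e ε x t = u0 from by rw [sdw, if_pos h1],
          indicator_of_notMem (fun hm => absurd (m2.mp hm) (not_le.mpr hx0)) ψ,
          indicator_of_notMem (fun hm => absurd (m3.mp hm).1 (by linarith)) ψ,
          indicator_of_notMem (fun hm => absurd (m4.mp hm).1 (by linarith)) ψ]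
        ring
      · rcases lt_or_gt_of_ne hx2 with h2 | h2
        · rw [show sdw u0 u1 u0e u1e ε x t = u0e from by
            rw [sdw, if_neg (not_lt.mpr h1.le), if_pos h2],
            indicator_of_notMem (fun hm => absurd (m2.mp hm) (not_le.mpr h2)) ψ,
            indicator_of_mem (m3.mpr ⟨h1, h2⟩) ψ,
            indicator_of_notMem (fun hm => absurd (m4.mp hm).1 (by linarith)) ψ]
          ring
        · rcases lt_or_gt_of_ne hx3 with h3 | h3
          · rw [show sdw u0 u1 u0e u1e ε x t = u1e from by
              rw [sdw, if_neg (not_lt.mpr (by linarith)), if_neg (not_lt.mpr h2.le),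
                if_pos h3],
              indicator_of_mem (m2.mpr h2.le) ψ,
              indicator_of_notMem (fun hm => absurd (m3.mp hm).2 (by linarith)) ψ,
              indicator_of_mem (m4.mpr ⟨h2, h3⟩) ψ]
            ring
          · rw [show sdw u0 u1 u0e u1e ε x t = u1 from by
              rw [sdw, if_neg (not_lt.mpr (by linarith)), if_neg (not_lt.mpr (by linarith)),
                if_neg (not_lt.mpr h3.le)],
              indicator_of_mem (m2.mpr (by linarith)) ψ,
              indicator_of_notMem (fun hm => absurd (m3.mp hm).2 (by linarith)) ψ,
              indicator_of_notMem (fun hm => absurd (m4.mp hm).2 (by linarith)) ψ]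
            ring
    have hI1 : Integrable (fun x : ℝ => u0 * ψ (x, t)) :=
      (tf_slice_x hφ t).const_mul u0
    have e2 : (fun x : ℝ => S2.indicator ψ (x, t)) =
        (Ici (0:ℝ)).indicator (fun x => ψ (x, t)) := rfl
    have e3 : (fun x : ℝ => S3.indicator ψ (x, t)) =
        (Ioo (-(ε * t)) (0:ℝ)).indicator (fun x => ψ (x, t)) := rfl
    have e4 : (fun x : ℝ => S4.indicator ψ (x, t)) =
        (Ioo (0:ℝ) (ε * t)).indicator (fun x => ψ (x, t)) := rfl
    have hI2 : Integrable (fun x : ℝ => (u1 - u0) * S2.indicator ψ (x, t)) := by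
      have h := ((tf_slice_x hφ t).indicator measurableSet_Ici
        (s := Ici (0:ℝ))).const_mul (u1 - u0)
      rw [← e2] at h; exact h
    have hI3 : Integrable (fun x : ℝ => (u0e - u0) * S3.indicator ψ (x, t)) := by
      have h := ((tf_slice_x hφ t).indicator measurableSet_Ioo
        (s := Ioo (-(ε * t)) (0:ℝ))).const_mul (u0e - u0)
      rw [← e3] at h; exact h
    have hI4 : Integrable (fun x : ℝ => (u1e - u1) * S4.indicator ψ (x, t)) := by
      have h := ((tf_slice_x hφ t).indicator measurableSet_Ioo
        (s := Ioo (0:ℝ) (ε * t))).const_mul (u1e - u1)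
      rw [← e4] at h; exact h
    have hI34 : Integrable (fun x : ℝ => (u0e - u0) * S3.indicator ψ (x, t) +
        (u1e - u1) * S4.indicator ψ (x, t)) := hI3.add hI4
    have hI234 : Integrable (fun x : ℝ => (u1 - u0) * S2.indicator ψ (x, t) +
        ((u0e - u0) * S3.indicator ψ (x, t) + (u1e - u1) * S4.indicator ψ (x, t))) :=
      hI2.add hI34
    rw [integral_congr_ae hae, integral_add hI1 hI234,
      integral_add hI2 hI34, integral_add hI3 hI4,
      integral_const_mul, integral_const_mul, integral_const_mul, integral_const_mul]
  rw [setIntegral_congr_fun measurableSet_Ioi hdecomp]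
  -- integrability of the four t-functions
  have hprod : ∀ {F : ℝ × ℝ → ℝ}, Integrable F →
      Integrable (fun t : ℝ => ∫ x : ℝ, F (x, t)) := by
    intro F hF
    have hF' : Integrable F ((volume : Measure ℝ).prod volume) := by
      rwa [← Measure.volume_eq_prod]
    exact hF'.integral_prod_right
  have hJ1 : Integrable (fun t : ℝ => u0 * ∫ x : ℝ, ψ (x, t)) :=
    (hprod (tf_int hφ)).const_mul u0
  have hJ2 : Integrable (fun t : ℝ => (u1 - u0) * ∫ x : ℝ, S2.indicator ψ (x, t)) :=
    (hprod ((tf_int hφ).indicator hS2m)).const_mul _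
  have hJ3 : Integrable (fun t : ℝ => (u0e - u0) * ∫ x : ℝ, S3.indicator ψ (x, t)) :=
    (hprod ((tf_int hφ).indicator hS3m)).const_mul _
  have hJ4 : Integrable (fun t : ℝ => (u1e - u1) * ∫ x : ℝ, S4.indicator ψ (x, t)) :=
    (hprod ((tf_int hφ).indicator hS4m)).const_mul _
  have hJ34 : Integrable (fun t : ℝ => (u0e - u0) * (∫ x : ℝ, S3.indicator ψ (x, t)) +
      (u1e - u1) * ∫ x : ℝ, S4.indicator ψ (x, t)) := hJ3.add hJ4
  have hJ234 : Integrable (fun t : ℝ => (u1 - u0) * (∫ x : ℝ, S2.indicator ψ (x, t)) +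
      ((u0e - u0) * (∫ x : ℝ, S3.indicator ψ (x, t)) +
        (u1e - u1) * ∫ x : ℝ, S4.indicator ψ (x, t))) := hJ2.add hJ34
  rw [integral_add hJ1.integrableOn hJ234.integrableOn,
    integral_add hJ2.integrableOn hJ34.integrableOn,
    integral_add hJ3.integrableOn hJ4.integrableOn,
    integral_const_mul, integral_const_mul, integral_const_mul, integral_const_mul]
  have T1 : (∫ t in Ioi (0:ℝ), ∫ x : ℝ, ψ (x, t)) = 0 := term_whole hφ
  have T2 : (∫ t in Ioi (0:ℝ), ∫ x : ℝ, S2.indicator ψ (x, t)) = 0 := term_half hφ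
  have T3 : (∫ t in Ioi (0:ℝ), ∫ x : ℝ, S3.indicator ψ (x, t)) =
      -(ε * ∫ t in Ioi (0:ℝ), φ (-(ε * t), t)) := term_left hφ hε
  have T4 : (∫ t in Ioi (0:ℝ), ∫ x : ℝ, S4.indicator ψ (x, t)) =
      -(ε * ∫ t in Ioi (0:ℝ), φ (ε * t, t)) := term_right hφ hε
  rw [T1, T2, T3, T4]
  ring
end

section
/- Let ε > 0, let u_0, u_1, u_{0,ε}, u_{1,ε} be real numbers, let f_l, f_r : ℝ → ℝ be continuous, let f be the two-flux function and u_ε the associated shadow wave net. Then for every φ ∈ C_c^∞(ℝ × (0,∞)) one has the exact Rankine–Hugoniot identity for the flux term: −∫_0^∞ ∫_ℝ f(x, u_ε(x,t)) ∂_x φ(x,t) dx dt = ∫_0^∞ [ (f_l(u_{0,ε}) − f_l(u_0)) φ(−εt, t) + (f_r(u_{1,ε}) − f_l(u_{0,ε})) φ(0, t) + (f_r(u_1) − f_r(u_{1,ε})) φ(εt, t) ] dt. -/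
open MeasureTheory Filter Set Topology

lemma inner_integral_eq (ε u0 u1 u0e u1e : ℝ) (hε : 0 < ε)
    (fl fr : ℝ → ℝ)
    (φ : ℝ × ℝ → ℝ) (hφ : IsTestFun φ) (t : ℝ) (ht : 0 < t) :
    (∫ x : ℝ, twoFlux fl fr x (sdw u0 u1 u0e u1e ε x t) * fderiv ℝ φ (x, t) (1, 0)) =
      fl u0 * φ (-(ε * t), t) + fl u0e * (φ (0, t) - φ (-(ε * t), t)) +
      fr u1e * (φ (ε * t, t) - φ (0, t)) + fr u1 * (-φ (ε * t, t)) := by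
  set a : ℝ := -(ε * t) with ha
  set b : ℝ := ε * t with hb
  have hb0 : 0 < b := mul_pos hε ht
  have ha0 : a < 0 := by simp [ha]; positivity
  set g : ℝ → ℝ := fun x => φ (x, t) with hg
  have hgc : ContDiff ℝ 1 g := by
    exact (hφ.1.of_le (by simp)).comp (contDiff_id.prodMk contDiff_const)
  have hgs : HasCompactSupport g := by
    apply HasCompactSupport.intro (hφ.2.1.image continuous_fst)
    intro x hx
    by_contra h
    exact hx ⟨(x, t), subset_tsupport φ h, rfl⟩
  have hd : ∀ x : ℝ, HasDerivAt g (fderiv ℝ φ (x, t) (1, 0)) x := by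
    intro x
    exact ((hφ.1.differentiable (by simp) (x, t)).hasFDerivAt).comp_hasDerivAt x
      ((hasDerivAt_id x).prodMk (hasDerivAt_const x t))
  have hdg : ∀ x : ℝ, deriv g x = fderiv ℝ φ (x, t) (1, 0) := fun x => (hd x).deriv
  have hcont : Continuous (deriv g) := hgc.continuous_deriv le_rfl
  have hint : Integrable (deriv g) := hcont.integrable_of_hasCompactSupport hgs.deriv
  -- rewrite integrand
  have hfun : (fun x : ℝ => twoFlux fl fr x (sdw u0 u1 u0e u1e ε x t) *
      fderiv ℝ φ (x, t) (1, 0)) =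
      fun x : ℝ => twoFlux fl fr x (sdw u0 u1 u0e u1e ε x t) * deriv g x := by
    funext x; rw [hdg]
  rw [hfun]
  set H : ℝ → ℝ := fun x => twoFlux fl fr x (sdw u0 u1 u0e u1e ε x t) * deriv g x with hH
  -- values on pieces
  have h1 : ∀ x ∈ Iio a, H x = fl u0 * deriv g x := by
    intro x hx
    have hxa : x < a := hx
    have hx0 : x < 0 := lt_trans hxa ha0
    simp only [hH, twoFlux, sdw, ← ha]
    rw [if_pos hxa, if_pos hx0]
  have h2 : ∀ x ∈ Ico a 0, H x = fl u0e * deriv g x := by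
    intro x hx
    simp only [hH, twoFlux, sdw, ← ha]
    rw [if_neg (not_lt.2 hx.1), if_pos hx.2, if_pos hx.2]
  have h3 : ∀ x ∈ Ico 0 b, H x = fr u1e * deriv g x := by
    intro x hx
    have hxa : ¬ x < a := not_lt.2 (le_trans ha0.le hx.1)
    have hx0 : ¬ x < 0 := not_lt.2 hx.1
    simp only [hH, twoFlux, sdw, ← ha, ← hb]
    rw [if_neg hxa, if_neg hx0, if_pos hx.2, if_neg hx0]
  have h4 : ∀ x ∈ Ici b, H x = fr u1 * deriv g x := by
    intro x hx
    have hxb : ¬ x < b := not_lt.2 hx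
    have hxa : ¬ x < a := not_lt.2 (le_trans ha0.le (le_trans hb0.le hx))
    have hx0 : ¬ x < 0 := not_lt.2 (le_trans hb0.le hx)
    simp only [hH, twoFlux, sdw, ← ha, ← hb]
    rw [if_neg hxa, if_neg hx0, if_neg hxb, if_neg hx0]
  have hIon : ∀ (c : ℝ) (s : Set ℝ) (hs : MeasurableSet s) (h : ∀ x ∈ s, H x = c * deriv g x),
      IntegrableOn H s := by
    intro c s hs h
    exact ((hint.const_mul c).integrableOn).congr_fun (fun x hx => (h x hx).symm) hs
  have hIo1 := hIon _ _ measurableSet_Iio h1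
  have hIo2 := hIon _ _ measurableSet_Ico h2
  have hIo3 := hIon _ _ measurableSet_Ico h3
  have hIo4 := hIon _ _ measurableSet_Ici h4
  -- split the integral
  have hsplit : (∫ x : ℝ, H x) =
      (∫ x in Iio a, H x) + (∫ x in Ico a 0, H x) + (∫ x in Ico 0 b, H x) +
        (∫ x in Ici b, H x) := by
    have e3 : Ico (0:ℝ) b ∪ Ici b = Ici 0 := Ico_union_Ici_eq_Ici hb0.le
    have e2 : Ico a 0 ∪ Ici (0:ℝ) = Ici a := Ico_union_Ici_eq_Ici ha0.le
    have e1 : Iio a ∪ Ici a = (univ : Set ℝ) := Iio_union_Ici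
    have i3 : IntegrableOn H (Ici (0:ℝ)) := by
      rw [← e3]; exact hIo3.union hIo4
    have i2 : IntegrableOn H (Ici a) := by
      rw [← e2]; exact hIo2.union i3
    have s3 : (∫ x in Ici (0:ℝ), H x) = (∫ x in Ico 0 b, H x) + ∫ x in Ici b, H x := by
      rw [← e3, setIntegral_union ((Iio_disjoint_Ici le_rfl).mono_left Ico_subset_Iio_self) measurableSet_Ici hIo3 hIo4]
    have s2 : (∫ x in Ici a, H x) = (∫ x in Ico a 0, H x) + ∫ x in Ici (0:ℝ), H x := by
      rw [← e2, setIntegral_union ((Iio_disjoint_Ici le_rfl).mono_left Ico_subset_Iio_self) measurableSet_Ici hIo2 i3]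
    have s1 : (∫ x : ℝ, H x) = (∫ x in Iio a, H x) + ∫ x in Ici a, H x := by
      rw [← setIntegral_univ, ← e1,
        setIntegral_union (Iio_disjoint_Ici le_rfl) measurableSet_Ici hIo1 i2]
    rw [s1, s2, s3]; ring
  rw [hsplit]
  -- evaluate each piece
  have p1 : (∫ x in Iio a, H x) = fl u0 * g a := by
    rw [setIntegral_congr_fun measurableSet_Iio h1, integral_const_mul _ _,
      ← integral_Iic_eq_integral_Iio, hgs.integral_Iic_deriv_eq hgc a]
  have pIco : ∀ (c u v : ℝ), u ≤ v → (∀ x ∈ Ico u v, H x = c * deriv g x) →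
      (∫ x in Ico u v, H x) = c * (g v - g u) := by
    intro c u v huv h
    rw [setIntegral_congr_fun measurableSet_Ico h, integral_const_mul _ _,
      setIntegral_congr_set Ico_ae_eq_Ioc, ← intervalIntegral.integral_of_le huv,
      intervalIntegral.integral_deriv_eq_sub (fun x _ => (hgc.differentiable one_ne_zero) x)
        (hcont.intervalIntegrable u v)]
  have p2 := pIco _ _ _ ha0.le h2
  have p3 := pIco _ _ _ hb0.le h3
  have p4 : (∫ x in Ici b, H x) = fr u1 * (-g b) := by
    rw [setIntegral_congr_fun measurableSet_Ici h4, integral_const_mul _ _,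
      integral_Ici_eq_integral_Ioi, hgs.integral_Ioi_deriv_eq hgc b]
  rw [p1, p2, p3, p4]

/-- exact Rankine–Hugoniot identity for the flux term of a shadow wave
net, for fixed `ε > 0`. -/
theorem rankine_hugoniot_flux_identity
    (ε u0 u1 u0e u1e : ℝ) (hε : 0 < ε)
    (fl fr : ℝ → ℝ) (hfl : Continuous fl) (hfr : Continuous fr)
    (φ : ℝ × ℝ → ℝ) (hφ : IsTestFun φ) :
    -(∫ t in Ioi (0:ℝ), ∫ x : ℝ,
        twoFlux fl fr x (sdw u0 u1 u0e u1e ε x t) * fderiv ℝ φ (x, t) (1, 0)) =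
      ∫ t in Ioi (0:ℝ),
        ((fl u0e - fl u0) * φ (-(ε * t), t) +
         (fr u1e - fl u0e) * φ (0, t) +
         (fr u1 - fr u1e) * φ (ε * t, t)) := by
  rw [← integral_neg]
  refine setIntegral_congr_fun measurableSet_Ioi (fun t ht => ?_)
  rw [inner_integral_eq ε u0 u1 u0e u1e hε fl fr φ hφ t ht]
  ring
end

section
/- (Bridge lemma.) Let u_0, u_1 ∈ ℝ, let f_l, f_r : ℝ → ℝ be continuous, set κ = f_l(u_0) − f_r(u_1), and for each ε > 0 let u_{0,ε}, u_{1,ε} ∈ ℝ. Assume that as ε → 0+: (i) ε(u_{0,ε} − u_0) → a and ε(u_{1,ε} − u_1) → b with a + b = κ; (ii) ε (f_l(u_{0,ε}) + f_r(u_{1,ε})) → 0; (iii) ε² f_l(u_{0,ε}) → 0 and ε² f_r(u_{1,ε}) → 0. Then the shadow wave net (u_ε) is a weak asymptotic solution of ∂_t u + ∂_x f(x,u) = 0. -/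
open MeasureTheory Filter Set Topology

section BridgeLemmaAux

section
lemma abs_big {R u : ℝ} (hu : u ∉ Set.Icc (-R) R) : R < |u| := by
  simp only [Set.mem_Icc, not_and_or, not_le] at hu
  rcases hu with h | h
  · exact lt_abs.mpr (Or.inr (by linarith))
  · exact lt_abs.mpr (Or.inl h)

variable {φ : ℝ × ℝ → ℝ} {R : ℝ}

lemma hasDerivAt_sliceX (hc : ContDiff ℝ (⊤ : ℕ∞) φ) (x t : ℝ) :
    HasDerivAt (fun y => φ (y, t)) (fderiv ℝ φ (x, t) (1, 0)) x := by
  have h1 : HasDerivAt (fun y : ℝ => (y, t)) ((1 : ℝ), (0 : ℝ)) x :=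
    (hasDerivAt_id x).prodMk (hasDerivAt_const x t)
  exact ((hc.differentiable (by simp) (x, t)).hasFDerivAt).comp_hasDerivAt x h1

lemma hasDerivAt_sliceT (hc : ContDiff ℝ (⊤ : ℕ∞) φ) (x t : ℝ) :
    HasDerivAt (fun s => φ (x, s)) (fderiv ℝ φ (x, t) (0, 1)) t := by
  have h1 : HasDerivAt (fun s : ℝ => (x, s)) ((0 : ℝ), (1 : ℝ)) t :=
    (hasDerivAt_const t x).prodMk (hasDerivAt_id t)
  exact ((hc.differentiable (by simp) (x, t)).hasFDerivAt).comp_hasDerivAt t h1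

lemma contDiff_sliceX (hc : ContDiff ℝ (⊤ : ℕ∞) φ) (t : ℝ) : ContDiff ℝ 1 (fun y => φ (y, t)) :=
  (hc.of_le (by simp)).comp (contDiff_id.prodMk contDiff_const)

lemma contDiff_sliceT (hc : ContDiff ℝ (⊤ : ℕ∞) φ) (x : ℝ) : ContDiff ℝ 1 (fun s => φ (x, s)) :=
  (hc.of_le (by simp)).comp (contDiff_const.prodMk contDiff_id)

lemma cont_DX (hc : ContDiff ℝ (⊤ : ℕ∞) φ) :
    Continuous (fun z : ℝ × ℝ => fderiv ℝ φ z (1, 0)) :=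
  (hc.continuous_fderiv (by simp)).clm_apply continuous_const

lemma cont_DT (hc : ContDiff ℝ (⊤ : ℕ∞) φ) :
    Continuous (fun z : ℝ × ℝ => fderiv ℝ φ z (0, 1)) :=
  (hc.continuous_fderiv (by simp)).clm_apply continuous_const

lemma sliceX_compactSupport
    (hv : ∀ x t : ℝ, R < |x| ∨ R < |t| → φ (x, t) = 0 ∧ fderiv ℝ φ (x, t) = 0)
    (t : ℝ) : HasCompactSupport (fun y => φ (y, t)) :=
  HasCompactSupport.intro (isCompact_Icc (a := -R) (b := R))
    (fun x hx => (hv x t (Or.inl (abs_big hx))).1)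

lemma sliceT_compactSupport
    (hv : ∀ x t : ℝ, R < |x| ∨ R < |t| → φ (x, t) = 0 ∧ fderiv ℝ φ (x, t) = 0)
    (x : ℝ) : HasCompactSupport (fun s => φ (x, s)) :=
  HasCompactSupport.intro (isCompact_Icc (a := -R) (b := R))
    (fun t ht => (hv x t (Or.inr (abs_big ht))).1)

variable (hc : ContDiff ℝ (⊤ : ℕ∞) φ)
  (hv : ∀ x t : ℝ, R < |x| ∨ R < |t| → φ (x, t) = 0 ∧ fderiv ℝ φ (x, t) = 0)

include hc hv in
lemma ftcX_Iio (c t : ℝ) : ∫ x in Set.Iio c, fderiv ℝ φ (x, t) (1, 0) = φ (c, t) := by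
  rw [setIntegral_congr_set Iio_ae_eq_Iic,
    setIntegral_congr_fun measurableSet_Iic
      (fun x _ => ((hasDerivAt_sliceX hc x t).deriv).symm)]
  exact (sliceX_compactSupport hv t).integral_Iic_deriv_eq (contDiff_sliceX hc t) c

include hc hv in
lemma ftcX_Ici (c t : ℝ) : ∫ x in Set.Ici c, fderiv ℝ φ (x, t) (1, 0) = -φ (c, t) := by
  rw [setIntegral_congr_set Ioi_ae_eq_Ici.symm,
    setIntegral_congr_fun measurableSet_Ioi
      (fun x _ => ((hasDerivAt_sliceX hc x t).deriv).symm)]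
  exact (sliceX_compactSupport hv t).integral_Ioi_deriv_eq (contDiff_sliceX hc t) c

include hc hv in
lemma ftcT_Ioi (x c : ℝ) : ∫ s in Set.Ioi c, fderiv ℝ φ (x, s) (0, 1) = -φ (x, c) := by
  rw [setIntegral_congr_fun measurableSet_Ioi
      (fun s _ => ((hasDerivAt_sliceT hc x s).deriv).symm)]
  exact (sliceT_compactSupport hv x).integral_Ioi_deriv_eq (contDiff_sliceT hc x) c

include hc hv in
lemma ftcT_Ici (x c : ℝ) : ∫ s in Set.Ici c, fderiv ℝ φ (x, s) (0, 1) = -φ (x, c) := by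
  rw [setIntegral_congr_set Ioi_ae_eq_Ici.symm]; exact ftcT_Ioi hc hv x c

include hc in
lemma ftcX_Ico {a b : ℝ} (h : a ≤ b) (t : ℝ) :
    ∫ x in Set.Ico a b, fderiv ℝ φ (x, t) (1, 0) = φ (b, t) - φ (a, t) := by
  rw [setIntegral_congr_set Ico_ae_eq_Ioc, ← intervalIntegral.integral_of_le h]
  exact intervalIntegral.integral_eq_sub_of_hasDerivAt
    (fun x _ => hasDerivAt_sliceX hc x t)
    (Continuous.intervalIntegrable
      ((cont_DX hc).comp (continuous_id.prodMk continuous_const)) a b)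

include hc in
lemma ftcT_Ioc {a b : ℝ} (h : a ≤ b) (x : ℝ) :
    ∫ s in Set.Ioc a b, fderiv ℝ φ (x, s) (0, 1) = φ (x, b) - φ (x, a) := by
  rw [← intervalIntegral.integral_of_le h]
  exact intervalIntegral.integral_eq_sub_of_hasDerivAt
    (fun s _ => hasDerivAt_sliceT hc x s)
    (Continuous.intervalIntegrable
      ((cont_DT hc).comp (continuous_const.prodMk continuous_id)) a b)

include hc in
lemma ftcT_Ioo {a b : ℝ} (h : a ≤ b) (x : ℝ) :
    ∫ s in Set.Ioo a b, fderiv ℝ φ (x, s) (0, 1) = φ (x, b) - φ (x, a) := by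
  rw [setIntegral_congr_set Ioo_ae_eq_Ioc]; exact ftcT_Ioc hc h x



lemma support_bound (hs : HasCompactSupport φ) :
    ∃ R : ℝ, 0 < R ∧ (∀ x t : ℝ, R < |x| ∨ R < |t| → φ (x, t) = 0 ∧ fderiv ℝ φ (x, t) = 0) := by
  obtain ⟨R, hR⟩ := hs.isBounded.subset_closedBall 0
  refine ⟨max R 1, lt_of_lt_of_le one_pos (le_max_right _ _), fun x t h => ?_⟩
  have hnot : (x, t) ∉ tsupport φ := by
    intro hmem
    have := hR hmem
    rw [Metric.mem_closedBall, dist_zero_right, Prod.norm_def] at this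
    simp only [Real.norm_eq_abs] at this
    rcases h with h | h
    · exact absurd (le_trans (le_max_left _ _) this) (not_le.2 (lt_of_le_of_lt (le_max_left R 1) h))
    · exact absurd (le_trans (le_max_right _ _) this) (not_le.2 (lt_of_le_of_lt (le_max_left R 1) h))
  constructor
  · exact image_eq_zero_of_notMem_tsupport hnot
  · have : (x, t) ∉ tsupport (fderiv ℝ φ) := fun hmem => hnot (tsupport_fderiv_subset ℝ hmem)
    exact image_eq_zero_of_notMem_tsupport this



end

/-- 1-D integrability of bounded functions vanishing outside a compact. -/
lemma integrable1d {g : ℝ → ℝ} (hm : AEStronglyMeasurable g volume) (C R : ℝ)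
    (hb : ∀ x, |g x| ≤ C) (hz : ∀ x, R < |x| → g x = 0) : Integrable g := by
  refine Integrable.mono' (g := (Set.Icc (-R) R).indicator (fun _ => C)) ?_ hm ?_
  · exact (integrable_indicator_iff measurableSet_Icc).2
      (integrableOn_const measure_Icc_lt_top.ne)
  · refine Filter.Eventually.of_forall (fun x => ?_)
    by_cases hx : x ∈ Set.Icc (-R) R
    · simpa [Set.indicator_of_mem hx] using hb x
    · simp [Set.indicator_of_notMem hx, hz x (abs_big hx)]

/-- product-space integrability -/
lemma integrable_prod {h : ℝ × ℝ → ℝ}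
    (hm : AEStronglyMeasurable h ((volume.restrict (Set.Ioi 0)).prod volume)) (C R : ℝ)
    (hb : ∀ z, |h z| ≤ C) (hz : ∀ z : ℝ × ℝ, R < |z.1| ∨ R < |z.2| → h z = 0) :
    Integrable h ((volume.restrict (Set.Ioi 0)).prod volume) := by
  set B : Set (ℝ × ℝ) := (Set.Icc (-R) R) ×ˢ (Set.Icc (-R) R) with hB
  refine Integrable.mono' (g := B.indicator (fun _ => C)) ?_ hm ?_
  · refine (integrable_indicator_iff (measurableSet_Icc.prod measurableSet_Icc)).2
      (integrableOn_const (LT.lt.ne ?_))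
    rw [Measure.prod_prod]
    exact ENNReal.mul_lt_top
      (lt_of_le_of_lt (le_trans (Measure.restrict_apply_le _ _) le_rfl) measure_Icc_lt_top)
      measure_Icc_lt_top
  · refine Filter.Eventually.of_forall (fun z => ?_)
    by_cases hzB : z ∈ B
    · simpa [Set.indicator_of_mem hzB] using hb z
    · rw [hB, Set.mem_prod, not_and_or] at hzB
      have : h z = 0 := by
        rcases hzB with h1 | h1
        · exact hz z (Or.inl (abs_big h1))
        · exact hz z (Or.inr (abs_big h1))
      have hC : (0:ℝ) ≤ C := le_trans (abs_nonneg _) (hb z)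
      simp only [this, norm_zero]
      exact Set.indicator_nonneg (fun _ _ => hC) z

lemma measurable_sdw2 (u0 u1 p q ε : ℝ) :
    Measurable (fun z : ℝ × ℝ => sdw u0 u1 p q ε z.2 z.1) := by
  unfold sdw
  refine Measurable.ite ?_ measurable_const (Measurable.ite ?_ measurable_const
    (Measurable.ite ?_ measurable_const measurable_const))
  · exact measurableSet_lt measurable_snd ((measurable_const.mul measurable_fst).neg)
  · exact measurableSet_lt measurable_snd measurable_const
  · exact measurableSet_lt measurable_snd (measurable_const.mul measurable_fst)

lemma abs_sdw_le (u0 u1 p q ε x t : ℝ) :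
    |sdw u0 u1 p q ε x t| ≤ max (max |u0| |u1|) (max |p| |q|) := by
  unfold sdw; split_ifs
  · exact le_max_of_le_left (le_max_left _ _)
  · exact le_max_of_le_right (le_max_left _ _)
  · exact le_max_of_le_right (le_max_right _ _)
  · exact le_max_of_le_left (le_max_right _ _)

lemma abs_twoFlux_sdw_le (fl fr : ℝ → ℝ) (u0 u1 p q ε x t : ℝ) :
    |twoFlux fl fr x (sdw u0 u1 p q ε x t)| ≤
      max (max (max |fl u0| |fl u1|) (max |fl p| |fl q|))
          (max (max |fr u0| |fr u1|) (max |fr p| |fr q|)) := by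
  unfold twoFlux sdw; split_ifs
  all_goals first
  | exact le_max_of_le_left (le_max_of_le_left (le_max_left _ _))
  | exact le_max_of_le_left (le_max_of_le_left (le_max_right _ _))
  | exact le_max_of_le_left (le_max_of_le_right (le_max_left _ _))
  | exact le_max_of_le_left (le_max_of_le_right (le_max_right _ _))
  | exact le_max_of_le_right (le_max_of_le_left (le_max_left _ _))
  | exact le_max_of_le_right (le_max_of_le_left (le_max_right _ _))
  | exact le_max_of_le_right (le_max_of_le_right (le_max_left _ _))
  | exact le_max_of_le_right (le_max_of_le_right (le_max_right _ _))


lemma second_diff {f : ℝ × ℝ → ℝ} (hd : Differentiable ℝ f) {K : NNReal}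
    (hK : LipschitzWith K (fderiv ℝ f)) (p v : ℝ × ℝ) :
    |f (p + v) + f (p - v) - 2 * f p| ≤ 2 * K * ‖v‖ ^ 2 := by
  set θ' : ℝ → ℝ := fun s => fderiv ℝ f (p + s • v) v - fderiv ℝ f (p - s • v) v with hθ'
  have hder : ∀ s : ℝ, HasDerivAt (fun s : ℝ => f (p + s • v) + f (p - s • v)) (θ' s) s := by
    intro s
    have h1 : HasDerivAt (fun s : ℝ => p + s • v) v s := by
      simpa using ((hasDerivAt_id s).smul_const v).const_add p
    have h2 : HasDerivAt (fun s : ℝ => p - s • v) (-v) s := by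
      have : HasDerivAt (fun s : ℝ => p + s • (-v)) (-v) s := by
        simpa using ((hasDerivAt_id s).smul_const (-v)).const_add p
      simpa [smul_neg, sub_eq_add_neg] using this
    have c1 := ((hd (p + s • v)).hasFDerivAt).comp_hasDerivAt s h1
    have c2 := ((hd (p - s • v)).hasFDerivAt).comp_hasDerivAt s h2
    have := c1.add c2
    exact this.congr_deriv (by simp [hθ', map_neg, sub_eq_add_neg])
  have hbound : ∀ s ∈ Set.Ico (0:ℝ) 1, ‖θ' s‖ ≤ 2 * K * ‖v‖ ^ 2 := by
    intro s hs
    have h1 : θ' s = (fderiv ℝ f (p + s • v) - fderiv ℝ f (p - s • v)) v := by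
      simp [hθ', ContinuousLinearMap.sub_apply]
    rw [h1]
    calc ‖(fderiv ℝ f (p + s • v) - fderiv ℝ f (p - s • v)) v‖
        ≤ ‖fderiv ℝ f (p + s • v) - fderiv ℝ f (p - s • v)‖ * ‖v‖ :=
          ContinuousLinearMap.le_opNorm _ _
      _ ≤ (K * ‖(p + s • v) - (p - s • v)‖) * ‖v‖ := by
          apply mul_le_mul_of_nonneg_right _ (norm_nonneg v)
          rw [← dist_eq_norm, ← dist_eq_norm]
          exact hK.dist_le_mul _ _
      _ ≤ 2 * K * ‖v‖ ^ 2 := by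
          have : (p + s • v) - (p - s • v) = (2 * s) • v := by
            rw [two_mul, add_smul]; abel
          rw [this, norm_smul]
          simp only [Real.norm_eq_abs]
          have hs2 : |(2 : ℝ) * s| ≤ 2 := by
            rw [abs_mul, abs_two]
            nlinarith [hs.1, hs.2, abs_of_nonneg hs.1]
          calc (K : ℝ) * (|2 * s| * ‖v‖) * ‖v‖
              ≤ (K : ℝ) * (2 * ‖v‖) * ‖v‖ := by
                have h3 := mul_le_mul_of_nonneg_right hs2 (norm_nonneg v)
                have h4 := mul_le_mul_of_nonneg_left h3 (NNReal.coe_nonneg K)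
                exact mul_le_mul_of_nonneg_right h4 (norm_nonneg v)
            _ = 2 * K * ‖v‖ ^ 2 := by ring
  have key := norm_image_sub_le_of_norm_deriv_le_segment'
    (f := fun s : ℝ => f (p + s • v) + f (p - s • v)) (f' := θ') (a := 0) (b := 1)
    (C := 2 * K * ‖v‖ ^ 2)
    (fun s hs => (hder s).hasDerivWithinAt) hbound 1 (Set.right_mem_Icc.2 zero_le_one)
  simpa [two_mul] using key


lemma abs_int_le {f : ℝ → ℝ} (hf : IntegrableOn f (Set.Ioi 0)) {c R : ℝ} (hR : 0 < R)
    (hb : ∀ t ∈ Set.Ioc (0:ℝ) R, |f t| ≤ c) (hz2 : ∀ t : ℝ, R < t → f t = 0) :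
    |∫ t in Set.Ioi (0:ℝ), f t| ≤ c * R := by
  rw [← Ioc_union_Ioi_eq_Ioi hR.le,
    setIntegral_union (Ioc_disjoint_Ioi le_rfl) measurableSet_Ioi
      (hf.mono_set (Ioc_subset_Ioi_self))
      (hf.mono_set (fun t (ht : R < t) => lt_trans hR ht))]
  have h2 : ∫ t in Set.Ioi R, f t = 0 := by
    rw [setIntegral_congr_fun measurableSet_Ioi (g := fun _ => (0:ℝ)) (fun t ht => hz2 t ht)]
    simp
  rw [h2, add_zero]
  have h3 := norm_setIntegral_le_of_norm_le_const (μ := volume) (s := Set.Ioc (0:ℝ) R)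
    (C := c) (f := f) (by rw [Real.volume_Ioc]; exact ENNReal.ofReal_lt_top)
    (fun t ht => by rw [Real.norm_eq_abs]; exact hb t ht)
  rw [Real.norm_eq_abs] at h3
  refine le_trans h3 ?_
  rw [Real.volume_real_Ioc_of_le hR.le, sub_zero]


section
variable {φ : ℝ × ℝ → ℝ} {R MD : ℝ} (u0 u1 p q : ℝ)
  (hc : ContDiff ℝ (⊤ : ℕ∞) φ)
  (h0 : ∀ pt : ℝ × ℝ, pt.2 ≤ 0 → φ pt = 0)
  (hv : ∀ x t : ℝ, R < |x| ∨ R < |t| → φ (x, t) = 0 ∧ fderiv ℝ φ (x, t) = 0)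
  (hMD : ∀ z : ℝ × ℝ, |fderiv ℝ φ z (0, 1)| ≤ MD)

include hc hv hMD in
lemma integrable_T_slice (ε x : ℝ) :
    Integrable (fun t => sdw u0 u1 p q ε x t * fderiv ℝ φ (x, t) (0, 1)) volume := by
  apply integrable1d (C := (max (max |u0| |u1|) (max |p| |q|)) * MD) (R := R)
  · apply Measurable.aestronglyMeasurable
    exact ((measurable_sdw2 u0 u1 p q ε).comp
        (measurable_id.prodMk measurable_const)).mul
      (((cont_DT hc).comp (continuous_const.prodMk continuous_id)).measurable)
  · intro t
    rw [abs_mul]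
    have h1 := abs_sdw_le u0 u1 p q ε x t
    have h2 := hMD (x, t)
    exact mul_le_mul h1 h2 (abs_nonneg _) (le_trans (abs_nonneg _) h1)
  · intro t ht
    have := (hv x t (Or.inr ht)).2
    simp [this]

include hc h0 hv hMD in
lemma T_inner_neg {ε x : ℝ} (hε : 0 < ε) (hx : x < 0) :
    ∫ t in Set.Ioi (0:ℝ), sdw u0 u1 p q ε x t * fderiv ℝ φ (x, t) (0, 1)
      = (u0 - p) * φ (x, -x / ε) := by
  set s := -x / ε with hsdef
  have hs : 0 < s := div_pos (neg_pos.2 hx) hε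
  have hεs : ε * s = -x := by by_contra hcon; apply hcon; rw [hsdef]; field_simp
  have hFi := integrable_T_slice u0 u1 p q hc hv hMD ε x
  rw [← Ioo_union_Ici_eq_Ioi hs,
    setIntegral_union (disjoint_left.mpr fun t ht hts => (ht.2.not_ge hts))
      measurableSet_Ici hFi.integrableOn hFi.integrableOn]
  have e1 : ∫ t in Set.Ioo (0:ℝ) s, sdw u0 u1 p q ε x t * fderiv ℝ φ (x, t) (0, 1)
      = u0 * (φ (x, s) - φ (x, 0)) := by
    rw [setIntegral_congr_fun measurableSet_Ioo (g := fun t => u0 * fderiv ℝ φ (x, t) (0, 1))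
      (fun t ht => by
        have h1 : ε * t < ε * s := mul_lt_mul_of_pos_left ht.2 hε
        rw [hεs] at h1
        have : x < -(ε * t) := by linarith
        simp only [sdw, if_pos this]),
      integral_const_mul, ftcT_Ioo hc hs.le x]
  have e2 : ∫ t in Set.Ici s, sdw u0 u1 p q ε x t * fderiv ℝ φ (x, t) (0, 1)
      = p * (-φ (x, s)) := by
    rw [setIntegral_congr_fun measurableSet_Ici (g := fun t => p * fderiv ℝ φ (x, t) (0, 1))
      (fun t ht => by
        have h1 : ε * s ≤ ε * t := mul_le_mul_of_nonneg_left ht hε.le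
        rw [hεs] at h1
        have h2 : ¬ x < -(ε * t) := by push_neg; linarith
        simp only [sdw, if_neg h2, if_pos hx]),
      integral_const_mul, ftcT_Ici hc hv x s]
  rw [e1, e2, h0 (x, 0) le_rfl]
  ring

include hc h0 hv hMD in
lemma T_inner_pos {ε x : ℝ} (hε : 0 < ε) (hx : 0 < x) :
    ∫ t in Set.Ioi (0:ℝ), sdw u0 u1 p q ε x t * fderiv ℝ φ (x, t) (0, 1)
      = (u1 - q) * φ (x, x / ε) := by
  set s := x / ε with hsdef
  have hs : 0 < s := div_pos hx hε
  have hεs : ε * s = x := by rw [hsdef]; field_simp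
  have hFi := integrable_T_slice u0 u1 p q hc hv hMD ε x
  rw [← Ioc_union_Ioi_eq_Ioi hs.le,
    setIntegral_union (Ioc_disjoint_Ioi le_rfl)
      measurableSet_Ioi hFi.integrableOn hFi.integrableOn]
  have e1 : ∫ t in Set.Ioc (0:ℝ) s, sdw u0 u1 p q ε x t * fderiv ℝ φ (x, t) (0, 1)
      = u1 * (φ (x, s) - φ (x, 0)) := by
    rw [setIntegral_congr_fun measurableSet_Ioc (g := fun t => u1 * fderiv ℝ φ (x, t) (0, 1))
      (fun t ht => by
        have h1 : ε * t ≤ ε * s := mul_le_mul_of_nonneg_left ht.2 hε.le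
        rw [hεs] at h1
        have hA : ¬ x < -(ε * t) := by push_neg; nlinarith [mul_pos hε ht.1]
        have hB : ¬ x < 0 := by linarith
        have hC : ¬ x < ε * t := by push_neg; linarith
        simp only [sdw, if_neg hA, if_neg hB, if_neg hC]),
      integral_const_mul, ftcT_Ioc hc hs.le x]
  have e2 : ∫ t in Set.Ioi s, sdw u0 u1 p q ε x t * fderiv ℝ φ (x, t) (0, 1)
      = q * (-φ (x, s)) := by
    rw [setIntegral_congr_fun measurableSet_Ioi (g := fun t => q * fderiv ℝ φ (x, t) (0, 1))
      (fun t ht => by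
        have h1 : ε * s < ε * t := mul_lt_mul_of_pos_left ht hε
        rw [hεs] at h1
        have hA : ¬ x < -(ε * t) := by push_neg; nlinarith
        have hB : ¬ x < 0 := by linarith
        simp only [sdw, if_neg hA, if_neg hB, if_pos h1]),
      integral_const_mul, ftcT_Ioi hc hv x s]
  rw [e1, e2, h0 (x, 0) le_rfl]
  ring
end



section
variable {φ : ℝ × ℝ → ℝ} {R MD : ℝ} (u0 u1 p q : ℝ)
  (hc : ContDiff ℝ (⊤ : ℕ∞) φ)
  (hv : ∀ x t : ℝ, R < |x| ∨ R < |t| → φ (x, t) = 0 ∧ fderiv ℝ φ (x, t) = 0)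
  (hMD : ∀ z : ℝ × ℝ, |fderiv ℝ φ z (0, 1)| ≤ MD)

include hc hv hMD in
lemma integrable_T_sliceX (ε t : ℝ) :
    Integrable (fun x => sdw u0 u1 p q ε x t * fderiv ℝ φ (x, t) (0, 1)) volume := by
  apply integrable1d (C := (max (max |u0| |u1|) (max |p| |q|)) * MD) (R := R)
  · apply Measurable.aestronglyMeasurable
    exact ((measurable_sdw2 u0 u1 p q ε).comp
        (measurable_const.prodMk measurable_id)).mul
      (((cont_DT hc).comp (continuous_id.prodMk continuous_const)).measurable)
  · intro x
    rw [abs_mul]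
    have h1 := abs_sdw_le u0 u1 p q ε x t
    have h2 := hMD (x, t)
    exact mul_le_mul h1 h2 (abs_nonneg _) (le_trans (abs_nonneg _) h1)
  · intro x hx
    have := (hv x t (Or.inl hx)).2
    simp [this]
end


section
variable {φ : ℝ × ℝ → ℝ} {R MD : ℝ} (u0 u1 p q : ℝ) (fl fr : ℝ → ℝ)
  (hfl : Continuous fl) (hfr : Continuous fr)
  (hc : ContDiff ℝ (⊤ : ℕ∞) φ)
  (hv : ∀ x t : ℝ, R < |x| ∨ R < |t| → φ (x, t) = 0 ∧ fderiv ℝ φ (x, t) = 0)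
  (hMX : ∀ z : ℝ × ℝ, |fderiv ℝ φ z (1, 0)| ≤ MD)

include hfl hfr hc hv hMX in
lemma integrable_F_slice (ε t : ℝ) :
    Integrable (fun x => twoFlux fl fr x (sdw u0 u1 p q ε x t) * fderiv ℝ φ (x, t) (1, 0))
      volume := by
  have msdw : Measurable (fun x => sdw u0 u1 p q ε x t) :=
    (measurable_sdw2 u0 u1 p q ε).comp (measurable_const.prodMk measurable_id)
  apply integrable1d
    (C := (max (max (max |fl u0| |fl u1|) (max |fl p| |fl q|))
          (max (max |fr u0| |fr u1|) (max |fr p| |fr q|))) * MD) (R := R)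
  · apply Measurable.aestronglyMeasurable
    have : Measurable (fun x => twoFlux fl fr x (sdw u0 u1 p q ε x t)) := by
      unfold twoFlux
      exact Measurable.ite measurableSet_Iio (hfl.measurable.comp msdw)
        (hfr.measurable.comp msdw)
    exact this.mul (((cont_DX hc).comp (continuous_id.prodMk continuous_const)).measurable)
  · intro x
    rw [abs_mul]
    have h1 := abs_twoFlux_sdw_le fl fr u0 u1 p q ε x t
    have h2 := hMX (x, t)
    exact mul_le_mul h1 h2 (abs_nonneg _) (le_trans (abs_nonneg _) h1)
  · intro x hx
    have := (hv x t (Or.inl hx)).2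
    simp [this]

include hfl hfr hc hv hMX in
lemma F_inner {ε t : ℝ} (hε : 0 < ε) (ht : 0 < t) :
    ∫ x : ℝ, twoFlux fl fr x (sdw u0 u1 p q ε x t) * fderiv ℝ φ (x, t) (1, 0)
      = fl u0 * φ (-(ε * t), t) - fr u1 * φ (ε * t, t)
        + fl p * (φ (0, t) - φ (-(ε * t), t)) + fr q * (φ (ε * t, t) - φ (0, t)) := by
  have hc0 : 0 < ε * t := mul_pos hε ht
  have hFi := integrable_F_slice u0 u1 p q fl fr hfl hfr hc hv hMX ε t
  rw [← intervalIntegral.integral_Iio_add_Ici (b := -(ε * t)) hFi.integrableOn hFi.integrableOn]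
  have eIio : ∫ x in Set.Iio (-(ε * t)),
      twoFlux fl fr x (sdw u0 u1 p q ε x t) * fderiv ℝ φ (x, t) (1, 0)
      = fl u0 * φ (-(ε * t), t) := by
    rw [setIntegral_congr_fun measurableSet_Iio
      (g := fun x => fl u0 * fderiv ℝ φ (x, t) (1, 0)) (fun x hx => by
        have h1 : x < -(ε * t) := hx
        have h2 : x < 0 := by linarith
        simp only [sdw, twoFlux, if_pos h1, if_pos h2]),
      integral_const_mul, ftcX_Iio hc hv]
  rw [eIio, ← Ico_union_Ici_eq_Ici (show -(ε * t) ≤ (0:ℝ) by linarith),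
    setIntegral_union (disjoint_left.mpr fun x hx h => hx.2.not_ge h)
      measurableSet_Ici hFi.integrableOn hFi.integrableOn]
  have eIco1 : ∫ x in Set.Ico (-(ε * t)) 0,
      twoFlux fl fr x (sdw u0 u1 p q ε x t) * fderiv ℝ φ (x, t) (1, 0)
      = fl p * (φ (0, t) - φ (-(ε * t), t)) := by
    rw [setIntegral_congr_fun measurableSet_Ico
      (g := fun x => fl p * fderiv ℝ φ (x, t) (1, 0)) (fun x hx => by
        have h1 : ¬ x < -(ε * t) := not_lt.mpr hx.1
        have h2 : x < 0 := hx.2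
        simp only [sdw, twoFlux, if_neg h1, if_pos h2]),
      integral_const_mul, ftcX_Ico hc (by linarith)]
  rw [eIco1, ← Ico_union_Ici_eq_Ici hc0.le,
    setIntegral_union (disjoint_left.mpr fun x hx h => hx.2.not_ge h)
      measurableSet_Ici hFi.integrableOn hFi.integrableOn]
  have eIco2 : ∫ x in Set.Ico 0 (ε * t),
      twoFlux fl fr x (sdw u0 u1 p q ε x t) * fderiv ℝ φ (x, t) (1, 0)
      = fr q * (φ (ε * t, t) - φ (0, t)) := by
    rw [setIntegral_congr_fun measurableSet_Ico
      (g := fun x => fr q * fderiv ℝ φ (x, t) (1, 0)) (fun x hx => by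
        have h1 : ¬ x < -(ε * t) := not_lt.mpr (by linarith [hx.1])
        have h2 : ¬ x < 0 := not_lt.mpr hx.1
        have h3 : x < ε * t := hx.2
        simp only [sdw, twoFlux, if_neg h1, if_neg h2, if_pos h3]),
      integral_const_mul, ftcX_Ico hc hc0.le]
  have eIci : ∫ x in Set.Ici (ε * t),
      twoFlux fl fr x (sdw u0 u1 p q ε x t) * fderiv ℝ φ (x, t) (1, 0)
      = fr u1 * (-φ (ε * t, t)) := by
    rw [setIntegral_congr_fun measurableSet_Ici
      (g := fun x => fr u1 * fderiv ℝ φ (x, t) (1, 0)) (fun x hx => by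
        have hx' : ε * t ≤ x := hx
        have h1 : ¬ x < -(ε * t) := not_lt.mpr (by linarith)
        have h2 : ¬ x < 0 := not_lt.mpr (by linarith)
        have h3 : ¬ x < ε * t := not_lt.mpr hx'
        simp only [sdw, twoFlux, if_neg h1, if_neg h2, if_neg h3]),
      integral_const_mul, ftcX_Ici hc hv]
  rw [eIco2, eIci]
  ring
end


section
variable {φ : ℝ × ℝ → ℝ} {R MD M₀ : ℝ} (u0 u1 p q : ℝ) (fl fr : ℝ → ℝ)
  (hfl : Continuous fl) (hfr : Continuous fr)
  (hc : ContDiff ℝ (⊤ : ℕ∞) φ)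
  (h0 : ∀ pt : ℝ × ℝ, pt.2 ≤ 0 → φ pt = 0)
  (hv : ∀ x t : ℝ, R < |x| ∨ R < |t| → φ (x, t) = 0 ∧ fderiv ℝ φ (x, t) = 0)
  (hM₀ : ∀ z : ℝ × ℝ, |φ z| ≤ M₀)
  (hMD : ∀ z : ℝ × ℝ, |fderiv ℝ φ z (0, 1)| ≤ MD)
  (hMX : ∀ z : ℝ × ℝ, |fderiv ℝ φ z (1, 0)| ≤ MD)

lemma cov_neg {ε : ℝ} (hε : 0 < ε) :
    ∫ x in Set.Iio (0:ℝ), φ (x, -x / ε) = ε * ∫ t in Set.Ioi (0:ℝ), φ (-(ε * t), t) := by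
  have h1 := integral_comp_neg_Ioi (c := (0:ℝ)) (f := fun x => φ (x, -x / ε))
  simp only [neg_zero, neg_neg] at h1
  have h2 := integral_comp_mul_left_Ioi (g := fun y => φ (-y, y / ε)) 0 hε
  simp only [mul_zero, smul_eq_mul] at h2
  have h3 : ∀ x : ℝ, φ (-(ε * x), ε * x / ε) = φ (-(ε * x), x) := by
    intro x; rw [mul_div_cancel_left₀ _ hε.ne']
  simp only [h3] at h2
  rw [setIntegral_congr_set Iio_ae_eq_Iic, ← h1, h2]
  rw [← mul_assoc, mul_inv_cancel₀ hε.ne', one_mul]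

lemma cov_pos {ε : ℝ} (hε : 0 < ε) :
    ∫ x in Set.Ioi (0:ℝ), φ (x, x / ε) = ε * ∫ t in Set.Ioi (0:ℝ), φ (ε * t, t) := by
  have h2 := integral_comp_mul_left_Ioi (g := fun y => φ (y, y / ε)) 0 hε
  simp only [mul_zero, smul_eq_mul] at h2
  have h3 : ∀ x : ℝ, φ (ε * x, ε * x / ε) = φ (ε * x, x) := by
    intro x; rw [mul_div_cancel_left₀ _ hε.ne']
  simp only [h3] at h2
  rw [h2, ← mul_assoc, mul_inv_cancel₀ hε.ne', one_mul]

include hfl hfr hc h0 hv hM₀ hMD hMX in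
lemma key_eq {ε : ℝ} (hε : 0 < ε) :
    ∫ t in Set.Ioi (0:ℝ), ∫ x : ℝ,
        (sdw u0 u1 p q ε x t * fderiv ℝ φ (x, t) (0, 1) +
         twoFlux fl fr x (sdw u0 u1 p q ε x t) * fderiv ℝ φ (x, t) (1, 0))
    = (u0 - p) * (ε * ∫ t in Set.Ioi (0:ℝ), φ (-(ε * t), t))
      + (u1 - q) * (ε * ∫ t in Set.Ioi (0:ℝ), φ (ε * t, t))
      + (fl u0 * (∫ t in Set.Ioi (0:ℝ), φ (-(ε * t), t))
         - fr u1 * (∫ t in Set.Ioi (0:ℝ), φ (ε * t, t))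
         + fl p * ((∫ t in Set.Ioi (0:ℝ), φ (0, t)) - ∫ t in Set.Ioi (0:ℝ), φ (-(ε * t), t))
         + fr q * ((∫ t in Set.Ioi (0:ℝ), φ (ε * t, t)) - ∫ t in Set.Ioi (0:ℝ), φ (0, t))) := by
  set T : ℝ → ℝ → ℝ := fun t x => sdw u0 u1 p q ε x t * fderiv ℝ φ (x, t) (0, 1) with hT
  set F : ℝ → ℝ → ℝ := fun t x =>
    twoFlux fl fr x (sdw u0 u1 p q ε x t) * fderiv ℝ φ (x, t) (1, 0) with hF
  -- product integrability of T
  have hTprod : Integrable (Function.uncurry T) ((volume.restrict (Set.Ioi 0)).prod volume) := by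
    apply integrable_prod (C := (max (max |u0| |u1|) (max |p| |q|)) * MD) (R := R)
    · apply Measurable.aestronglyMeasurable
      exact (measurable_sdw2 u0 u1 p q ε).mul
        (((cont_DT hc).comp (continuous_snd.prodMk continuous_fst)).measurable)
    · intro z
      rw [Function.uncurry]
      simp only [hT, abs_mul]
      exact mul_le_mul (abs_sdw_le u0 u1 p q ε z.2 z.1) (hMD (z.2, z.1)) (abs_nonneg _)
        (le_trans (abs_nonneg _) (abs_sdw_le u0 u1 p q ε z.2 z.1))
    · rintro ⟨t, x⟩ hz
      have : fderiv ℝ φ (x, t) = 0 := (hv x t (Or.symm hz)).2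
      simp only [Function.uncurry, hT, this]
      simp
  -- product integrability of F
  have hFprod : Integrable (Function.uncurry F) ((volume.restrict (Set.Ioi 0)).prod volume) := by
    apply integrable_prod
      (C := (max (max (max |fl u0| |fl u1|) (max |fl p| |fl q|))
          (max (max |fr u0| |fr u1|) (max |fr p| |fr q|))) * MD) (R := R)
    · apply Measurable.aestronglyMeasurable
      have hm1 : Measurable (fun z : ℝ × ℝ => twoFlux fl fr z.2 (sdw u0 u1 p q ε z.2 z.1)) := by
        unfold twoFlux
        exact Measurable.ite (measurableSet_lt measurable_snd measurable_const)
          (hfl.measurable.comp (measurable_sdw2 u0 u1 p q ε))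
          (hfr.measurable.comp (measurable_sdw2 u0 u1 p q ε))
      exact hm1.mul (((cont_DX hc).comp (continuous_snd.prodMk continuous_fst)).measurable)
    · intro z
      rw [Function.uncurry]
      simp only [hF, abs_mul]
      exact mul_le_mul (abs_twoFlux_sdw_le fl fr u0 u1 p q ε z.2 z.1) (hMX (z.2, z.1))
        (abs_nonneg _) (le_trans (abs_nonneg _) (abs_twoFlux_sdw_le fl fr u0 u1 p q ε z.2 z.1))
    · rintro ⟨t, x⟩ hz
      have : fderiv ℝ φ (x, t) = 0 := (hv x t (Or.symm hz)).2
      simp only [Function.uncurry, hF, this]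
      simp
  -- split the inner integral
  have hsplit : ∀ t : ℝ, (∫ x : ℝ, (T t x + F t x)) = (∫ x : ℝ, T t x) + ∫ x : ℝ, F t x :=
    fun t => integral_add (integrable_T_sliceX u0 u1 p q hc hv hMD ε t)
      (integrable_F_slice u0 u1 p q fl fr hfl hfr hc hv hMX ε _)
  have step1 : (∫ t in Set.Ioi (0:ℝ), ∫ x : ℝ, (T t x + F t x))
      = (∫ t in Set.Ioi (0:ℝ), ∫ x : ℝ, T t x) + ∫ t in Set.Ioi (0:ℝ), ∫ x : ℝ, F t x := by
    rw [integral_congr_ae (Filter.Eventually.of_forall hsplit)]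
    exact integral_add hTprod.integral_prod_left hFprod.integral_prod_left
  -- T part
  have hswap : (∫ t in Set.Ioi (0:ℝ), ∫ x : ℝ, T t x)
      = ∫ x : ℝ, ∫ t in Set.Ioi (0:ℝ), T t x := integral_integral_swap hTprod
  set v : ℝ → ℝ := fun x =>
    if x < 0 then (u0 - p) * φ (x, -x / ε) else (u1 - q) * φ (x, x / ε) with hvdef
  have hvint : Integrable v := by
    apply integrable1d (C := max (|u0 - p| * M₀) (|u1 - q| * M₀)) (R := R)
    · apply Measurable.aestronglyMeasurable
      refine Measurable.ite measurableSet_Iio ?_ ?_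
      · exact (continuous_const.mul (hc.continuous.comp
          (continuous_id.prodMk (continuous_id.neg.div_const ε)))).measurable
      · exact (continuous_const.mul (hc.continuous.comp
          (continuous_id.prodMk (continuous_id.div_const ε)))).measurable
    · intro x
      simp only [hvdef]
      split_ifs
      · refine le_max_of_le_left ?_
        rw [abs_mul]
        exact mul_le_mul_of_nonneg_left (hM₀ _) (abs_nonneg _)
      · refine le_max_of_le_right ?_
        rw [abs_mul]
        exact mul_le_mul_of_nonneg_left (hM₀ _) (abs_nonneg _)
    · intro x hx
      simp only [hvdef]
      split_ifs
      · rw [(hv x (-x / ε) (Or.inl hx)).1, mul_zero]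
      · rw [(hv x (x / ε) (Or.inl hx)).1, mul_zero]
  have hTval : (∫ x : ℝ, ∫ t in Set.Ioi (0:ℝ), T t x) = ∫ x : ℝ, v x := by
    apply integral_congr_ae
    have hz : ({(0:ℝ)} : Set ℝ)ᶜ ∈ ae (volume : Measure ℝ) :=
      compl_mem_ae_iff.2 Real.volume_singleton
    filter_upwards [hz] with x hx
    have hne : x ≠ 0 := Set.mem_compl_singleton_iff.mp hx
    rcases lt_or_gt_of_ne hne with h | h
    · simp only [hvdef]
      rw [if_pos h]
      exact T_inner_neg u0 u1 p q hc h0 hv hMD hε h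
    · simp only [hvdef]
      rw [if_neg (not_lt.mpr h.le)]
      exact T_inner_pos u0 u1 p q hc h0 hv hMD hε h
  have hvsplit : (∫ x : ℝ, v x)
      = (u0 - p) * (ε * ∫ t in Set.Ioi (0:ℝ), φ (-(ε * t), t))
        + (u1 - q) * (ε * ∫ t in Set.Ioi (0:ℝ), φ (ε * t, t)) := by
    rw [← intervalIntegral.integral_Iio_add_Ici (b := 0) hvint.integrableOn hvint.integrableOn]
    have e1 : ∫ x in Set.Iio (0:ℝ), v x = (u0 - p) * ∫ x in Set.Iio (0:ℝ), φ (x, -x / ε) := by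
      rw [setIntegral_congr_fun measurableSet_Iio
        (g := fun x => (u0 - p) * φ (x, -x / ε)) (fun x hx => by simp only [hvdef]; exact if_pos hx),
        integral_const_mul]
    have e2 : ∫ x in Set.Ici (0:ℝ), v x = (u1 - q) * ∫ x in Set.Ioi (0:ℝ), φ (x, x / ε) := by
      rw [setIntegral_congr_set Ioi_ae_eq_Ici.symm,
        setIntegral_congr_fun measurableSet_Ioi
        (g := fun x => (u1 - q) * φ (x, x / ε))
        (fun x hx => by simp only [hvdef]; exact if_neg (not_lt.mpr (le_of_lt hx))),
        integral_const_mul]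
    rw [e1, e2, cov_neg hε, cov_pos hε]
  -- F part
  have hFouter : (∫ t in Set.Ioi (0:ℝ), ∫ x : ℝ, F t x)
      = fl u0 * (∫ t in Set.Ioi (0:ℝ), φ (-(ε * t), t))
         - fr u1 * (∫ t in Set.Ioi (0:ℝ), φ (ε * t, t))
         + fl p * ((∫ t in Set.Ioi (0:ℝ), φ (0, t)) - ∫ t in Set.Ioi (0:ℝ), φ (-(ε * t), t))
         + fr q * ((∫ t in Set.Ioi (0:ℝ), φ (ε * t, t)) - ∫ t in Set.Ioi (0:ℝ), φ (0, t)) := by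
    have hgm : IntegrableOn (fun t : ℝ => φ (-(ε * t), t)) (Set.Ioi 0) := by
      refine (integrable1d ?_ M₀ R (fun t => hM₀ _) ?_).integrableOn
      · exact (hc.continuous.comp
          ((continuous_const.mul continuous_id).neg.prodMk continuous_id)).aestronglyMeasurable
      · intro t ht; exact (hv _ t (Or.inr ht)).1
    have hgp : IntegrableOn (fun t : ℝ => φ (ε * t, t)) (Set.Ioi 0) := by
      refine (integrable1d ?_ M₀ R (fun t => hM₀ _) ?_).integrableOn
      · exact (hc.continuous.comp
          ((continuous_const.mul continuous_id).prodMk continuous_id)).aestronglyMeasurable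
      · intro t ht; exact (hv _ t (Or.inr ht)).1
    have hg0 : IntegrableOn (fun t : ℝ => φ (0, t)) (Set.Ioi 0) := by
      refine (integrable1d ?_ M₀ R (fun t => hM₀ _) ?_).integrableOn
      · exact (hc.continuous.comp (continuous_const.prodMk continuous_id)).aestronglyMeasurable
      · intro t ht; exact (hv 0 t (Or.inr ht)).1
    have hstep : (∫ t in Set.Ioi (0:ℝ), ∫ x : ℝ, F t x)
        = ∫ t in Set.Ioi (0:ℝ), ((fl u0 - fl p) * φ (-(ε * t), t)
            + ((fl p - fr q) * φ (0, t) + (fr q - fr u1) * φ (ε * t, t))) := by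
      rw [setIntegral_congr_fun measurableSet_Ioi (fun t ht => ?_)]
      rw [F_inner u0 u1 p q fl fr hfl hfr hc hv hMX hε ht]
      ring
    have hB : Integrable (fun t : ℝ => (fl p - fr q) * φ (0, t) + (fr q - fr u1) * φ (ε * t, t))
        (volume.restrict (Set.Ioi 0)) := (hg0.const_mul _).add (hgp.const_mul _)
    rw [hstep, integral_add (hgm.const_mul _) hB,
      integral_add (hg0.const_mul _) (hgp.const_mul _),
      integral_const_mul, integral_const_mul, integral_const_mul]
    ring
  calc ∫ t in Set.Ioi (0:ℝ), ∫ x : ℝ, (T t x + F t x)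
      = (∫ t in Set.Ioi (0:ℝ), ∫ x : ℝ, T t x) + ∫ t in Set.Ioi (0:ℝ), ∫ x : ℝ, F t x := step1
    _ = _ := by rw [hswap, hTval, hvsplit, hFouter]

end

end BridgeLemmaAux

/-- bridge lemma: under the limiting conditions (i)–(iii), the shadow wave
net is a weak asymptotic solution of `∂_t u + ∂_x f(x,u) = 0`. -/
theorem bridge_lemma
    (u0 u1 a b : ℝ) (fl fr : ℝ → ℝ) (hfl : Continuous fl) (hfr : Continuous fr)
    (u0e u1e : ℝ → ℝ)
    (ha : Tendsto (fun ε : ℝ => ε * (u0e ε - u0)) (𝓝[>] (0:ℝ)) (𝓝 a))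
    (hb : Tendsto (fun ε : ℝ => ε * (u1e ε - u1)) (𝓝[>] (0:ℝ)) (𝓝 b))
    (hab : a + b = fl u0 - fr u1)
    (h2 : Tendsto (fun ε : ℝ => ε * (fl (u0e ε) + fr (u1e ε))) (𝓝[>] (0:ℝ)) (𝓝 0))
    (h3l : Tendsto (fun ε : ℝ => ε ^ 2 * fl (u0e ε)) (𝓝[>] (0:ℝ)) (𝓝 0))
    (h3r : Tendsto (fun ε : ℝ => ε ^ 2 * fr (u1e ε)) (𝓝[>] (0:ℝ)) (𝓝 0)) :
    WeakAsymptoticSolution fl fr u0 u1 u0e u1e := by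
  intro φ hφ
  obtain ⟨hc, hsupp, h0⟩ := hφ
  obtain ⟨R, hR, hv⟩ := support_bound hsupp
  obtain ⟨M₀, hM₀'⟩ := hsupp.exists_bound_of_continuous hc.continuous
  have hM₀ : ∀ z : ℝ × ℝ, |φ z| ≤ M₀ := fun z => by
    rw [← Real.norm_eq_abs]; exact hM₀' z
  obtain ⟨MD, hMD'⟩ :=
    (hsupp.fderiv ℝ).exists_bound_of_continuous (hc.continuous_fderiv (by simp))
  have hMD : ∀ z : ℝ × ℝ, |fderiv ℝ φ z (0, 1)| ≤ MD := fun z => by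
    rw [← Real.norm_eq_abs]
    calc ‖fderiv ℝ φ z (0, 1)‖ ≤ ‖fderiv ℝ φ z‖ * ‖((0:ℝ), (1:ℝ))‖ :=
          (fderiv ℝ φ z).le_opNorm _
      _ ≤ MD := by
          have : ‖((0:ℝ), (1:ℝ))‖ = 1 := by simp [Prod.norm_def]
          rw [this, mul_one]; exact hMD' z
  have hMX : ∀ z : ℝ × ℝ, |fderiv ℝ φ z (1, 0)| ≤ MD := fun z => by
    rw [← Real.norm_eq_abs]
    calc ‖fderiv ℝ φ z (1, 0)‖ ≤ ‖fderiv ℝ φ z‖ * ‖((1:ℝ), (0:ℝ))‖ :=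
          (fderiv ℝ φ z).le_opNorm _
      _ ≤ MD := by
          have : ‖((1:ℝ), (0:ℝ))‖ = 1 := by simp [Prod.norm_def]
          rw [this, mul_one]; exact hMD' z
  obtain ⟨K₁, hK₁⟩ := ContDiff.lipschitzWith_of_hasCompactSupport hsupp hc (by simp)
  obtain ⟨K₂, hK₂⟩ := ContDiff.lipschitzWith_of_hasCompactSupport (hsupp.fderiv ℝ)
    (hc.fderiv_right (WithTop.coe_le_coe.2 le_top)) (by norm_num : (1 : WithTop ℕ∞) ≠ 0)
  -- integrable families
  have hgm : ∀ ε : ℝ, IntegrableOn (fun t : ℝ => φ (-(ε * t), t)) (Set.Ioi 0) := by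
    intro ε
    refine (integrable1d ?_ M₀ R (fun t => hM₀ _) ?_).integrableOn
    · exact (hc.continuous.comp
        ((continuous_const.mul continuous_id).neg.prodMk continuous_id)).aestronglyMeasurable
    · intro t ht; exact (hv _ t (Or.inr ht)).1
  have hgp : ∀ ε : ℝ, IntegrableOn (fun t : ℝ => φ (ε * t, t)) (Set.Ioi 0) := by
    intro ε
    refine (integrable1d ?_ M₀ R (fun t => hM₀ _) ?_).integrableOn
    · exact (hc.continuous.comp
        ((continuous_const.mul continuous_id).prodMk continuous_id)).aestronglyMeasurable
    · intro t ht; exact (hv _ t (Or.inr ht)).1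
  have hg0 : IntegrableOn (fun t : ℝ => φ (0, t)) (Set.Ioi 0) := by
    refine (integrable1d ?_ M₀ R (fun t => hM₀ _) ?_).integrableOn
    · exact (hc.continuous.comp (continuous_const.prodMk continuous_id)).aestronglyMeasurable
    · intro t ht; exact (hv 0 t (Or.inr ht)).1
  set Jz : ℝ := ∫ t in Set.Ioi (0:ℝ), φ (0, t) with hJz
  set Gm : ℝ → ℝ := fun ε => ∫ t in Set.Ioi (0:ℝ), φ (-(ε * t), t) with hGm
  set Gp : ℝ → ℝ := fun ε => ∫ t in Set.Ioi (0:ℝ), φ (ε * t, t) with hGp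
  -- the dominated convergence bound
  have hbound_int : Integrable ((Set.Ioc (0:ℝ) R).indicator (fun _ => M₀))
      (volume.restrict (Set.Ioi 0)) := by
    refine Integrable.integrableOn ?_
    exact (integrable_indicator_iff measurableSet_Ioc).2
      (integrableOn_const (by rw [Real.volume_Ioc]; exact ENNReal.ofReal_ne_top))
  have domin : ∀ (s : ℝ → ℝ → ℝ), (∀ ε t, |φ (s ε t * t, t)| ≤ M₀) → True := fun _ _ => trivial
  -- tendsto of Gm
  have tGm : Tendsto Gm (𝓝[>] (0:ℝ)) (𝓝 Jz) := by
    apply tendsto_integral_filter_of_dominated_convergence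
      (bound := (Set.Ioc (0:ℝ) R).indicator (fun _ => M₀))
    · exact Eventually.of_forall (fun ε => ((hc.continuous.comp
        ((continuous_const.mul continuous_id).neg.prodMk
          continuous_id)).aestronglyMeasurable).restrict)
    · refine Eventually.of_forall (fun ε => ?_)
      refine (ae_restrict_iff' measurableSet_Ioi).2 (Eventually.of_forall fun t ht => ?_)
      by_cases hle : t ≤ R
      · rw [Set.indicator_of_mem (show t ∈ Set.Ioc (0:ℝ) R from ⟨ht, hle⟩), Real.norm_eq_abs]; exact hM₀ _
      · rw [Set.indicator_of_notMem (fun hmem => hle hmem.2)]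
        have htR : R < t := lt_of_not_ge hle
        rw [(hv _ t (Or.inr (lt_of_lt_of_le htR (le_abs_self t)))).1, norm_zero]
    · exact hbound_int
    · refine Eventually.of_forall (fun t => ?_)
      have hcomp : Tendsto (fun ε : ℝ => ((-(ε * t) : ℝ), t)) (𝓝[>] (0:ℝ)) (𝓝 ((0:ℝ), t)) := by
        apply Tendsto.mono_left _ nhdsWithin_le_nhds
        have hcont : Continuous (fun ε : ℝ => ((-(ε * t) : ℝ), t)) :=
          ((continuous_id.mul continuous_const).neg).prodMk continuous_const
        have := hcont.tendsto 0
        simpa using this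
      exact (hc.continuous.tendsto ((0:ℝ), t)).comp hcomp
  have tGp : Tendsto Gp (𝓝[>] (0:ℝ)) (𝓝 Jz) := by
    apply tendsto_integral_filter_of_dominated_convergence
      (bound := (Set.Ioc (0:ℝ) R).indicator (fun _ => M₀))
    · exact Eventually.of_forall (fun ε => ((hc.continuous.comp
        ((continuous_const.mul continuous_id).prodMk
          continuous_id)).aestronglyMeasurable).restrict)
    · refine Eventually.of_forall (fun ε => ?_)
      refine (ae_restrict_iff' measurableSet_Ioi).2 (Eventually.of_forall fun t ht => ?_)
      by_cases hle : t ≤ R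
      · rw [Set.indicator_of_mem (show t ∈ Set.Ioc (0:ℝ) R from ⟨ht, hle⟩), Real.norm_eq_abs]; exact hM₀ _
      · rw [Set.indicator_of_notMem (fun hmem => hle hmem.2)]
        have htR : R < t := lt_of_not_ge hle
        rw [(hv _ t (Or.inr (lt_of_lt_of_le htR (le_abs_self t)))).1, norm_zero]
    · exact hbound_int
    · refine Eventually.of_forall (fun t => ?_)
      have hcomp : Tendsto (fun ε : ℝ => ((ε * t : ℝ), t)) (𝓝[>] (0:ℝ)) (𝓝 ((0:ℝ), t)) := by
        apply Tendsto.mono_left _ nhdsWithin_le_nhds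
        have hcont : Continuous (fun ε : ℝ => ((ε * t : ℝ), t)) :=
          (continuous_id.mul continuous_const).prodMk continuous_const
        have := hcont.tendsto 0
        simpa using this
      exact (hc.continuous.tendsto ((0:ℝ), t)).comp hcomp
  -- first-order bound
  have hAm : ∀ ε : ℝ, 0 < ε → |Jz - Gm ε| ≤ ε * (K₁ * R * R) := by
    intro ε hε
    have heq : Jz - Gm ε = ∫ t in Set.Ioi (0:ℝ), (φ (0, t) - φ (-(ε * t), t)) := by
      simp only [hGm, hJz]
      exact (integral_sub hg0 (hgm ε)).symm
    rw [heq]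
    have hsubint : IntegrableOn (fun t : ℝ => φ (0, t) - φ (-(ε * t), t)) (Set.Ioi 0) :=
      hg0.sub (hgm ε)
    have key := abs_int_le hsubint hR (c := K₁ * (ε * R))
      (fun t ht => ?_) (fun t htR => ?_)
    · calc |∫ t in Set.Ioi (0:ℝ), (φ (0, t) - φ (-(ε * t), t))| ≤ K₁ * (ε * R) * R := key
        _ = ε * (K₁ * R * R) := by ring
    · -- pointwise Lipschitz bound on Ioc 0 R
      have hdist : dist (φ ((0:ℝ), t)) (φ ((-(ε * t) : ℝ), t)) ≤ K₁ * (ε * t) := by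
        have h1 := hK₁.dist_le_mul ((0:ℝ), t) ((-(ε * t) : ℝ), t)
        have h2 : dist ((0:ℝ), t) ((-(ε * t) : ℝ), t) = ε * t := by
          rw [Prod.dist_eq, dist_self, Real.dist_eq, zero_sub, neg_neg,
            max_eq_left (abs_nonneg _), abs_of_nonneg (le_of_lt (mul_pos hε ht.1))]
        rw [h2] at h1; exact h1
      rw [Real.dist_eq] at hdist
      calc |φ (0, t) - φ (-(ε * t), t)| ≤ K₁ * (ε * t) := hdist
        _ ≤ K₁ * (ε * R) := by
            have := mul_le_mul_of_nonneg_left ht.2 hε.le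
            exact mul_le_mul_of_nonneg_left this K₁.coe_nonneg
    · -- vanishing for t > R
      have habs : R < |t| := lt_of_lt_of_le htR (le_abs_self t)
      rw [(hv 0 t (Or.inr habs)).1, (hv _ t (Or.inr habs)).1, sub_zero]
  -- second-order bound
  have hA2 : ∀ ε : ℝ, 0 < ε → |(Gp ε - Jz) - (Jz - Gm ε)| ≤ ε ^ 2 * (2 * K₂ * (R * R * R)) := by
    intro ε hε
    have heq : (Gp ε - Jz) - (Jz - Gm ε)
        = ∫ t in Set.Ioi (0:ℝ), (φ (ε * t, t) + φ (-(ε * t), t) - 2 * φ (0, t)) := by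
      simp only [hGm, hGp, hJz]
      have h1 : ∫ t in Set.Ioi (0:ℝ), (φ (ε * t, t) + φ (-(ε * t), t) - 2 * φ (0, t))
          = (∫ t in Set.Ioi (0:ℝ), (φ (ε * t, t) + φ (-(ε * t), t)))
            - ∫ t in Set.Ioi (0:ℝ), (2 * φ (0, t) : ℝ) :=
        integral_sub ((hgp ε).add (hgm ε)) (hg0.const_mul 2)
      rw [h1, integral_add (hgp ε) (hgm ε), integral_const_mul]
      ring
    rw [heq]
    have hsubint2 : IntegrableOn
        (fun t : ℝ => φ (ε * t, t) + φ (-(ε * t), t) - 2 * φ (0, t)) (Set.Ioi 0) :=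
      ((hgp ε).add (hgm ε)).sub (hg0.const_mul 2)
    have key := abs_int_le hsubint2 hR
      (c := 2 * K₂ * (ε * R) ^ 2) (fun t ht => ?_) (fun t htR => ?_)
    · calc |∫ t in Set.Ioi (0:ℝ), (φ (ε * t, t) + φ (-(ε * t), t) - 2 * φ (0, t))|
          ≤ 2 * K₂ * (ε * R) ^ 2 * R := key
        _ = ε ^ 2 * (2 * K₂ * (R * R * R)) := by ring
    · -- second difference bound on Ioc 0 R
      have hsd := second_diff (hc.differentiable (by simp)) hK₂ ((0:ℝ), t) ((ε * t : ℝ), (0:ℝ))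
      have hpv : ((0:ℝ), t) + ((ε * t : ℝ), (0:ℝ)) = ((ε * t : ℝ), t) := by
        rw [Prod.mk_add_mk, zero_add, add_zero]
      have hmv : ((0:ℝ), t) - ((ε * t : ℝ), (0:ℝ)) = ((-(ε * t) : ℝ), t) := by
        rw [Prod.mk_sub_mk, zero_sub, sub_zero]
      rw [hpv, hmv] at hsd
      have hnv : ‖((ε * t : ℝ), (0:ℝ))‖ = ε * t := by
        rw [Prod.norm_def]
        simp only [norm_zero, Real.norm_eq_abs]
        rw [max_eq_left (abs_nonneg _), abs_of_nonneg (le_of_lt (mul_pos hε ht.1))]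
      rw [hnv] at hsd
      refine le_trans hsd ?_
      have h1 : (ε * t) ^ 2 ≤ (ε * R) ^ 2 := by
        apply pow_le_pow_left₀ (le_of_lt (mul_pos hε ht.1))
        exact mul_le_mul_of_nonneg_left ht.2 hε.le
      have h2 : (0:ℝ) ≤ 2 * K₂ := by positivity
      exact mul_le_mul_of_nonneg_left h1 h2
    · have habs : R < |t| := lt_of_lt_of_le htR (le_abs_self t)
      rw [(hv _ t (Or.inr habs)).1, (hv _ t (Or.inr habs)).1, (hv 0 t (Or.inr habs)).1]
      simp
  have evpos : ∀ᶠ ε in 𝓝[>] (0:ℝ), (0:ℝ) < ε := self_mem_nhdsWithin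
  -- tendsto pieces
  have t1 : Tendsto (fun ε : ℝ => (u0 - u0e ε) * (ε * Gm ε)) (𝓝[>] (0:ℝ)) (𝓝 (-(a * Jz))) := by
    have hfe : (fun ε : ℝ => (u0 - u0e ε) * (ε * Gm ε))
        = fun ε : ℝ => -((ε * (u0e ε - u0)) * Gm ε) := funext fun ε => by ring
    rw [hfe]
    exact (ha.mul tGm).neg
  have t2 : Tendsto (fun ε : ℝ => (u1 - u1e ε) * (ε * Gp ε)) (𝓝[>] (0:ℝ)) (𝓝 (-(b * Jz))) := by
    have hfe : (fun ε : ℝ => (u1 - u1e ε) * (ε * Gp ε))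
        = fun ε : ℝ => -((ε * (u1e ε - u1)) * Gp ε) := funext fun ε => by ring
    rw [hfe]
    exact (hb.mul tGp).neg
  have t3 : Tendsto (fun ε : ℝ => fl u0 * Gm ε) (𝓝[>] (0:ℝ)) (𝓝 (fl u0 * Jz)) :=
    tGm.const_mul _
  have t4 : Tendsto (fun ε : ℝ => fr u1 * Gp ε) (𝓝[>] (0:ℝ)) (𝓝 (fr u1 * Jz)) :=
    tGp.const_mul _
  have t5 : Tendsto (fun ε : ℝ => fl (u0e ε) * (Jz - Gm ε) + fr (u1e ε) * (Gp ε - Jz))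
      (𝓝[>] (0:ℝ)) (𝓝 0) := by
    have hfe : (fun ε : ℝ => fl (u0e ε) * (Jz - Gm ε) + fr (u1e ε) * (Gp ε - Jz))
        = fun ε : ℝ => (fl (u0e ε) + fr (u1e ε)) * (Jz - Gm ε)
            + fr (u1e ε) * ((Gp ε - Jz) - (Jz - Gm ε)) := funext fun ε => by ring
    rw [hfe]
    have h5a : Tendsto (fun ε : ℝ => (fl (u0e ε) + fr (u1e ε)) * (Jz - Gm ε))
        (𝓝[>] (0:ℝ)) (𝓝 0) := by
      apply squeeze_zero_norm' (a := fun ε : ℝ => |ε * (fl (u0e ε) + fr (u1e ε))| * (K₁ * R * R))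
      · filter_upwards [evpos] with ε hε
        rw [Real.norm_eq_abs, abs_mul]
        calc |fl (u0e ε) + fr (u1e ε)| * |Jz - Gm ε|
            ≤ |fl (u0e ε) + fr (u1e ε)| * (ε * (K₁ * R * R)) :=
              mul_le_mul_of_nonneg_left (hAm ε hε) (abs_nonneg _)
          _ = |ε * (fl (u0e ε) + fr (u1e ε))| * (K₁ * R * R) := by
              rw [abs_mul, abs_of_pos hε]; ring
      · have := (h2.abs).mul_const (K₁ * R * R)
        simpa using this
    have h5b : Tendsto (fun ε : ℝ => fr (u1e ε) * ((Gp ε - Jz) - (Jz - Gm ε)))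
        (𝓝[>] (0:ℝ)) (𝓝 0) := by
      apply squeeze_zero_norm' (a := fun ε : ℝ => |ε ^ 2 * fr (u1e ε)| * (2 * K₂ * (R * R * R)))
      · filter_upwards [evpos] with ε hε
        rw [Real.norm_eq_abs, abs_mul]
        calc |fr (u1e ε)| * |(Gp ε - Jz) - (Jz - Gm ε)|
            ≤ |fr (u1e ε)| * (ε ^ 2 * (2 * K₂ * (R * R * R))) :=
              mul_le_mul_of_nonneg_left (hA2 ε hε) (abs_nonneg _)
          _ = |ε ^ 2 * fr (u1e ε)| * (2 * K₂ * (R * R * R)) := by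
              rw [abs_mul, abs_of_pos (by positivity : (0:ℝ) < ε ^ 2)]; ring
      · have := (h3r.abs).mul_const (2 * K₂ * (R * R * R))
        simpa using this
    simpa using h5a.add h5b
  have main : Tendsto (fun ε : ℝ =>
      (u0 - u0e ε) * (ε * Gm ε) + (u1 - u1e ε) * (ε * Gp ε)
      + (fl u0 * Gm ε - fr u1 * Gp ε + fl (u0e ε) * (Jz - Gm ε) + fr (u1e ε) * (Gp ε - Jz)))
      (𝓝[>] (0:ℝ)) (𝓝 0) := by
    have hsum := (t1.add t2).add ((t3.sub t4).add t5)
    have hval : (-(a * Jz) + -(b * Jz)) + ((fl u0 * Jz - fr u1 * Jz) + 0) = 0 := by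
      linear_combination (-Jz) * hab
    rw [hval] at hsum
    apply hsum.congr
    intro ε
    ring
  refine Tendsto.congr' ?_ main
  filter_upwards [evpos] with ε hε
  exact (key_eq u0 u1 (u0e ε) (u1e ε) fl fr hfl hfr hc h0 hv hM₀ hMD hMX hε).symm
end

section
/- Let u_0, u_1 ∈ ℝ and for each ε > 0 let u_{0,ε}, u_{1,ε} ∈ ℝ. Assume ε(u_{0,ε} − u_0) → a and ε(u_{1,ε} − u_1) → b as ε → 0+. Then the shadow wave net (u_ε) converges distributionally to U(x) + (a+b) t δ(x); that is, for every φ ∈ C_c^∞(ℝ × (0,∞)), ∫_0^∞ ∫_ℝ u_ε φ dx dt → ∫_0^∞ ∫_ℝ U φ dx dt + (a+b) ∫_0^∞ t φ(0,t) dt as ε → 0+. -/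
open MeasureTheory Filter Set Topology

lemma sdw_eq_aux (u0 u1 p q ε x t : ℝ) (hε : 0 < ε) (ht : 0 < t)
    (hx1 : x ≠ -(ε * t)) (hx2 : x ≠ 0) (v : ℝ) :
    sdw u0 u1 p q ε x t * v =
      (if x < 0 then u0 else u1) * v
      + ((p - u0) * Set.indicator (Set.Ioo (-(ε * t)) 0) (fun _ => v) x
      + (q - u1) * Set.indicator (Set.Ioo 0 (ε * t)) (fun _ => v) x) := by
  have hεt : 0 < ε * t := mul_pos hε ht
  rcases hx1.lt_or_gt with h1 | h1
  · have hx0 : x < 0 := by linarith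
    have e1 : Set.indicator (Set.Ioo (-(ε * t)) 0) (fun _ => v) x = 0 :=
      Set.indicator_of_notMem (by simp only [Set.mem_Ioo]; rintro ⟨hc, -⟩; linarith) _
    have e2 : Set.indicator (Set.Ioo 0 (ε * t)) (fun _ => v) x = 0 :=
      Set.indicator_of_notMem (by simp only [Set.mem_Ioo]; rintro ⟨hc, -⟩; linarith) _
    rw [sdw, if_pos h1, if_pos hx0, e1, e2]; ring
  · rcases hx2.lt_or_gt with h2 | h2
    · have e1 : Set.indicator (Set.Ioo (-(ε * t)) 0) (fun _ => v) x = v :=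
        Set.indicator_of_mem (show x ∈ Set.Ioo (-(ε*t)) 0 from ⟨h1, h2⟩) _
      have e2 : Set.indicator (Set.Ioo 0 (ε * t)) (fun _ => v) x = 0 :=
        Set.indicator_of_notMem (by simp only [Set.mem_Ioo]; rintro ⟨hc, -⟩; linarith) _
      rw [sdw, if_neg (by linarith), if_pos h2, if_pos h2, e1, e2]; ring
    · have hns : ¬ x < -(ε * t) := by linarith
      have hn0 : ¬ x < 0 := by linarith
      have e1 : Set.indicator (Set.Ioo (-(ε * t)) 0) (fun _ => v) x = 0 :=
        Set.indicator_of_notMem (by simp only [Set.mem_Ioo]; rintro ⟨-, hc⟩; linarith) _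
      by_cases h3 : x < ε * t
      · have e2 : Set.indicator (Set.Ioo 0 (ε * t)) (fun _ => v) x = v :=
          Set.indicator_of_mem (show x ∈ Set.Ioo 0 (ε*t) from ⟨h2, h3⟩) _
        rw [sdw, if_neg hns, if_neg hn0, if_pos h3, if_neg hn0, e1, e2]; ring
      · have e2 : Set.indicator (Set.Ioo 0 (ε * t)) (fun _ => v) x = 0 :=
          Set.indicator_of_notMem (by simp only [Set.mem_Ioo]; rintro ⟨-, hc⟩; linarith) _
        rw [sdw, if_neg hns, if_neg hn0, if_neg h3, if_neg hn0, e1, e2]; ring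

section helpers

variable {φ : ℝ × ℝ → ℝ} {R Cφ : ℝ}

lemma phi_t_integrable (hcont : Continuous φ) (hR0 : 0 < R)
    (hz : ∀ x t : ℝ, R < |x| ∨ R < |t| → φ (x, t) = 0) (t : ℝ) :
    Integrable (fun x => φ (x, t)) := by
  apply (hcont.comp (continuous_id.prodMk continuous_const)).integrable_of_hasCompactSupport
  apply HasCompactSupport.intro (isCompact_Icc (a := -R) (b := R))
  intro x hx
  apply hz x t (Or.inl ?_)
  simp only [Set.mem_Icc, not_and_or, not_le] at hx
  rw [lt_abs]
  rcases hx with h | h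
  · exact Or.inr (by linarith)
  · exact Or.inl h

lemma tphi_integrable (hcont : Continuous φ) (hR0 : 0 < R)
    (hz : ∀ x t : ℝ, R < |x| ∨ R < |t| → φ (x, t) = 0) :
    Integrable (fun t => t * φ (0, t)) := by
  apply (continuous_id.mul (hcont.comp (continuous_const.prodMk continuous_id))).integrable_of_hasCompactSupport
  apply HasCompactSupport.intro (isCompact_Icc (a := -R) (b := R))
  intro t ht
  have : R < |t| := by
    simp only [Set.mem_Icc, not_and_or, not_le] at ht
    rw [lt_abs]
    rcases ht with h | h
    · exact Or.inr (by linarith)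
    · exact Or.inl h
  show id t * φ (0, id t) = 0
  simp only [id_eq]
  rw [hz 0 t (Or.inr this), mul_zero]

end helpers

noncomputable def swG0 (u0 u1 : ℝ) (φ : ℝ × ℝ → ℝ) (t : ℝ) : ℝ :=
  ∫ x : ℝ, (if x < 0 then u0 else u1) * φ (x, t)

section helpers2

variable {u0 u1 : ℝ} {φ : ℝ × ℝ → ℝ} {R Cφ : ℝ}

lemma swG0_integrable (hcont : Continuous φ) (hR0 : 0 < R) (hCφ0 : 0 ≤ Cφ)
    (hz : ∀ x t : ℝ, R < |x| ∨ R < |t| → φ (x, t) = 0) (hCφ : ∀ p, ‖φ p‖ ≤ Cφ) :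
    Integrable (swG0 u0 u1 φ) := by
  have hmeas : StronglyMeasurable fun z : ℝ × ℝ => (if z.2 < 0 then u0 else u1) * φ (z.2, z.1) := by
    apply Measurable.stronglyMeasurable
    exact (Measurable.ite (measurableSet_lt measurable_snd measurable_const)
      measurable_const measurable_const).mul
      ((hcont.comp (continuous_snd.prodMk continuous_fst)).measurable)
  have hsmG : AEStronglyMeasurable (swG0 u0 u1 φ) volume :=
    hmeas.integral_prod_right'.aestronglyMeasurable
  refine Integrable.mono'
    (g := Set.indicator (Set.Icc (-R) R) (fun _ => (|u0| + |u1|) * Cφ * (2 * R)))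
    ((integrable_indicator_iff measurableSet_Icc).mpr
      (integrableOn_const measure_Icc_lt_top.ne)) hsmG ?_
  refine Eventually.of_forall fun t => ?_
  by_cases ht : R < |t|
  · have hz0 : swG0 u0 u1 φ t = 0 := by
      rw [swG0, show (fun x => (if x < 0 then u0 else u1) * φ (x, t)) = fun _ => (0 : ℝ) from
        funext fun x => by rw [hz x t (Or.inr ht), mul_zero], integral_zero]
    rw [hz0, norm_zero]
    exact Set.indicator_nonneg (fun _ _ => by positivity) t
  · push_neg at ht
    rw [Set.indicator_of_mem (by
      rw [Set.mem_Icc]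
      exact ⟨by linarith [neg_abs_le t], by linarith [le_abs_self t]⟩)]
    rw [swG0, ← setIntegral_eq_integral_of_forall_compl_eq_zero
      (s := Set.Icc (-R) R) (f := fun x => (if x < 0 then u0 else u1) * φ (x, t))
      (fun x hx => by
        show (if x < 0 then u0 else u1) * φ (x, t) = 0
        rw [hz x t (Or.inl ?_), mul_zero]
        simp only [Set.mem_Icc, not_and_or, not_le] at hx
        rw [lt_abs]
        rcases hx with h | h
        · exact Or.inr (by linarith)
        · exact Or.inl h)]
    calc ‖∫ x in Set.Icc (-R) R, (if x < 0 then u0 else u1) * φ (x, t)‖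
        ≤ (|u0| + |u1|) * Cφ * (volume (Set.Icc (-R) R)).toReal := by
          apply norm_setIntegral_le_of_norm_le_const measure_Icc_lt_top
          intro x _
          rw [norm_mul]
          have h1 : ‖if x < 0 then u0 else u1‖ ≤ |u0| + |u1| := by
            split_ifs <;> simp [Real.norm_eq_abs] <;> positivity
          exact mul_le_mul h1 (hCφ _) (norm_nonneg _) (by positivity)
      _ = (|u0| + |u1|) * Cφ * (2 * R) := by
          rw [Real.volume_Icc, ENNReal.toReal_ofReal (by linarith)]
          ring

end helpers2

noncomputable def swGA (φ : ℝ × ℝ → ℝ) (ε t : ℝ) : ℝ :=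
  ∫ x in Set.Ioo (-(ε * t)) 0, φ (x, t)

noncomputable def swGB (φ : ℝ × ℝ → ℝ) (ε t : ℝ) : ℝ :=
  ∫ x in Set.Ioo 0 (ε * t), φ (x, t)

section helpers3

variable {u0 u1 : ℝ} {φ : ℝ × ℝ → ℝ} {R Cφ : ℝ} {ε : ℝ}

lemma swGA_rep (ε t : ℝ) :
    swGA φ ε t = ∫ x : ℝ, (if -(ε * t) < x ∧ x < 0 then φ (x, t) else 0) := by
  rw [swGA, ← integral_indicator measurableSet_Ioo]
  congr 1
  funext x
  simp [Set.indicator_apply, Set.mem_Ioo]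

lemma swGB_rep (ε t : ℝ) :
    swGB φ ε t = ∫ x : ℝ, (if 0 < x ∧ x < ε * t then φ (x, t) else 0) := by
  rw [swGB, ← integral_indicator measurableSet_Ioo]
  congr 1
  funext x
  simp [Set.indicator_apply, Set.mem_Ioo]

lemma swGA_meas (hcont : Continuous φ) (ε : ℝ) :
    AEStronglyMeasurable (swGA φ ε) volume := by
  rw [show swGA φ ε = fun t => ∫ x : ℝ, (if -(ε * t) < x ∧ x < 0 then φ (x, t) else 0) from
    funext fun t => swGA_rep ε t]
  have hmeas : StronglyMeasurable fun z : ℝ × ℝ =>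
      (if -(ε * z.1) < z.2 ∧ z.2 < 0 then φ (z.2, z.1) else 0) := by
    apply Measurable.stronglyMeasurable
    apply Measurable.ite ?_ ((hcont.comp (continuous_snd.prodMk continuous_fst)).measurable)
      measurable_const
    rw [Set.setOf_and]
    exact (measurableSet_lt ((measurable_fst.const_mul ε).neg) measurable_snd).inter
      (measurableSet_lt measurable_snd measurable_const)
  exact hmeas.integral_prod_right'.aestronglyMeasurable

lemma swGB_meas (hcont : Continuous φ) (ε : ℝ) :
    AEStronglyMeasurable (swGB φ ε) volume := by
  rw [show swGB φ ε = fun t => ∫ x : ℝ, (if 0 < x ∧ x < ε * t then φ (x, t) else 0) from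
    funext fun t => swGB_rep ε t]
  have hmeas : StronglyMeasurable fun z : ℝ × ℝ =>
      (if 0 < z.2 ∧ z.2 < ε * z.1 then φ (z.2, z.1) else 0) := by
    apply Measurable.stronglyMeasurable
    apply Measurable.ite ?_ ((hcont.comp (continuous_snd.prodMk continuous_fst)).measurable)
      measurable_const
    rw [Set.setOf_and]
    exact (measurableSet_lt measurable_const measurable_snd).inter
      (measurableSet_lt measurable_snd (measurable_fst.const_mul ε))
  exact hmeas.integral_prod_right'.aestronglyMeasurable

end helpers3

section helpers4

variable {u0 u1 : ℝ} {φ : ℝ × ℝ → ℝ} {R Cφ : ℝ} {ε : ℝ}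

lemma swGA_zero_of_nonpos (hε : 0 < ε) {t : ℝ} (ht : t ≤ 0) : swGA φ ε t = 0 := by
  rw [swGA, Set.Ioo_eq_empty (by
    intro hc
    have : ε * t ≤ 0 := mul_nonpos_of_nonneg_of_nonpos hε.le ht
    linarith), setIntegral_empty]

lemma swGB_zero_of_nonpos (hε : 0 < ε) {t : ℝ} (ht : t ≤ 0) : swGB φ ε t = 0 := by
  rw [swGB, Set.Ioo_eq_empty (by
    intro hc
    have : ε * t ≤ 0 := mul_nonpos_of_nonneg_of_nonpos hε.le ht
    linarith), setIntegral_empty]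

lemma swGA_zero_of_big (hR0 : 0 < R)
    (hz : ∀ x t : ℝ, R < |x| ∨ R < |t| → φ (x, t) = 0) {t : ℝ} (ht : R < t) :
    swGA φ ε t = 0 :=
  setIntegral_eq_zero_of_forall_eq_zero fun x _ =>
    hz x t (Or.inr (lt_of_lt_of_le ht (le_abs_self t)))

lemma swGB_zero_of_big (hR0 : 0 < R)
    (hz : ∀ x t : ℝ, R < |x| ∨ R < |t| → φ (x, t) = 0) {t : ℝ} (ht : R < t) :
    swGB φ ε t = 0 :=
  setIntegral_eq_zero_of_forall_eq_zero fun x _ =>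
    hz x t (Or.inr (lt_of_lt_of_le ht (le_abs_self t)))

lemma swGA_norm_le (hcont : Continuous φ) (hR0 : 0 < R) (hCφ0 : 0 ≤ Cφ)
    (hz : ∀ x t : ℝ, R < |x| ∨ R < |t| → φ (x, t) = 0) (hCφ : ∀ p, ‖φ p‖ ≤ Cφ)
    (hε : 0 < ε) (t : ℝ) :
    ‖swGA φ ε t‖ ≤ Set.indicator (Set.Icc 0 R) (fun _ => Cφ * (ε * R)) t := by
  rcases le_or_gt t 0 with ht | ht
  · rw [swGA_zero_of_nonpos hε ht, norm_zero]
    exact Set.indicator_nonneg (fun _ _ => by positivity) t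
  rcases le_or_gt t R with htR | htR
  · rw [Set.indicator_of_mem (Set.mem_Icc.mpr ⟨ht.le, htR⟩)]
    have hvol : volume (Set.Ioo (-(ε * t)) 0) < ⊤ := by
      rw [Real.volume_Ioo]; exact ENNReal.ofReal_lt_top
    calc ‖swGA φ ε t‖ ≤ Cφ * (volume (Set.Ioo (-(ε * t)) 0)).toReal := by
          apply norm_setIntegral_le_of_norm_le_const hvol
          intro x _
          exact hCφ _
      _ ≤ Cφ * (ε * R) := by
          rw [Real.volume_Ioo, show (0 : ℝ) - -(ε * t) = ε * t by ring,
            ENNReal.toReal_ofReal (by positivity)]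
          have : ε * t ≤ ε * R := by nlinarith
          nlinarith
  · rw [swGA_zero_of_big hR0 hz htR, norm_zero]
    exact Set.indicator_nonneg (fun _ _ => by positivity) t

lemma swGB_norm_le (hcont : Continuous φ) (hR0 : 0 < R) (hCφ0 : 0 ≤ Cφ)
    (hz : ∀ x t : ℝ, R < |x| ∨ R < |t| → φ (x, t) = 0) (hCφ : ∀ p, ‖φ p‖ ≤ Cφ)
    (hε : 0 < ε) (t : ℝ) :
    ‖swGB φ ε t‖ ≤ Set.indicator (Set.Icc 0 R) (fun _ => Cφ * (ε * R)) t := by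
  rcases le_or_gt t 0 with ht | ht
  · rw [swGB_zero_of_nonpos hε ht, norm_zero]
    exact Set.indicator_nonneg (fun _ _ => by positivity) t
  rcases le_or_gt t R with htR | htR
  · rw [Set.indicator_of_mem (Set.mem_Icc.mpr ⟨ht.le, htR⟩)]
    have hvol : volume (Set.Ioo 0 (ε * t)) < ⊤ := by
      rw [Real.volume_Ioo]; exact ENNReal.ofReal_lt_top
    calc ‖swGB φ ε t‖ ≤ Cφ * (volume (Set.Ioo 0 (ε * t))).toReal := by
          apply norm_setIntegral_le_of_norm_le_const hvol
          intro x _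
          exact hCφ _
      _ ≤ Cφ * (ε * R) := by
          rw [Real.volume_Ioo, show ε * t - 0 = ε * t by ring,
            ENNReal.toReal_ofReal (by positivity)]
          have : ε * t ≤ ε * R := by nlinarith
          nlinarith
  · rw [swGB_zero_of_big hR0 hz htR, norm_zero]
    exact Set.indicator_nonneg (fun _ _ => by positivity) t

lemma swGA_integrable (hcont : Continuous φ) (hR0 : 0 < R) (hCφ0 : 0 ≤ Cφ)
    (hz : ∀ x t : ℝ, R < |x| ∨ R < |t| → φ (x, t) = 0) (hCφ : ∀ p, ‖φ p‖ ≤ Cφ)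
    (hε : 0 < ε) : Integrable (swGA φ ε) :=
  Integrable.mono'
    ((integrable_indicator_iff measurableSet_Icc).mpr
      (integrableOn_const measure_Icc_lt_top.ne))
    (swGA_meas hcont ε)
    (Eventually.of_forall (swGA_norm_le hcont hR0 hCφ0 hz hCφ hε))

lemma swGB_integrable (hcont : Continuous φ) (hR0 : 0 < R) (hCφ0 : 0 ≤ Cφ)
    (hz : ∀ x t : ℝ, R < |x| ∨ R < |t| → φ (x, t) = 0) (hCφ : ∀ p, ‖φ p‖ ≤ Cφ)
    (hε : 0 < ε) : Integrable (swGB φ ε) :=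
  Integrable.mono'
    ((integrable_indicator_iff measurableSet_Icc).mpr
      (integrableOn_const measure_Icc_lt_top.ne))
    (swGB_meas hcont ε)
    (Eventually.of_forall (swGB_norm_le hcont hR0 hCφ0 hz hCφ hε))

end helpers4

section helpers5

open NNReal

variable {u0 u1 : ℝ} {φ : ℝ × ℝ → ℝ} {R Cφ : ℝ} {ε : ℝ} {L : ℝ≥0}

lemma lip_bound (hL : LipschitzWith L φ) (x t : ℝ) :
    ‖φ (x, t) - φ (0, t)‖ ≤ (L : ℝ) * |x| := by
  have h := hL.dist_le_mul (x, t) (0, t)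
  rw [Prod.dist_eq] at h
  simp only [dist_self, Real.dist_eq, sub_zero] at h
  rw [max_eq_left (abs_nonneg x)] at h
  rw [← dist_eq_norm]
  exact h

end helpers5

section helpers6

open NNReal

variable {u0 u1 : ℝ} {φ : ℝ × ℝ → ℝ} {R Cφ : ℝ} {ε : ℝ} {L : ℝ≥0}

lemma swGA_est (hcont : Continuous φ) (hR0 : 0 < R) (hCφ0 : 0 ≤ Cφ)
    (hz : ∀ x t : ℝ, R < |x| ∨ R < |t| → φ (x, t) = 0) (hCφ : ∀ p, ‖φ p‖ ≤ Cφ)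
    (hL : LipschitzWith L φ) (hε : 0 < ε) :
    ‖(∫ t in Set.Ioi (0:ℝ), swGA φ ε t) - ε * ∫ t in Set.Ioi (0:ℝ), t * φ (0, t)‖
      ≤ ε ^ 2 * ((L : ℝ) * R ^ 3) := by
  have hIntA : IntegrableOn (swGA φ ε) (Set.Ioi (0:ℝ)) :=
    (swGA_integrable hcont hR0 hCφ0 hz hCφ hε).integrableOn
  have hIntT : IntegrableOn (fun t => ε * (t * φ (0, t))) (Set.Ioi (0:ℝ)) :=
    ((tphi_integrable hcont hR0 hz).const_mul ε).integrableOn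
  rw [← integral_const_mul, ← integral_sub hIntA hIntT]
  have hbd : Integrable
      (Set.indicator (Set.Icc (0:ℝ) R) (fun _ => (L : ℝ) * (ε * R) * (ε * R)))
      (volume.restrict (Set.Ioi (0:ℝ))) :=
    ((integrable_indicator_iff measurableSet_Icc).mpr
      (integrableOn_const measure_Icc_lt_top.ne)).integrableOn
  refine le_trans (norm_integral_le_of_norm_le hbd ?_) ?_
  · filter_upwards [ae_restrict_mem measurableSet_Ioi] with t ht
    rcases le_or_gt t R with htR | htR
    · -- main case : 0 < t ≤ R
      have ht' : (0:ℝ) < t := ht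
      have htmem : t ∈ Set.Icc (0:ℝ) R := Set.mem_Icc.mpr ⟨le_of_lt ht, htR⟩
      have hvol : volume (Set.Ioo (-(ε * t)) 0) < ⊤ := by
        rw [Real.volume_Ioo]; exact ENNReal.ofReal_lt_top
      have hkey : swGA φ ε t - ε * (t * φ (0, t))
          = ∫ x in Set.Ioo (-(ε * t)) 0, (φ (x, t) - φ (0, t)) := by
        rw [integral_sub ((phi_t_integrable hcont hR0 hz t).integrableOn)
          (integrableOn_const hvol.ne)]
        congr 1
        rw [setIntegral_const, measureReal_def, Real.volume_Ioo, smul_eq_mul,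
          show (0:ℝ) - -(ε * t) = ε * t by ring,
          ENNReal.toReal_ofReal (by positivity)]
        ring
      rw [hkey, Set.indicator_of_mem htmem]
      refine le_trans (norm_setIntegral_le_of_norm_le_const hvol
        (C := (L : ℝ) * (ε * R)) ?_) ?_
      · intro x hx
        refine le_trans (lip_bound hL x t) ?_
        apply mul_le_mul_of_nonneg_left _ L.coe_nonneg
        rw [Set.mem_Ioo] at hx
        rw [abs_of_neg hx.2]
        nlinarith [hx.1]
      · rw [measureReal_def, Real.volume_Ioo, show (0:ℝ) - -(ε * t) = ε * t by ring,
          ENNReal.toReal_ofReal (by positivity)]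
        have h1 : ε * t ≤ ε * R := by nlinarith
        exact mul_le_mul_of_nonneg_left h1 (mul_nonneg L.coe_nonneg (mul_nonneg hε.le hR0.le))
    · -- t > R : everything vanishes
      have h1 : swGA φ ε t = 0 := swGA_zero_of_big hR0 hz htR
      have h2 : φ (0, t) = 0 := hz 0 t (Or.inr (lt_of_lt_of_le htR (le_abs_self t)))
      rw [h1, h2, mul_zero, mul_zero, sub_zero, norm_zero]
      exact Set.indicator_nonneg (fun _ _ => by positivity) t
  · rw [integral_indicator measurableSet_Icc]
    rw [Measure.restrict_restrict measurableSet_Icc]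
    have hset : Set.Icc (0:ℝ) R ∩ Set.Ioi 0 = Set.Ioc 0 R := by
      ext x
      simp only [Set.mem_inter_iff, Set.mem_Icc, Set.mem_Ioi, Set.mem_Ioc]
      constructor
      · rintro ⟨⟨-, h2⟩, h3⟩; exact ⟨h3, h2⟩
      · rintro ⟨h1, h2⟩; exact ⟨⟨h1.le, h2⟩, h1⟩
    rw [hset, setIntegral_const, measureReal_def, Real.volume_Ioc, smul_eq_mul,
      ENNReal.toReal_ofReal (by linarith), sub_zero]
    nlinarith [L.coe_nonneg, sq_nonneg ε, sq_nonneg R]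

end helpers6

section helpers7

open NNReal

variable {u0 u1 : ℝ} {φ : ℝ × ℝ → ℝ} {R Cφ : ℝ} {ε : ℝ} {L : ℝ≥0}

lemma swGB_est (hcont : Continuous φ) (hR0 : 0 < R) (hCφ0 : 0 ≤ Cφ)
    (hz : ∀ x t : ℝ, R < |x| ∨ R < |t| → φ (x, t) = 0) (hCφ : ∀ p, ‖φ p‖ ≤ Cφ)
    (hL : LipschitzWith L φ) (hε : 0 < ε) :
    ‖(∫ t in Set.Ioi (0:ℝ), swGB φ ε t) - ε * ∫ t in Set.Ioi (0:ℝ), t * φ (0, t)‖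
      ≤ ε ^ 2 * ((L : ℝ) * R ^ 3) := by
  have hIntB : IntegrableOn (swGB φ ε) (Set.Ioi (0:ℝ)) :=
    (swGB_integrable hcont hR0 hCφ0 hz hCφ hε).integrableOn
  have hIntT : IntegrableOn (fun t => ε * (t * φ (0, t))) (Set.Ioi (0:ℝ)) :=
    ((tphi_integrable hcont hR0 hz).const_mul ε).integrableOn
  rw [← integral_const_mul, ← integral_sub hIntB hIntT]
  have hbd : Integrable
      (Set.indicator (Set.Icc (0:ℝ) R) (fun _ => (L : ℝ) * (ε * R) * (ε * R)))
      (volume.restrict (Set.Ioi (0:ℝ))) :=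
    ((integrable_indicator_iff measurableSet_Icc).mpr
      (integrableOn_const measure_Icc_lt_top.ne)).integrableOn
  refine le_trans (norm_integral_le_of_norm_le hbd ?_) ?_
  · filter_upwards [ae_restrict_mem measurableSet_Ioi] with t ht
    rcases le_or_gt t R with htR | htR
    · have ht' : (0:ℝ) < t := ht
      have htmem : t ∈ Set.Icc (0:ℝ) R := Set.mem_Icc.mpr ⟨le_of_lt ht, htR⟩
      have hvol : volume (Set.Ioo (0:ℝ) (ε * t)) < ⊤ := by
        rw [Real.volume_Ioo]; exact ENNReal.ofReal_lt_top
      have hkey : swGB φ ε t - ε * (t * φ (0, t))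
          = ∫ x in Set.Ioo (0:ℝ) (ε * t), (φ (x, t) - φ (0, t)) := by
        rw [integral_sub ((phi_t_integrable hcont hR0 hz t).integrableOn)
          (integrableOn_const hvol.ne)]
        congr 1
        rw [setIntegral_const, measureReal_def, Real.volume_Ioo, smul_eq_mul,
          show ε * t - 0 = ε * t by ring,
          ENNReal.toReal_ofReal (by positivity)]
        ring
      rw [hkey, Set.indicator_of_mem htmem]
      refine le_trans (norm_setIntegral_le_of_norm_le_const hvol
        (C := (L : ℝ) * (ε * R)) ?_) ?_
      · intro x hx
        refine le_trans (lip_bound hL x t) ?_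
        apply mul_le_mul_of_nonneg_left _ L.coe_nonneg
        rw [Set.mem_Ioo] at hx
        rw [abs_of_pos hx.1]
        nlinarith [hx.2]
      · rw [measureReal_def, Real.volume_Ioo, show ε * t - 0 = ε * t by ring,
          ENNReal.toReal_ofReal (by positivity)]
        have h1 : ε * t ≤ ε * R := by nlinarith
        exact mul_le_mul_of_nonneg_left h1 (mul_nonneg L.coe_nonneg (mul_nonneg hε.le hR0.le))
    · have h1 : swGB φ ε t = 0 := swGB_zero_of_big hR0 hz htR
      have h2 : φ (0, t) = 0 := hz 0 t (Or.inr (lt_of_lt_of_le htR (le_abs_self t)))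
      rw [h1, h2, mul_zero, mul_zero, sub_zero, norm_zero]
      exact Set.indicator_nonneg (fun _ _ => by positivity) t
  · rw [integral_indicator measurableSet_Icc]
    rw [Measure.restrict_restrict measurableSet_Icc]
    have hset : Set.Icc (0:ℝ) R ∩ Set.Ioi 0 = Set.Ioc 0 R := by
      ext x
      simp only [Set.mem_inter_iff, Set.mem_Icc, Set.mem_Ioi, Set.mem_Ioc]
      constructor
      · rintro ⟨⟨-, h2⟩, h3⟩; exact ⟨h3, h2⟩
      · rintro ⟨h1, h2⟩; exact ⟨⟨h1.le, h2⟩, h1⟩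
    rw [hset, setIntegral_const, measureReal_def, Real.volume_Ioc, smul_eq_mul,
      ENNReal.toReal_ofReal (by linarith), sub_zero]
    nlinarith [L.coe_nonneg, sq_nonneg ε, sq_nonneg R]

end helpers7

section helpers8

variable {u0 u1 : ℝ} {φ : ℝ × ℝ → ℝ} {R Cφ : ℝ}

lemma sdw_inner (hcont : Continuous φ) (hR0 : 0 < R)
    (hz : ∀ x t : ℝ, R < |x| ∨ R < |t| → φ (x, t) = 0)
    (p q : ℝ) {ε t : ℝ} (hε : 0 < ε) (ht : 0 < t) :
    ∫ x : ℝ, sdw u0 u1 p q ε x t * φ (x, t)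
      = swG0 u0 u1 φ t + ((p - u0) * swGA φ ε t + (q - u1) * swGB φ ε t) := by
  have hint : Integrable (fun x => φ (x, t)) := phi_t_integrable hcont hR0 hz t
  have h1 : Integrable (fun x => (if x < 0 then u0 else u1) * φ (x, t)) := by
    apply hint.bdd_mul (c := |u0| + |u1|)
    · exact ((Measurable.ite (measurableSet_lt measurable_id measurable_const)
        measurable_const measurable_const).stronglyMeasurable).aestronglyMeasurable
    · refine Eventually.of_forall fun x => ?_
      split_ifs <;> simp [Real.norm_eq_abs] <;> positivity
  have h2 : Integrable (Set.indicator (Set.Ioo (-(ε * t)) 0) (fun x => φ (x, t))) :=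
    hint.indicator measurableSet_Ioo
  have h3 : Integrable (Set.indicator (Set.Ioo 0 (ε * t)) (fun x => φ (x, t))) :=
    hint.indicator measurableSet_Ioo
  have hae : (fun x => sdw u0 u1 p q ε x t * φ (x, t)) =ᵐ[volume]
      fun x => (if x < 0 then u0 else u1) * φ (x, t)
        + ((p - u0) * Set.indicator (Set.Ioo (-(ε * t)) 0) (fun y => φ (y, t)) x
        + (q - u1) * Set.indicator (Set.Ioo 0 (ε * t)) (fun y => φ (y, t)) x) := by
    have hfin : volume ({-(ε * t), 0} : Set ℝ) = 0 := (Set.toFinite _).measure_zero _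
    filter_upwards [measure_eq_zero_iff_ae_notMem.mp hfin] with x hx
    simp only [Set.mem_insert_iff, Set.mem_singleton_iff, not_or] at hx
    rw [sdw_eq_aux u0 u1 p q ε x t hε ht hx.1 hx.2 (φ (x, t))]
    simp [Set.indicator_apply]
  calc ∫ x : ℝ, sdw u0 u1 p q ε x t * φ (x, t)
      = ∫ x : ℝ, ((if x < 0 then u0 else u1) * φ (x, t)
        + ((p - u0) * Set.indicator (Set.Ioo (-(ε * t)) 0) (fun y => φ (y, t)) x
        + (q - u1) * Set.indicator (Set.Ioo 0 (ε * t)) (fun y => φ (y, t)) x)) :=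
        integral_congr_ae hae
    _ = (∫ x : ℝ, (if x < 0 then u0 else u1) * φ (x, t))
        + ∫ x : ℝ, ((p - u0) * Set.indicator (Set.Ioo (-(ε * t)) 0) (fun y => φ (y, t)) x
          + (q - u1) * Set.indicator (Set.Ioo 0 (ε * t)) (fun y => φ (y, t)) x) :=
        integral_add h1 ((h2.const_mul (p - u0)).add (h3.const_mul (q - u1)))
    _ = (∫ x : ℝ, (if x < 0 then u0 else u1) * φ (x, t))
        + ((∫ x : ℝ, (p - u0) * Set.indicator (Set.Ioo (-(ε * t)) 0) (fun y => φ (y, t)) x)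
          + ∫ x : ℝ, (q - u1) * Set.indicator (Set.Ioo 0 (ε * t)) (fun y => φ (y, t)) x) := by
        rw [integral_add (h2.const_mul (p - u0)) (h3.const_mul (q - u1))]
    _ = swG0 u0 u1 φ t + ((p - u0) * swGA φ ε t + (q - u1) * swGB φ ε t) := by
        rw [integral_const_mul, integral_const_mul,
          integral_indicator measurableSet_Ioo, integral_indicator measurableSet_Ioo]
        rfl

end helpers8

section helpers9

variable {u0 u1 : ℝ} {φ : ℝ × ℝ → ℝ} {R Cφ : ℝ} {ε : ℝ}

lemma sdw_outer (hcont : Continuous φ) (hR0 : 0 < R) (hCφ0 : 0 ≤ Cφ)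
    (hz : ∀ x t : ℝ, R < |x| ∨ R < |t| → φ (x, t) = 0) (hCφ : ∀ p, ‖φ p‖ ≤ Cφ)
    (p q : ℝ) (hε : 0 < ε) :
    (∫ t in Set.Ioi (0:ℝ), ∫ x : ℝ, sdw u0 u1 p q ε x t * φ (x, t))
      = (∫ t in Set.Ioi (0:ℝ), swG0 u0 u1 φ t)
        + ((p - u0) * (∫ t in Set.Ioi (0:ℝ), swGA φ ε t)
          + (q - u1) * ∫ t in Set.Ioi (0:ℝ), swGB φ ε t) := by
  have hA : IntegrableOn (swGA φ ε) (Set.Ioi (0:ℝ)) :=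
    (swGA_integrable hcont hR0 hCφ0 hz hCφ hε).integrableOn
  have hB : IntegrableOn (swGB φ ε) (Set.Ioi (0:ℝ)) :=
    (swGB_integrable hcont hR0 hCφ0 hz hCφ hε).integrableOn
  have hG0 : IntegrableOn (swG0 u0 u1 φ) (Set.Ioi (0:ℝ)) :=
    (swG0_integrable hcont hR0 hCφ0 hz hCφ).integrableOn
  calc (∫ t in Set.Ioi (0:ℝ), ∫ x : ℝ, sdw u0 u1 p q ε x t * φ (x, t))
      = ∫ t in Set.Ioi (0:ℝ), (swG0 u0 u1 φ t
        + ((p - u0) * swGA φ ε t + (q - u1) * swGB φ ε t)) :=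
        setIntegral_congr_fun measurableSet_Ioi
          (fun t ht => sdw_inner hcont hR0 hz p q hε ht)
    _ = (∫ t in Set.Ioi (0:ℝ), swG0 u0 u1 φ t)
        + ∫ t in Set.Ioi (0:ℝ), ((p - u0) * swGA φ ε t + (q - u1) * swGB φ ε t) :=
        integral_add hG0 ((hA.const_mul (p - u0)).add (hB.const_mul (q - u1)))
    _ = (∫ t in Set.Ioi (0:ℝ), swG0 u0 u1 φ t)
        + ((∫ t in Set.Ioi (0:ℝ), (p - u0) * swGA φ ε t)
          + ∫ t in Set.Ioi (0:ℝ), (q - u1) * swGB φ ε t) := by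
        rw [integral_add (hA.const_mul (p - u0)) (hB.const_mul (q - u1))]
    _ = (∫ t in Set.Ioi (0:ℝ), swG0 u0 u1 φ t)
        + ((p - u0) * (∫ t in Set.Ioi (0:ℝ), swGA φ ε t)
          + (q - u1) * ∫ t in Set.Ioi (0:ℝ), swGB φ ε t) := by
        rw [integral_const_mul, integral_const_mul]

end helpers9

/-- if `ε(u_{0,ε} - u0) → a` and `ε(u_{1,ε} - u1) → b` as `ε → 0+`,
the shadow wave net converges distributionally to `U(x) + (a+b) t δ(x)`. -/
theorem shadow_wave_distributional_limit
    (u0 u1 a b : ℝ) (u0e u1e : ℝ → ℝ)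
    (ha : Tendsto (fun ε : ℝ => ε * (u0e ε - u0)) (𝓝[>] (0:ℝ)) (𝓝 a))
    (hb : Tendsto (fun ε : ℝ => ε * (u1e ε - u1)) (𝓝[>] (0:ℝ)) (𝓝 b)) :
    ConvergesToDeltaShock u0 u1 u0e u1e (a + b) := by
  intro φ hφ
  obtain ⟨hsm, hsupp, -⟩ := hφ
  have hcont : Continuous φ := hsm.continuous
  obtain ⟨L, hL⟩ := ContDiff.lipschitzWith_of_hasCompactSupport hsupp hsm (by simp)
  obtain ⟨R, hR0, hRsub⟩ := hsupp.isBounded.subset_closedBall_lt 0 0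
  have hz : ∀ x t : ℝ, R < |x| ∨ R < |t| → φ (x, t) = 0 := by
    intro x t h
    by_contra hne
    have hmem : (x, t) ∈ tsupport φ := subset_tsupport φ (by simpa using hne)
    have hball := hRsub hmem
    rw [Metric.mem_closedBall, Prod.dist_eq] at hball
    simp only [Prod.fst_zero, Prod.snd_zero, dist_zero_right, Real.norm_eq_abs] at hball
    rcases h with h | h
    · exact absurd (le_trans (le_max_left _ _) hball) (not_le.mpr h)
    · exact absurd (le_trans (le_max_right _ _) hball) (not_le.mpr h)
  obtain ⟨Cφ, hCφ⟩ := hsupp.exists_bound_of_continuous hcont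
  have hCφ0 : 0 ≤ Cφ := le_trans (norm_nonneg _) (hCφ (0, 0))
  set J := ∫ t in Ioi (0:ℝ), t * φ (0, t) with hJ
  have hA : Tendsto (fun ε => (u0e ε - u0) * ∫ t in Ioi (0:ℝ), swGA φ ε t)
      (𝓝[>] (0:ℝ)) (𝓝 (a * J)) := by
    have h2 : Tendsto
        (fun ε => (u0e ε - u0) * ((∫ t in Ioi (0:ℝ), swGA φ ε t) - ε * J))
        (𝓝[>] (0:ℝ)) (𝓝 0) := by
      apply squeeze_zero_norm' (a := fun ε => |ε * (u0e ε - u0)| * (ε * ((L:ℝ) * R ^ 3)))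
      · filter_upwards [self_mem_nhdsWithin] with ε hε
        have hε' : (0:ℝ) < ε := hε
        rw [norm_mul]
        calc ‖u0e ε - u0‖ * ‖(∫ t in Ioi (0:ℝ), swGA φ ε t) - ε * J‖
            ≤ ‖u0e ε - u0‖ * (ε ^ 2 * ((L:ℝ) * R ^ 3)) :=
              mul_le_mul_of_nonneg_left
                (swGA_est hcont hR0 hCφ0 hz hCφ hL hε') (norm_nonneg _)
          _ = |ε * (u0e ε - u0)| * (ε * ((L:ℝ) * R ^ 3)) := by
              rw [abs_mul, abs_of_pos hε', Real.norm_eq_abs]; ring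
      · have h3 : Tendsto (fun ε : ℝ => ε * ((L:ℝ) * R ^ 3)) (𝓝[>] (0:ℝ)) (𝓝 0) := by
          have := (tendsto_id.mono_left
            (nhdsWithin_le_nhds : 𝓝[>] (0:ℝ) ≤ 𝓝 0)).mul_const ((L:ℝ) * R ^ 3)
          simpa using this
        have h4 := ha.abs.mul h3
        simpa using h4
    have h1 : Tendsto (fun ε => ε * (u0e ε - u0) * J) (𝓝[>] (0:ℝ)) (𝓝 (a * J)) :=
      ha.mul_const J
    have h5 := h1.add h2
    rw [add_zero] at h5
    exact h5.congr (fun ε => by ring)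
  have hB : Tendsto (fun ε => (u1e ε - u1) * ∫ t in Ioi (0:ℝ), swGB φ ε t)
      (𝓝[>] (0:ℝ)) (𝓝 (b * J)) := by
    have h2 : Tendsto
        (fun ε => (u1e ε - u1) * ((∫ t in Ioi (0:ℝ), swGB φ ε t) - ε * J))
        (𝓝[>] (0:ℝ)) (𝓝 0) := by
      apply squeeze_zero_norm' (a := fun ε => |ε * (u1e ε - u1)| * (ε * ((L:ℝ) * R ^ 3)))
      · filter_upwards [self_mem_nhdsWithin] with ε hε
        have hε' : (0:ℝ) < ε := hε
        rw [norm_mul]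
        calc ‖u1e ε - u1‖ * ‖(∫ t in Ioi (0:ℝ), swGB φ ε t) - ε * J‖
            ≤ ‖u1e ε - u1‖ * (ε ^ 2 * ((L:ℝ) * R ^ 3)) :=
              mul_le_mul_of_nonneg_left
                (swGB_est hcont hR0 hCφ0 hz hCφ hL hε') (norm_nonneg _)
          _ = |ε * (u1e ε - u1)| * (ε * ((L:ℝ) * R ^ 3)) := by
              rw [abs_mul, abs_of_pos hε', Real.norm_eq_abs]; ring
      · have h3 : Tendsto (fun ε : ℝ => ε * ((L:ℝ) * R ^ 3)) (𝓝[>] (0:ℝ)) (𝓝 0) := by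
          have := (tendsto_id.mono_left
            (nhdsWithin_le_nhds : 𝓝[>] (0:ℝ) ≤ 𝓝 0)).mul_const ((L:ℝ) * R ^ 3)
          simpa using this
        have h4 := hb.abs.mul h3
        simpa using h4
    have h1 : Tendsto (fun ε => ε * (u1e ε - u1) * J) (𝓝[>] (0:ℝ)) (𝓝 (b * J)) :=
      hb.mul_const J
    have h5 := h1.add h2
    rw [add_zero] at h5
    exact h5.congr (fun ε => by ring)
  have hIU : (∫ t in Ioi (0:ℝ), ∫ x : ℝ, (if x < 0 then u0 else u1) * φ (x, t))
      = ∫ t in Ioi (0:ℝ), swG0 u0 u1 φ t := rfl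
  rw [hIU]
  have hfin := (tendsto_const_nhds
    (x := ∫ t in Ioi (0:ℝ), swG0 u0 u1 φ t) (f := 𝓝[>] (0:ℝ))).add (hA.add hB)
  have hval : (∫ t in Ioi (0:ℝ), swG0 u0 u1 φ t) + (a * J + b * J)
      = (∫ t in Ioi (0:ℝ), swG0 u0 u1 φ t) + (a + b) * J := by ring
  rw [hval] at hfin
  refine Tendsto.congr' ?_ hfin
  filter_upwards [self_mem_nhdsWithin] with ε hε
  exact (sdw_outer hcont hR0 hCφ0 hz hCφ (u0e ε) (u1e ε) hε).symm
end

section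
/- (Main theorem, case ν_2 < 1, ξ_0 = 0, ξ_1 = κ.) Let f_l, f_r : ℝ → ℝ be continuous, u_0, u_1 ∈ ℝ, and suppose there is ν_2 ∈ [0,1) such that lim_{u→+∞} f_r(u)/u^{ν_2} exists and is finite. Set κ = f_l(u_0) − f_r(u_1) and assume κ > 0. Put u_{0,ε} = u_0 and u_{1,ε} = u_1 + κ/ε. Then the shadow wave net (u_ε) is a weak asymptotic solution of ∂_t u + ∂_x f(x,u) = 0 and converges distributionally to U(x) + κ t δ(x), i.e. for every φ ∈ C_c^∞(ℝ × (0,∞)), ∫_0^∞ ∫_ℝ u_ε φ dx dt → ∫_0^∞ ∫_ℝ U φ dx dt + κ ∫_0^∞ t φ(0,t) dt. -/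
open MeasureTheory Filter Set Topology

/-- Regularity bundle for a test-type function on `ℝ × ℝ`. -/
structure NiceFun (ψ : ℝ × ℝ → ℝ) (M R : ℝ) : Prop where
  cont : Continuous ψ
  Mpos : 0 < M
  Rpos : 0 < R
  lip : ∀ x y t : ℝ, |ψ (x, t) - ψ (y, t)| ≤ M * |x - y|
  bound : ∀ p : ℝ × ℝ, |ψ p| ≤ M
  vanisht : ∀ x t : ℝ, R ≤ t → ψ (x, t) = 0
  vanishx : ∀ x t : ℝ, R ≤ |x| → ψ (x, t) = 0

lemma NiceFun.mono {ψ : ℝ × ℝ → ℝ} {M R M' R' : ℝ} (h : NiceFun ψ M R)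
    (hM : M ≤ M') (hR : R ≤ R') : NiceFun ψ M' R' where
  cont := h.cont
  Mpos := lt_of_lt_of_le h.Mpos hM
  Rpos := lt_of_lt_of_le h.Rpos hR
  lip x y t := (h.lip x y t).trans (mul_le_mul_of_nonneg_right hM (abs_nonneg _))
  bound p := (h.bound p).trans hM
  vanisht x t ht := h.vanisht x t (hR.trans ht)
  vanishx x t hx := h.vanishx x t (hR.trans hx)

lemma nice_of_smooth {ψ : ℝ × ℝ → ℝ} (h1 : ContDiff ℝ (⊤ : ℕ∞) ψ) (h2 : HasCompactSupport ψ) :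
    ∃ M R, NiceFun ψ M R := by
  obtain ⟨C, hC⟩ := h2.exists_bound_of_continuous h1.continuous
  obtain ⟨K, hK⟩ := ContDiff.lipschitzWith_of_hasCompactSupport h2 h1 (by simp)
  obtain ⟨r, hr⟩ := h2.isCompact.isBounded.subset_closedBall (0 : ℝ × ℝ)
  have hC0 : 0 ≤ C := le_trans (norm_nonneg _) (hC 0)
  refine ⟨max C K + 1, max r 0 + 1, ?_, ?_, ?_, ?_, ?_, ?_, ?_⟩
  · exact h1.continuous
  · have : (0:ℝ) ≤ max C K := le_trans hC0 (le_max_left _ _)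
    linarith
  · have : (0:ℝ) ≤ max r 0 := le_max_right _ _
    linarith
  · intro x y t
    have h := hK.dist_le_mul (x, t) (y, t)
    rw [Prod.dist_eq, Real.dist_eq, Real.dist_eq, Real.dist_eq, sub_self, abs_zero,
      max_eq_left (abs_nonneg _)] at h
    refine h.trans (mul_le_mul_of_nonneg_right ?_ (abs_nonneg _))
    have : (K:ℝ) ≤ max C K := le_max_right _ _
    linarith
  · intro p
    have := hC p
    rw [Real.norm_eq_abs] at this
    have h' : C ≤ max C K := le_max_left _ _
    linarith
  · intro x t ht
    apply image_eq_zero_of_notMem_tsupport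
    intro hmem
    have := hr hmem
    rw [Metric.mem_closedBall, Prod.dist_eq] at this
    simp only [Prod.fst_zero, Prod.snd_zero, Real.dist_eq, sub_zero] at this
    have h1' : |t| ≤ r := le_trans (le_max_right _ _) this
    have : t ≤ r := le_trans (le_abs_self t) h1'
    linarith [le_max_left r 0]
  · intro x t hx
    apply image_eq_zero_of_notMem_tsupport
    intro hmem
    have := hr hmem
    rw [Metric.mem_closedBall, Prod.dist_eq] at this
    simp only [Prod.fst_zero, Prod.snd_zero, Real.dist_eq, sub_zero] at this
    have h1' : |x| ≤ r := le_trans (le_max_left _ _) this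
    linarith [le_max_left r 0]

lemma pd_smooth {φ : ℝ × ℝ → ℝ} (h1 : ContDiff ℝ (⊤ : ℕ∞) φ) (h2 : HasCompactSupport φ)
    (v : ℝ × ℝ) :
    ContDiff ℝ (⊤ : ℕ∞) (fun p => fderiv ℝ φ p v) ∧
      HasCompactSupport (fun p => fderiv ℝ φ p v) := by
  constructor
  · exact (h1.fderiv_right (by simp)).clm_apply contDiff_const
  · exact h2.fderiv_apply ℝ v

lemma testFun_nice {φ : ℝ × ℝ → ℝ} (h : IsTestFun φ) :
    ∃ M R, NiceFun φ M R ∧ NiceFun (fun p => fderiv ℝ φ p (1, 0)) M R ∧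
      NiceFun (fun p => fderiv ℝ φ p (0, 1)) M R := by
  obtain ⟨M0, R0, h0⟩ := nice_of_smooth h.1 h.2.1
  obtain ⟨hx1, hx2⟩ := pd_smooth h.1 h.2.1 (1, 0)
  obtain ⟨M1, R1, h1'⟩ := nice_of_smooth hx1 hx2
  obtain ⟨ht1, ht2⟩ := pd_smooth h.1 h.2.1 (0, 1)
  obtain ⟨M2, R2, h2'⟩ := nice_of_smooth ht1 ht2
  refine ⟨max M0 (max M1 M2), max R0 (max R1 R2), ?_, ?_, ?_⟩
  · exact h0.mono (le_max_left _ _) (le_max_left _ _)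
  · exact h1'.mono (le_trans (le_max_left _ _) (le_max_right _ _))
      (le_trans (le_max_left _ _) (le_max_right _ _))
  · exact h2'.mono (le_trans (le_max_right _ _) (le_max_right _ _))
      (le_trans (le_max_right _ _) (le_max_right _ _))

lemma hasDerivAt_slice_x {φ : ℝ × ℝ → ℝ} (h : ContDiff ℝ (⊤ : ℕ∞) φ) (t x : ℝ) :
    HasDerivAt (fun y => φ (y, t)) (fderiv ℝ φ (x, t) (1, 0)) x := by
  have h1 : HasFDerivAt φ (fderiv ℝ φ (x, t)) (x, t) :=
    (h.differentiable (by simp) (x, t)).hasFDerivAt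
  have h2 : HasDerivAt (fun y : ℝ => (y, t)) ((1 : ℝ), (0 : ℝ)) x :=
    (hasDerivAt_id x).prodMk (hasDerivAt_const x t)
  exact h1.comp_hasDerivAt x h2

lemma hasDerivAt_slice_t {φ : ℝ × ℝ → ℝ} (h : ContDiff ℝ (⊤ : ℕ∞) φ) (x t : ℝ) :
    HasDerivAt (fun s => φ (x, s)) (fderiv ℝ φ (x, t) (0, 1)) t := by
  have h1 : HasFDerivAt φ (fderiv ℝ φ (x, t)) (x, t) :=
    (h.differentiable (by simp) (x, t)).hasFDerivAt
  have h2 : HasDerivAt (fun s : ℝ => (x, s)) ((0 : ℝ), (1 : ℝ)) t :=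
    (hasDerivAt_const t x).prodMk (hasDerivAt_id t)
  exact h1.comp_hasDerivAt t h2

lemma integrableOn_Ioi_of_vanish {g : ℝ → ℝ} (hg : Continuous g) {R : ℝ} (hR : 0 < R)
    (h : ∀ t, R ≤ t → g t = 0) : IntegrableOn g (Ioi (0:ℝ)) := by
  rw [← Ioc_union_Ioi_eq_Ioi hR.le]
  refine IntegrableOn.union ?_ ?_
  · exact hg.integrableOn_Icc.mono_set Ioc_subset_Icc_self
  · exact (integrableOn_zero).congr_fun (fun t ht => (h t (le_of_lt ht)).symm) measurableSet_Ioi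

lemma abs_integral_Ioi_le {g : ℝ → ℝ} (hg : Continuous g) {R C : ℝ} (hR : 0 < R)
    (h0 : ∀ t, R ≤ t → g t = 0) (hC : ∀ t ∈ Ioc (0:ℝ) R, |g t| ≤ C) :
    |∫ t in Ioi (0:ℝ), g t| ≤ C * R := by
  have hsplit : ∫ t in Ioi (0:ℝ), g t = ∫ t in Ioc (0:ℝ) R, g t := by
    rw [← Ioc_union_Ioi_eq_Ioi hR.le,
      setIntegral_union (Ioc_disjoint_Ioi le_rfl) measurableSet_Ioi
        (hg.integrableOn_Icc.mono_set Ioc_subset_Icc_self)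
        ((integrableOn_zero).congr_fun (fun t ht => (h0 t (le_of_lt ht)).symm) measurableSet_Ioi)]
    have h2 : ∫ t in Ioi R, g t = 0 :=
      setIntegral_eq_zero_of_forall_eq_zero (fun t ht => h0 t (le_of_lt ht))
    rw [h2, add_zero]
  rw [hsplit]
  have := norm_setIntegral_le_of_norm_le_const (μ := volume) (s := Ioc (0:ℝ) R) (f := g)
    (by rw [Real.volume_Ioc]; exact ENNReal.ofReal_lt_top)
    (fun t ht => by rw [Real.norm_eq_abs]; exact hC t ht)
  rw [Real.norm_eq_abs, measureReal_def, Real.volume_Ioc, sub_zero, ENNReal.toReal_ofReal hR.le] at this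
  exact this

lemma cont_param {ψ : ℝ × ℝ → ℝ} (hψ : Continuous ψ) (ε a : ℝ) :
    Continuous fun t => ∫ x in a..(ε * t), ψ (x, t) := by
  have hu : Continuous (Function.uncurry fun (t x : ℝ) => ψ (x, t)) :=
    hψ.comp continuous_swap
  exact intervalIntegral.continuous_parametric_intervalIntegral_of_continuous hu
    (continuous_const.mul continuous_id)

lemma cont_param' {ψ : ℝ × ℝ → ℝ} (hψ : Continuous ψ) (a b : ℝ) :
    Continuous fun t => ∫ x in a..b, ψ (x, t) := by
  have hu : Continuous (Function.uncurry fun (t x : ℝ) => ψ (x, t)) :=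
    hψ.comp continuous_swap
  exact intervalIntegral.continuous_parametric_intervalIntegral_of_continuous' hu a b

lemma ftc_x {φ : ℝ × ℝ → ℝ} (h : ContDiff ℝ (⊤ : ℕ∞) φ)
    (hc : Continuous fun p : ℝ × ℝ => fderiv ℝ φ p (1, 0)) (t a b : ℝ) :
    ∫ x in a..b, fderiv ℝ φ (x, t) (1, 0) = φ (b, t) - φ (a, t) := by
  refine intervalIntegral.integral_eq_sub_of_hasDerivAt (fun x _ => hasDerivAt_slice_x h t x) ?_
  exact ((hc.comp (continuous_id.prodMk continuous_const)).intervalIntegrable a b)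

lemma slice_integrable {ψ : ℝ × ℝ → ℝ} {M R : ℝ} (hψ : NiceFun ψ M R) (t : ℝ) :
    Integrable (fun x => ψ (x, t)) := by
  have hcont : Continuous fun x => ψ (x, t) := hψ.cont.comp (continuous_id.prodMk continuous_const)
  refine hcont.integrable_of_hasCompactSupport (HasCompactSupport.intro (isCompact_Icc
    (a := -R) (b := R)) ?_)
  intro x hx
  refine hψ.vanishx x t ?_
  have hx' : x < -R ∨ R < x := by
    by_contra hcon
    push_neg at hcon
    exact hx (Set.mem_Icc.2 ⟨hcon.1, hcon.2⟩)
  rcases hx' with h | h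
  · rw [abs_of_nonpos (by linarith [hψ.Rpos])]; linarith
  · rw [abs_of_pos (lt_trans hψ.Rpos h)]; exact h.le

lemma ite_mul_integrable {ψ : ℝ × ℝ → ℝ} {M R : ℝ} (hψ : NiceFun ψ M R) (a b t : ℝ) :
    Integrable (fun x => (if x < 0 then a else b) * ψ (x, t)) := by
  refine (slice_integrable hψ t).bdd_mul (c := max |a| |b|) ?_ (ae_of_all _ fun x => ?_)
  · exact (Measurable.ite measurableSet_Iio measurable_const measurable_const).aestronglyMeasurable
  · rw [Real.norm_eq_abs]
    split_ifs
    · exact le_max_left _ _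
    · exact le_max_right _ _

lemma indicator_mul_integrable {ψ : ℝ × ℝ → ℝ} {M R : ℝ} (hψ : NiceFun ψ M R) (c d t : ℝ) :
    Integrable (fun x => (Ico (0:ℝ) d).indicator (fun _ => c) x * ψ (x, t)) := by
  have heq : (fun x => (Ico (0:ℝ) d).indicator (fun _ => c) x * ψ (x, t))
      = (Ico (0:ℝ) d).indicator (fun x => c * ψ (x, t)) := by
    funext x
    by_cases hx : x ∈ Ico (0:ℝ) d <;> simp [hx]
  rw [heq]
  exact (((slice_integrable hψ t).const_mul c).integrableOn).integrable_indicator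
    measurableSet_Ico

lemma integral_ite_mul {ψ : ℝ × ℝ → ℝ} {M R : ℝ} (hψ : NiceFun ψ M R) (a b t : ℝ) :
    ∫ x : ℝ, (if x < 0 then a else b) * ψ (x, t)
      = a * (∫ x in (-R)..(0:ℝ), ψ (x, t)) + b * ∫ x in (0:ℝ)..R, ψ (x, t) := by
  have hW := ite_mul_integrable hψ a b t
  rw [← intervalIntegral.integral_Iio_add_Ici (b := (0:ℝ)) hW.integrableOn hW.integrableOn]
  have hIio : ∫ x in Iio (0:ℝ), (if x < 0 then a else b) * ψ (x, t)
      = a * ∫ x in (-R)..(0:ℝ), ψ (x, t) := by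
    rw [setIntegral_congr_fun measurableSet_Iio
      (fun x (hx : x < 0) => by rw [if_pos hx] : EqOn _ (fun x => a * ψ (x, t)) (Iio 0)),
      integral_const_mul]
    congr 1
    rw [← integral_Iic_eq_integral_Iio,
      setIntegral_eq_of_subset_of_forall_diff_eq_zero measurableSet_Iic
        (Ioc_subset_Iic_self.trans (Iic_subset_Iic.2 le_rfl) : Ioc (-R) (0:ℝ) ⊆ Iic 0)
        (fun x hx => hψ.vanishx x t (by
          have h1 : x ≤ -R := by
            rcases hx with ⟨hx1, hx2⟩
            by_contra hcon
            exact hx2 ⟨not_le.1 hcon, hx1⟩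
          rw [abs_of_nonpos (by linarith [hψ.Rpos])]
          linarith)),
      intervalIntegral.integral_of_le (by linarith [hψ.Rpos] : (-R:ℝ) ≤ 0)]
  have hIci : ∫ x in Ici (0:ℝ), (if x < 0 then a else b) * ψ (x, t)
      = b * ∫ x in (0:ℝ)..R, ψ (x, t) := by
    rw [setIntegral_congr_fun measurableSet_Ici
      (fun x (hx : 0 ≤ x) => by rw [if_neg (not_lt.2 hx)] : EqOn _ (fun x => b * ψ (x, t)) (Ici 0)),
      integral_const_mul]
    congr 1
    rw [integral_Ici_eq_integral_Ioi,
      setIntegral_eq_of_subset_of_forall_diff_eq_zero measurableSet_Ioi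
        (Ioc_subset_Ioi_self : Ioc (0:ℝ) R ⊆ Ioi 0)
        (fun x hx => hψ.vanishx x t (by
          have h1 : R ≤ x := by
            rcases hx with ⟨hx1, hx2⟩
            by_contra hcon
            exact hx2 ⟨hx1, (not_le.1 hcon).le⟩
          rw [abs_of_pos (lt_of_lt_of_le hψ.Rpos h1)]
          exact h1)),
      intervalIntegral.integral_of_le hψ.Rpos.le]
  rw [hIio, hIci]

lemma inner_one {ψ : ℝ × ℝ → ℝ} {M R : ℝ} (hψ : NiceFun ψ M R) (a b c d t : ℝ) (hd : 0 < d) :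
    ∫ x : ℝ, ((if x < 0 then a else b) + (Ico (0:ℝ) d).indicator (fun _ => c) x) * ψ (x, t)
      = (a * (∫ x in (-R)..(0:ℝ), ψ (x, t)) + b * ∫ x in (0:ℝ)..R, ψ (x, t))
        + c * ∫ x in (0:ℝ)..d, ψ (x, t) := by
  have hsplit : (fun x => ((if x < 0 then a else b) + (Ico (0:ℝ) d).indicator (fun _ => c) x) * ψ (x, t))
      = fun x => (if x < 0 then a else b) * ψ (x, t)
          + (Ico (0:ℝ) d).indicator (fun _ => c) x * ψ (x, t) := by
    funext x; ring
  rw [hsplit, integral_add (ite_mul_integrable hψ a b t) (indicator_mul_integrable hψ c d t),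
    integral_ite_mul hψ a b t]
  congr 1
  have heq : (fun x => (Ico (0:ℝ) d).indicator (fun _ => c) x * ψ (x, t))
      = (Ico (0:ℝ) d).indicator (fun x => c * ψ (x, t)) := by
    funext x
    by_cases hx : x ∈ Ico (0:ℝ) d <;> simp [hx]
  rw [heq, integral_indicator measurableSet_Ico, integral_Ico_eq_integral_Ioo,
    ← integral_Ioc_eq_integral_Ioo, ← intervalIntegral.integral_of_le hd.le,
    intervalIntegral.integral_const_mul]

lemma integrable_inner_one {ψ : ℝ × ℝ → ℝ} {M R : ℝ} (hψ : NiceFun ψ M R) (a b c d t : ℝ) :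
    Integrable (fun x =>
      ((if x < 0 then a else b) + (Ico (0:ℝ) d).indicator (fun _ => c) x) * ψ (x, t)) := by
  have hsplit : (fun x => ((if x < 0 then a else b) + (Ico (0:ℝ) d).indicator (fun _ => c) x) * ψ (x, t))
      = fun x => (if x < 0 then a else b) * ψ (x, t)
          + (Ico (0:ℝ) d).indicator (fun _ => c) x * ψ (x, t) := by
    funext x; ring
  rw [hsplit]
  exact (ite_mul_integrable hψ a b t).add (indicator_mul_integrable hψ c d t)

lemma sdw_eq (u0 u1 c ε x t : ℝ) (hεt : 0 < ε * t) :
    sdw u0 u1 u0 (u1 + c) ε x t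
      = (if x < 0 then u0 else u1) + (Ico (0:ℝ) (ε*t)).indicator (fun _ => c) x := by
  unfold sdw
  have hneg : -(ε*t) < 0 := neg_lt_zero.2 hεt
  simp only [Set.indicator_apply, Set.mem_Ico]
  rcases lt_or_ge x 0 with hx | hx
  · have h4 : ¬ (0 ≤ x ∧ x < ε*t) := fun h => absurd hx (not_lt.2 h.1)
    have h1 : ¬ x < -(ε*t) ∨ x < -(ε*t) := (em _).symm
    by_cases h1 : x < -(ε*t) <;> simp [h1, hx, h4]
  · have h1 : ¬ x < -(ε*t) := by linarith
    have h2 : ¬ x < 0 := not_lt.2 hx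
    by_cases h3 : x < ε*t <;> simp [h1, h2, h3, hx]

lemma flux_eq (fl fr : ℝ → ℝ) (u0 u1 c ε x t : ℝ) (hεt : 0 < ε * t) :
    twoFlux fl fr x (sdw u0 u1 u0 (u1 + c) ε x t)
      = (if x < 0 then fl u0 else fr u1)
        + (Ico (0:ℝ) (ε*t)).indicator (fun _ => fr (u1 + c) - fr u1) x := by
  unfold twoFlux sdw
  have hneg : -(ε*t) < 0 := neg_lt_zero.2 hεt
  simp only [Set.indicator_apply, Set.mem_Ico]
  rcases lt_or_ge x 0 with hx | hx
  · have h4 : ¬ (0 ≤ x ∧ x < ε*t) := fun h => absurd hx (not_lt.2 h.1)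
    by_cases h1 : x < -(ε*t) <;> simp [h1, hx, h4]
  · have h1 : ¬ x < -(ε*t) := by linarith
    have h2 : ¬ x < 0 := not_lt.2 hx
    by_cases h3 : x < ε*t <;> simp [h1, h2, h3, hx] <;> ring

lemma delta_limit {ψ : ℝ × ℝ → ℝ} {M R : ℝ} (hψ : NiceFun ψ M R) :
    Tendsto (fun ε : ℝ => ∫ t in Ioi (0:ℝ), ε⁻¹ * ∫ x in (0:ℝ)..(ε*t), ψ (x, t))
      (𝓝[>] (0:ℝ)) (𝓝 (∫ t in Ioi (0:ℝ), t * ψ (0, t))) := by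
  have hcont0 : Continuous fun t : ℝ => t * ψ (0, t) :=
    continuous_id.mul (hψ.cont.comp (continuous_const.prodMk continuous_id))
  have hint2 : IntegrableOn (fun t => t * ψ (0, t)) (Ioi (0:ℝ)) :=
    integrableOn_Ioi_of_vanish hcont0 hψ.Rpos
      (fun t ht => by rw [hψ.vanisht 0 t ht, mul_zero])
  have key : ∀ ε : ℝ, 0 < ε →
      |(∫ t in Ioi (0:ℝ), ε⁻¹ * ∫ x in (0:ℝ)..(ε*t), ψ (x, t))
        - ∫ t in Ioi (0:ℝ), t * ψ (0, t)| ≤ (M*R*R*R)*ε := by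
    intro ε hε
    have hcont1 : Continuous fun t : ℝ => ε⁻¹ * ∫ x in (0:ℝ)..(ε*t), ψ (x, t) :=
      continuous_const.mul (cont_param hψ.cont ε 0)
    have h01 : ∀ t, R ≤ t → (ε⁻¹ * ∫ x in (0:ℝ)..(ε*t), ψ (x, t)) = 0 := by
      intro t ht
      rw [intervalIntegral.integral_congr
        (fun x _ => hψ.vanisht x t ht : EqOn (fun x => ψ (x, t)) (fun _ => (0:ℝ)) _)]
      simp
    have hint1 : IntegrableOn (fun t => ε⁻¹ * ∫ x in (0:ℝ)..(ε*t), ψ (x, t)) (Ioi (0:ℝ)) :=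
      integrableOn_Ioi_of_vanish hcont1 hψ.Rpos h01
    rw [← integral_sub hint1 hint2]
    refine le_trans (abs_integral_Ioi_le (C := (M*R*R)*ε) (hcont1.sub hcont0) hψ.Rpos
      (fun t ht => by rw [Pi.sub_apply, h01 t ht, hψ.vanisht 0 t ht, mul_zero, sub_zero]) ?_) (le_of_eq (by ring))
    intro t ht
    have hεt : 0 < ε * t := mul_pos hε ht.1
    have hslice : Continuous fun x => ψ (x, t) :=
      hψ.cont.comp (continuous_id.prodMk continuous_const)
    have heq : ε⁻¹ * (∫ x in (0:ℝ)..(ε*t), ψ (x, t)) - t * ψ (0, t)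
        = ε⁻¹ * ∫ x in (0:ℝ)..(ε*t), (ψ (x, t) - ψ (0, t)) := by
      rw [intervalIntegral.integral_sub (hslice.intervalIntegrable _ _)
        (intervalIntegrable_const), intervalIntegral.integral_const, smul_eq_mul, sub_zero]
      field_simp
    have hb : ‖∫ x in (0:ℝ)..(ε*t), (ψ (x, t) - ψ (0, t))‖ ≤ (M*(ε*t)) * |ε*t - 0| := by
      refine intervalIntegral.norm_integral_le_of_norm_le_const ?_
      intro x hx
      rw [uIoc_of_le hεt.le] at hx
      rw [Real.norm_eq_abs]
      refine le_trans (hψ.lip x 0 t) ?_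
      rw [sub_zero]
      have : |x| ≤ ε * t := by
        rw [abs_of_pos hx.1]; exact hx.2
      exact mul_le_mul_of_nonneg_left this hψ.Mpos.le
    rw [Pi.sub_apply, heq, abs_mul, abs_of_pos (inv_pos.2 hε)]
    rw [Real.norm_eq_abs] at hb
    have h2 : ε⁻¹ * |∫ x in (0:ℝ)..(ε*t), (ψ (x, t) - ψ (0, t))|
        ≤ ε⁻¹ * ((M*(ε*t)) * |ε*t - 0|) :=
      mul_le_mul_of_nonneg_left hb (inv_pos.2 hε).le
    refine h2.trans ?_
    rw [sub_zero, abs_of_pos hεt]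
    have hM := hψ.Mpos
    have ht1 := ht.1
    have ht2 := ht.2
    have hRpos := hψ.Rpos
    have hεne : ε ≠ 0 := hε.ne'
    have hexp : ε⁻¹ * (M * (ε * t) * (ε * t)) = M * ε * t * t := by
      field_simp
    rw [hexp]
    nlinarith [mul_le_mul ht2 ht2 ht1.le hRpos.le, mul_pos hM hε]
  have h1 : Tendsto (fun ε : ℝ =>
      (∫ t in Ioi (0:ℝ), ε⁻¹ * ∫ x in (0:ℝ)..(ε*t), ψ (x, t))
        - ∫ t in Ioi (0:ℝ), t * ψ (0, t)) (𝓝[>] (0:ℝ)) (𝓝 0) := by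
    refine squeeze_zero_norm' (a := fun ε => (M*R*R*R)*ε) ?_ ?_
    · filter_upwards [self_mem_nhdsWithin] with ε hε
      exact key ε hε
    · have : Tendsto (fun ε : ℝ => (M*R*R*R)*ε) (𝓝 (0:ℝ)) (𝓝 ((M*R*R*R)*0)) :=
        tendsto_id.const_mul _
      rw [mul_zero] at this
      exact this.mono_left nhdsWithin_le_nhds
  have h2 := h1.add_const (∫ t in Ioi (0:ℝ), t * ψ (0, t))
  rw [zero_add] at h2
  refine h2.congr (fun ε => by ring)

lemma edge_bound {ψ : ℝ × ℝ → ℝ} {M R : ℝ} (hψ : NiceFun ψ M R) {ε : ℝ} (hε : 0 < ε) :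
    |∫ t in Ioi (0:ℝ), (ψ (ε*t, t) - ψ (0, t))| ≤ (M*R*R)*ε := by
  have hcont : Continuous fun t : ℝ => ψ (ε*t, t) - ψ (0, t) :=
    ((hψ.cont.comp ((continuous_const.mul continuous_id).prodMk continuous_id)).sub
      (hψ.cont.comp (continuous_const.prodMk continuous_id)))
  refine le_trans (abs_integral_Ioi_le (C := (M*R)*ε) hcont hψ.Rpos
    (fun t ht => by rw [hψ.vanisht _ t ht, hψ.vanisht 0 t ht, sub_zero]) ?_)
    (le_of_eq (by ring))
  intro t ht
  refine le_trans (hψ.lip (ε*t) 0 t) ?_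
  rw [sub_zero, abs_of_pos (mul_pos hε ht.1)]
  have hM := hψ.Mpos
  nlinarith [ht.1, ht.2, hψ.Rpos, mul_pos hM hε]

lemma eps_mul_fr_tendsto {fr : ℝ → ℝ} {ν2 : ℝ} (hν2 : ν2 ∈ Ico (0:ℝ) 1)
    {L : ℝ} (hL : Tendsto (fun u : ℝ => fr u / u ^ ν2) atTop (𝓝 L))
    (u1 κ : ℝ) (hκ : 0 < κ) :
    Tendsto (fun ε : ℝ => ε * fr (u1 + κ / ε)) (𝓝[>] (0:ℝ)) (𝓝 0) := by
  have hvtop : Tendsto (fun ε : ℝ => u1 + κ / ε) (𝓝[>] (0:ℝ)) atTop := by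
    have h1 : Tendsto (fun ε : ℝ => κ / ε) (𝓝[>] (0:ℝ)) atTop := by
      simpa [div_eq_mul_inv] using tendsto_inv_nhdsGT_zero.const_mul_atTop hκ
    simpa using tendsto_atTop_add_const_left _ u1 h1
  have hA : Tendsto (fun ε : ℝ => fr (u1 + κ / ε) / (u1 + κ / ε) ^ ν2) (𝓝[>] (0:ℝ)) (𝓝 L) :=
    hL.comp hvtop
  set C := |u1| + κ with hCdef
  have hCpos : 0 < C := lt_of_lt_of_le hκ (le_add_of_nonneg_left (abs_nonneg u1))
  have hge1 : ∀ᶠ ε in 𝓝[>] (0:ℝ), (1:ℝ) ≤ u1 + κ / ε := hvtop.eventually (eventually_ge_atTop 1)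
  have hB : Tendsto (fun ε : ℝ => (u1 + κ / ε) ^ ν2 * ε) (𝓝[>] (0:ℝ)) (𝓝 0) := by
    have hub : ∀ᶠ ε in 𝓝[>] (0:ℝ),
        (u1 + κ / ε) ^ ν2 * ε ≤ C ^ ν2 * ε ^ (1 - ν2) := by
      filter_upwards [self_mem_nhdsWithin, Ioo_mem_nhdsGT_of_mem
        (⟨le_refl (0:ℝ), zero_lt_one⟩ : (0:ℝ) ∈ Ico (0:ℝ) 1), hge1] with ε hε hε1 hv1
      have hε0 : (0:ℝ) < ε := hε
      have hεle : ε ≤ 1 := hε1.2.le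
      have hvle : u1 + κ / ε ≤ C / ε := by
        rw [hCdef, add_div]
        have h1 : u1 ≤ |u1| / ε := by
          refine le_trans (le_abs_self u1) ?_
          rw [le_div_iff₀ hε0]
          exact mul_le_of_le_one_right (abs_nonneg _) hεle
        linarith
      have hrpow : (u1 + κ / ε) ^ ν2 ≤ (C / ε) ^ ν2 :=
        Real.rpow_le_rpow (by linarith) hvle hν2.1
      have h2 : (u1 + κ / ε) ^ ν2 * ε ≤ (C / ε) ^ ν2 * ε :=
        mul_le_mul_of_nonneg_right hrpow hε0.le
      refine h2.trans (le_of_eq ?_)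
      rw [Real.div_rpow hCpos.le hε0.le, Real.rpow_sub hε0, Real.rpow_one]
      field_simp
    have hlb : ∀ᶠ ε in 𝓝[>] (0:ℝ), (0:ℝ) ≤ (u1 + κ / ε) ^ ν2 * ε := by
      filter_upwards [self_mem_nhdsWithin, hge1] with ε hε hv1
      exact mul_nonneg (Real.rpow_nonneg (by linarith) _) (le_of_lt hε)
    have hrhs : Tendsto (fun ε : ℝ => C ^ ν2 * ε ^ (1 - ν2)) (𝓝[>] (0:ℝ)) (𝓝 0) := by
      have hc : ContinuousAt (fun x : ℝ => x ^ (1 - ν2)) 0 :=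
        Real.continuousAt_rpow_const 0 (1 - ν2) (Or.inr (by linarith [hν2.2]))
      have h0 : (0:ℝ) ^ (1 - ν2) = 0 := Real.zero_rpow (by linarith [hν2.2])
      have h1 : Tendsto (fun x : ℝ => x ^ (1 - ν2)) (𝓝[>] (0:ℝ)) (𝓝 0) := by
        have h2 := hc.tendsto
        rw [h0] at h2
        exact h2.mono_left nhdsWithin_le_nhds
      have h3 := h1.const_mul (C ^ ν2)
      rw [mul_zero] at h3
      exact h3
    exact squeeze_zero' hlb hub hrhs
  have hmul := hA.mul hB
  rw [mul_zero] at hmul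
  refine Tendsto.congr' ?_ hmul
  filter_upwards [hge1] with ε hv1
  have hvpos : (0:ℝ) < u1 + κ / ε := by linarith
  have hp : (0:ℝ) < (u1 + κ / ε) ^ ν2 := Real.rpow_pos_of_pos hvpos _
  field_simp

lemma ftc_t_Ioi {φ : ℝ × ℝ → ℝ} (hts : IsTestFun φ) {M R : ℝ}
    (hφn : NiceFun φ M R)
    (hpt : NiceFun (fun p => fderiv ℝ φ p (0, 1)) M R) (x : ℝ) :
    ∫ t in Ioi (0:ℝ), fderiv ℝ φ (x, t) (0, 1) = 0 := by
  have hlim : Tendsto (fun s => φ (x, s)) atTop (𝓝 0) := by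
    refine Tendsto.congr' ?_ (tendsto_const_nhds (α := ℝ) (x := (0:ℝ)))
    exact eventually_atTop.2 ⟨R, fun s hs => (hφn.vanisht x s hs).symm⟩
  have hint : IntegrableOn (fun s => fderiv ℝ φ (x, s) (0, 1)) (Ioi (0:ℝ)) :=
    integrableOn_Ioi_of_vanish (hpt.cont.comp (continuous_const.prodMk continuous_id))
      hφn.Rpos (fun t ht => hpt.vanisht x t ht)
  have h := integral_Ioi_of_hasDerivAt_of_tendsto' (a := 0)
    (fun s _ => hasDerivAt_slice_t hts.1 x s) hint hlim
  rw [h, hts.2.2 (x, 0) le_rfl, zero_sub, neg_zero]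

lemma parts_t {φ : ℝ × ℝ → ℝ} (hts : IsTestFun φ) {M R : ℝ}
    (hφn : NiceFun φ M R)
    (hpt : NiceFun (fun p => fderiv ℝ φ p (0, 1)) M R) :
    ∫ t in Ioi (0:ℝ), t * fderiv ℝ φ (0, t) (0, 1)
      = - ∫ t in Ioi (0:ℝ), φ (0, t) := by
  have hderiv : ∀ s ∈ Ici (0:ℝ), HasDerivAt (fun s => s * φ (0, s))
      (1 * φ (0, s) + s * fderiv ℝ φ (0, s) (0, 1)) s :=
    fun s _ => (hasDerivAt_id s).mul (hasDerivAt_slice_t hts.1 0 s)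
  have hint1 : IntegrableOn (fun s => φ (0, s)) (Ioi (0:ℝ)) :=
    integrableOn_Ioi_of_vanish (hφn.cont.comp (continuous_const.prodMk continuous_id))
      hφn.Rpos (fun t ht => hφn.vanisht 0 t ht)
  have hint2 : IntegrableOn (fun s => s * fderiv ℝ φ (0, s) (0, 1)) (Ioi (0:ℝ)) :=
    integrableOn_Ioi_of_vanish
      (continuous_id.mul (hpt.cont.comp (continuous_const.prodMk continuous_id)))
      hφn.Rpos (fun t ht => by rw [hpt.vanisht 0 t ht, mul_zero])
  have hintsum : IntegrableOn
      (fun s => 1 * φ (0, s) + s * fderiv ℝ φ (0, s) (0, 1)) (Ioi (0:ℝ)) :=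
    MeasureTheory.IntegrableOn.congr_fun (hint1.add hint2)
      (fun s _ => by simp only [Pi.add_apply]; ring) measurableSet_Ioi
  have hlim : Tendsto (fun s : ℝ => s * φ (0, s)) atTop (𝓝 0) := by
    refine Tendsto.congr' ?_ (tendsto_const_nhds (α := ℝ) (x := (0:ℝ)))
    exact eventually_atTop.2
      ⟨R, fun s hs => (by rw [hφn.vanisht 0 s hs, mul_zero] : s * φ (0, s) = 0).symm⟩
  have h := integral_Ioi_of_hasDerivAt_of_tendsto' (a := 0) hderiv hintsum hlim
  rw [hts.2.2 (0, 0) le_rfl, mul_zero, sub_zero] at h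
  have hsplit : ∫ s in Ioi (0:ℝ), (1 * φ (0, s) + s * fderiv ℝ φ (0, s) (0, 1))
      = (∫ s in Ioi (0:ℝ), φ (0, s)) + ∫ s in Ioi (0:ℝ), s * fderiv ℝ φ (0, s) (0, 1) := by
    rw [setIntegral_congr_fun measurableSet_Ioi
      (fun s _ => by ring : EqOn _ (fun s => φ (0, s) + s * fderiv ℝ φ (0, s) (0, 1)) _)]
    exact integral_add hint1 hint2
  rw [hsplit] at h
  linarith

lemma TU_zero {φ : ℝ × ℝ → ℝ} (hts : IsTestFun φ) {M R : ℝ}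
    (hφn : NiceFun φ M R)
    (hpt : NiceFun (fun p => fderiv ℝ φ p (0, 1)) M R) (a b : ℝ) :
    ∫ t in Ioi (0:ℝ), ∫ x : ℝ, (if x < 0 then a else b) * fderiv ℝ φ (x, t) (0, 1) = 0 := by
  have hmeas : AEStronglyMeasurable
      (Function.uncurry fun (t x : ℝ) => (if x < 0 then a else b) * fderiv ℝ φ (x, t) (0, 1))
      ((volume.restrict (Ioi (0:ℝ))).prod volume) := by
    refine (Measurable.mul ?_ ?_).aestronglyMeasurable
    · exact (Measurable.ite measurableSet_Iio measurable_const measurable_const).comp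
        measurable_snd
    · exact (hpt.cont.comp continuous_swap).measurable
  have hbound : Integrable
      ((Iio R ×ˢ Ioo (-R) R).indicator fun _ => (max |a| |b|) * M)
      ((volume.restrict (Ioi (0:ℝ))).prod volume) := by
    refine IntegrableOn.integrable_indicator ?_ (measurableSet_Iio.prod measurableSet_Ioo)
    refine integrableOn_const (ne_of_lt ?_)
    rw [Measure.prod_prod, Measure.restrict_apply measurableSet_Iio, Set.Iio_inter_Ioi,
      Real.volume_Ioo, Real.volume_Ioo]
    exact ENNReal.mul_lt_top ENNReal.ofReal_lt_top ENNReal.ofReal_lt_top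
  have hb : ∀ q : ℝ × ℝ,
      ‖(if q.2 < 0 then a else b) * fderiv ℝ φ (q.2, q.1) (0, 1)‖
        ≤ (Iio R ×ˢ Ioo (-R) R).indicator (fun _ => (max |a| |b|) * M) q := by
    intro q
    by_cases hq : q ∈ Iio R ×ˢ Ioo (-R) R
    · rw [Set.indicator_of_mem hq, Real.norm_eq_abs, abs_mul]
      refine mul_le_mul ?_ (hpt.bound _) (abs_nonneg _) (le_max_iff.2 (Or.inl (abs_nonneg _)))
      split_ifs
      · exact le_max_left _ _
      · exact le_max_right _ _
    · rw [Set.indicator_of_notMem hq, Real.norm_eq_abs, abs_mul]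
      have hzero : fderiv ℝ φ (q.2, q.1) (0, 1) = 0 := by
        by_cases h1 : q.1 < R
        · have h2 : q.2 ∉ Ioo (-R) R := fun hm => hq (Set.mem_prod.2 ⟨h1, hm⟩)
          refine hpt.vanishx q.2 q.1 ?_
          by_cases h' : -R < q.2
          · have h'' : R ≤ q.2 := by simpa [Set.mem_Ioo, h'] using h2
            rw [abs_of_pos (lt_of_lt_of_le hφn.Rpos h'')]
            exact h''
          · rw [abs_of_nonpos (by linarith [not_lt.1 h', hφn.Rpos])]
            linarith [not_lt.1 h']
        · exact hpt.vanisht q.2 q.1 (not_lt.1 h1)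
      rw [hzero, abs_zero, mul_zero]
  have hintg : Integrable
      (Function.uncurry fun (t x : ℝ) => (if x < 0 then a else b) * fderiv ℝ φ (x, t) (0, 1))
      ((volume.restrict (Ioi (0:ℝ))).prod volume) :=
    hbound.mono' hmeas (ae_of_all _ hb)
  rw [integral_integral_swap hintg]
  have hx0 : ∀ x : ℝ,
      ∫ t in Ioi (0:ℝ), (if x < 0 then a else b) * fderiv ℝ φ (x, t) (0, 1) = 0 := by
    intro x
    rw [integral_const_mul, ftc_t_Ioi hts hφn hpt x, mul_zero]
  simp only [hx0, integral_zero]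

lemma part_delta (u0 u1 κ : ℝ) {φ : ℝ × ℝ → ℝ} {M R : ℝ} (hφn : NiceFun φ M R) :
    Tendsto (fun ε : ℝ =>
        ∫ t in Ioi (0:ℝ), ∫ x : ℝ, sdw u0 u1 u0 (u1 + κ / ε) ε x t * φ (x, t))
      (𝓝[>] (0:ℝ))
      (𝓝 ((∫ t in Ioi (0:ℝ), ∫ x : ℝ, (if x < 0 then u0 else u1) * φ (x, t)) +
           κ * ∫ t in Ioi (0:ℝ), t * φ (0, t))) := by
  have hlim := (delta_limit hφn).const_mul κ
  have hfull := (tendsto_const_nhds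
    (x := (∫ t in Ioi (0:ℝ), ∫ x : ℝ, (if x < 0 then u0 else u1) * φ (x, t)))
    (f := 𝓝[>] (0:ℝ))).add hlim
  refine Tendsto.congr' ?_ hfull
  filter_upwards [self_mem_nhdsWithin] with ε (hε : (0:ℝ) < ε)
  have hinner : ∀ t ∈ Ioi (0:ℝ),
      (∫ x : ℝ, sdw u0 u1 u0 (u1 + κ / ε) ε x t * φ (x, t))
        = (u0 * (∫ x in (-R)..(0:ℝ), φ (x, t)) + u1 * ∫ x in (0:ℝ)..R, φ (x, t))
            + (κ/ε) * ∫ x in (0:ℝ)..(ε*t), φ (x, t) := by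
    intro t ht
    have hεt : 0 < ε * t := mul_pos hε ht
    have hptw : ∀ x : ℝ, sdw u0 u1 u0 (u1 + κ / ε) ε x t * φ (x, t)
        = ((if x < 0 then u0 else u1)
            + (Ico (0:ℝ) (ε*t)).indicator (fun _ => κ/ε) x) * φ (x, t) :=
      fun x => by rw [sdw_eq u0 u1 (κ/ε) ε x t hεt]
    rw [integral_congr_ae (ae_of_all _ hptw)]
    exact inner_one hφn u0 u1 (κ/ε) (ε*t) t hεt
  have hg1cont : Continuous fun t =>
      u0 * (∫ x in (-R)..(0:ℝ), φ (x, t)) + u1 * ∫ x in (0:ℝ)..R, φ (x, t) :=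
    (continuous_const.mul (cont_param' hφn.cont (-R) 0)).add
      (continuous_const.mul (cont_param' hφn.cont 0 R))
  have hvanint : ∀ (a b t : ℝ), R ≤ t → (∫ x in a..b, φ (x, t)) = 0 := by
    intro a b t ht
    rw [intervalIntegral.integral_congr
      (fun x _ => hφn.vanisht x t ht : EqOn (fun x => φ (x, t)) (fun _ => (0:ℝ)) _)]
    simp
  have hg1int : IntegrableOn (fun t =>
      u0 * (∫ x in (-R)..(0:ℝ), φ (x, t)) + u1 * ∫ x in (0:ℝ)..R, φ (x, t)) (Ioi (0:ℝ)) :=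
    integrableOn_Ioi_of_vanish hg1cont hφn.Rpos
      (fun t ht => by rw [hvanint _ _ t ht, hvanint _ _ t ht, mul_zero, mul_zero, add_zero])
  have hg2int : IntegrableOn (fun t => (κ/ε) * ∫ x in (0:ℝ)..(ε*t), φ (x, t)) (Ioi (0:ℝ)) :=
    integrableOn_Ioi_of_vanish (continuous_const.mul (cont_param hφn.cont ε 0)) hφn.Rpos
      (fun t ht => by rw [hvanint _ _ t ht, mul_zero])
  have h1 : ∫ t in Ioi (0:ℝ), ∫ x : ℝ, sdw u0 u1 u0 (u1 + κ / ε) ε x t * φ (x, t)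
      = (∫ t in Ioi (0:ℝ),
          (u0 * (∫ x in (-R)..(0:ℝ), φ (x, t)) + u1 * ∫ x in (0:ℝ)..R, φ (x, t)))
        + ∫ t in Ioi (0:ℝ), (κ/ε) * ∫ x in (0:ℝ)..(ε*t), φ (x, t) := by
    rw [setIntegral_congr_fun measurableSet_Ioi hinner]
    exact integral_add hg1int hg2int
  have h2 : (∫ t in Ioi (0:ℝ),
      (u0 * (∫ x in (-R)..(0:ℝ), φ (x, t)) + u1 * ∫ x in (0:ℝ)..R, φ (x, t)))
      = ∫ t in Ioi (0:ℝ), ∫ x : ℝ, (if x < 0 then u0 else u1) * φ (x, t) :=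
    setIntegral_congr_fun measurableSet_Ioi (fun t _ => (integral_ite_mul hφn u0 u1 t).symm)
  have h3 : (∫ t in Ioi (0:ℝ), (κ/ε) * ∫ x in (0:ℝ)..(ε*t), φ (x, t))
      = κ * ∫ t in Ioi (0:ℝ), ε⁻¹ * ∫ x in (0:ℝ)..(ε*t), φ (x, t) := by
    rw [integral_const_mul, integral_const_mul, div_eq_mul_inv, mul_assoc]
  rw [h1, h2, h3]

lemma part_weak (fl fr : ℝ → ℝ) (u0 u1 : ℝ)
    (κ : ℝ) (hκdef : κ = fl u0 - fr u1) (hκ : 0 < κ)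
    (hfr0 : Tendsto (fun ε : ℝ => ε * fr (u1 + κ / ε)) (𝓝[>] (0:ℝ)) (𝓝 0))
    {φ : ℝ × ℝ → ℝ} {M R : ℝ} (hts : IsTestFun φ)
    (hφn : NiceFun φ M R)
    (hpxn : NiceFun (fun p => fderiv ℝ φ p (1, 0)) M R)
    (hptn : NiceFun (fun p => fderiv ℝ φ p (0, 1)) M R) :
    Tendsto (fun ε : ℝ =>
        ∫ t in Ioi (0:ℝ), ∫ x : ℝ,
          (sdw u0 u1 u0 (u1 + κ / ε) ε x t * fderiv ℝ φ (x, t) (0, 1) +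
           twoFlux fl fr x (sdw u0 u1 u0 (u1 + κ / ε) ε x t) * fderiv ℝ φ (x, t) (1, 0)))
      (𝓝[>] (0:ℝ)) (𝓝 0) := by
  have hDlim : Tendsto (fun ε : ℝ =>
      ∫ t in Ioi (0:ℝ), ε⁻¹ * ∫ x in (0:ℝ)..(ε*t), fderiv ℝ φ (x, t) (0, 1))
      (𝓝[>] (0:ℝ)) (𝓝 (- ∫ t in Ioi (0:ℝ), φ (0, t))) := by
    have h := delta_limit hptn
    rwa [parts_t hts hφn hptn] at h
  have hElim : Tendsto (fun ε : ℝ => ∫ t in Ioi (0:ℝ), (φ (ε*t, t) - φ (0, t)))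
      (𝓝[>] (0:ℝ)) (𝓝 0) := by
    refine squeeze_zero_norm' (a := fun ε => (M*R*R)*ε) ?_ ?_
    · filter_upwards [self_mem_nhdsWithin] with ε hε
      exact edge_bound hφn hε
    · have h := (tendsto_id (x := 𝓝 (0:ℝ))).const_mul (M*R*R)
      rw [mul_zero] at h
      exact h.mono_left nhdsWithin_le_nhds
  have hE1 : Tendsto (fun ε : ℝ =>
      fr (u1 + κ/ε) * ∫ t in Ioi (0:ℝ), (φ (ε*t, t) - φ (0, t))) (𝓝[>] (0:ℝ)) (𝓝 0) := by
    refine squeeze_zero_norm' (a := fun ε => (M*R*R) * |ε * fr (u1 + κ/ε)|) ?_ ?_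
    · filter_upwards [self_mem_nhdsWithin] with ε (hε : (0:ℝ) < ε)
      rw [Real.norm_eq_abs, abs_mul]
      calc |fr (u1 + κ/ε)| * |∫ t in Ioi (0:ℝ), (φ (ε*t, t) - φ (0, t))|
          ≤ |fr (u1 + κ/ε)| * ((M*R*R)*ε) :=
            mul_le_mul_of_nonneg_left (edge_bound hφn hε) (abs_nonneg _)
        _ = (M*R*R) * |ε * fr (u1 + κ/ε)| := by
            rw [abs_mul, abs_of_pos hε]; ring
    · have h := hfr0.abs.const_mul (M*R*R)
      rw [abs_zero, mul_zero] at h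
      exact h
  have hE2 : Tendsto (fun ε : ℝ =>
      fr u1 * ∫ t in Ioi (0:ℝ), (φ (ε*t, t) - φ (0, t))) (𝓝[>] (0:ℝ)) (𝓝 0) := by
    have h := hElim.const_mul (fr u1)
    rwa [mul_zero] at h
  have hforms : Tendsto (fun ε : ℝ =>
      κ * (∫ t in Ioi (0:ℝ), ε⁻¹ * ∫ x in (0:ℝ)..(ε*t), fderiv ℝ φ (x, t) (0, 1))
        + ((fl u0 - fr u1) * (∫ t in Ioi (0:ℝ), φ (0, t))
          + (fr (u1 + κ/ε) * (∫ t in Ioi (0:ℝ), (φ (ε*t, t) - φ (0, t)))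
            - fr u1 * ∫ t in Ioi (0:ℝ), (φ (ε*t, t) - φ (0, t)))))
      (𝓝[>] (0:ℝ))
      (𝓝 (κ * (- ∫ t in Ioi (0:ℝ), φ (0, t))
        + ((fl u0 - fr u1) * (∫ t in Ioi (0:ℝ), φ (0, t)) + ((0:ℝ) - 0)))) :=
    (hDlim.const_mul κ).add (tendsto_const_nhds.add (hE1.sub hE2))
  have hval : κ * (- ∫ t in Ioi (0:ℝ), φ (0, t))
      + ((fl u0 - fr u1) * (∫ t in Ioi (0:ℝ), φ (0, t)) + ((0:ℝ) - 0)) = 0 := by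
    rw [hκdef]; ring
  rw [hval] at hforms
  refine Tendsto.congr' ?_ hforms
  filter_upwards [self_mem_nhdsWithin] with ε (hε : (0:ℝ) < ε)
  have hinner : ∀ t ∈ Ioi (0:ℝ),
      (∫ x : ℝ, (sdw u0 u1 u0 (u1 + κ / ε) ε x t * fderiv ℝ φ (x, t) (0, 1) +
           twoFlux fl fr x (sdw u0 u1 u0 (u1 + κ / ε) ε x t) * fderiv ℝ φ (x, t) (1, 0)))
      = ((u0 * (∫ x in (-R)..(0:ℝ), fderiv ℝ φ (x, t) (0, 1))
            + u1 * ∫ x in (0:ℝ)..R, fderiv ℝ φ (x, t) (0, 1))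
          + (κ/ε) * ∫ x in (0:ℝ)..(ε*t), fderiv ℝ φ (x, t) (0, 1))
        + ((fl u0 * φ (0, t) - fr u1 * φ (0, t))
          + (fr (u1 + κ/ε) - fr u1) * (φ (ε*t, t) - φ (0, t))) := by
    intro t ht
    have hεt : 0 < ε * t := mul_pos hε ht
    have hptw : ∀ x : ℝ,
        sdw u0 u1 u0 (u1 + κ / ε) ε x t * fderiv ℝ φ (x, t) (0, 1) +
          twoFlux fl fr x (sdw u0 u1 u0 (u1 + κ / ε) ε x t) * fderiv ℝ φ (x, t) (1, 0)
        = ((if x < 0 then u0 else u1)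
            + (Ico (0:ℝ) (ε*t)).indicator (fun _ => κ/ε) x) * fderiv ℝ φ (x, t) (0, 1)
          + ((if x < 0 then fl u0 else fr u1)
            + (Ico (0:ℝ) (ε*t)).indicator (fun _ => fr (u1 + κ/ε) - fr u1) x)
              * fderiv ℝ φ (x, t) (1, 0) :=
      fun x => by rw [flux_eq fl fr u0 u1 (κ/ε) ε x t hεt, sdw_eq u0 u1 (κ/ε) ε x t hεt]
    rw [integral_congr_ae (ae_of_all _ hptw),
      integral_add (integrable_inner_one hptn u0 u1 (κ/ε) (ε*t) t)
        (integrable_inner_one hpxn (fl u0) (fr u1) (fr (u1 + κ/ε) - fr u1) (ε*t) t),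
      inner_one hptn u0 u1 (κ/ε) (ε*t) t hεt,
      inner_one hpxn (fl u0) (fr u1) (fr (u1 + κ/ε) - fr u1) (ε*t) t hεt,
      ftc_x hts.1 hpxn.cont t (-R) 0, ftc_x hts.1 hpxn.cont t 0 R,
      ftc_x hts.1 hpxn.cont t 0 (ε*t),
      hφn.vanishx (-R) t (by rw [abs_neg]; exact le_abs_self R),
      hφn.vanishx R t (le_abs_self R)]
    ring
  have hvanint : ∀ (a b t : ℝ), R ≤ t → (∫ x in a..b, fderiv ℝ φ (x, t) (0, 1)) = 0 := by
    intro a b t ht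
    rw [intervalIntegral.integral_congr
      (fun x _ => hptn.vanisht x t ht :
        EqOn (fun x => fderiv ℝ φ (x, t) (0, 1)) (fun _ => (0:ℝ)) _)]
    simp
  have hG1int : IntegrableOn (fun t =>
      u0 * (∫ x in (-R)..(0:ℝ), fderiv ℝ φ (x, t) (0, 1))
        + u1 * ∫ x in (0:ℝ)..R, fderiv ℝ φ (x, t) (0, 1)) (Ioi (0:ℝ)) :=
    integrableOn_Ioi_of_vanish
      ((continuous_const.mul (cont_param' hptn.cont (-R) 0)).add
        (continuous_const.mul (cont_param' hptn.cont 0 R))) hφn.Rpos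
      (fun t ht => by rw [hvanint _ _ t ht, hvanint _ _ t ht, mul_zero, mul_zero, add_zero])
  have hG2int : IntegrableOn (fun t =>
      (κ/ε) * ∫ x in (0:ℝ)..(ε*t), fderiv ℝ φ (x, t) (0, 1)) (Ioi (0:ℝ)) :=
    integrableOn_Ioi_of_vanish (continuous_const.mul (cont_param hptn.cont ε 0)) hφn.Rpos
      (fun t ht => by rw [hvanint _ _ t ht, mul_zero])
  have hφ0cont : Continuous fun t : ℝ => φ (0, t) :=
    hφn.cont.comp (continuous_const.prodMk continuous_id)
  have hφεcont : Continuous fun t : ℝ => φ (ε*t, t) :=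
    hφn.cont.comp ((continuous_const.mul continuous_id).prodMk continuous_id)
  have hG3int : IntegrableOn (fun t =>
      fl u0 * φ (0, t) - fr u1 * φ (0, t)) (Ioi (0:ℝ)) :=
    integrableOn_Ioi_of_vanish
      ((continuous_const.mul hφ0cont).sub (continuous_const.mul hφ0cont)) hφn.Rpos
      (fun t ht => by rw [hφn.vanisht 0 t ht, mul_zero, mul_zero, sub_zero])
  have hG4int : IntegrableOn (fun t =>
      (fr (u1 + κ/ε) - fr u1) * (φ (ε*t, t) - φ (0, t))) (Ioi (0:ℝ)) :=
    integrableOn_Ioi_of_vanish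
      (continuous_const.mul (hφεcont.sub hφ0cont)) hφn.Rpos
      (fun t ht => by rw [hφn.vanisht _ t ht, hφn.vanisht 0 t ht, sub_zero, mul_zero])
  have hJ : ∫ t in Ioi (0:ℝ), ∫ x : ℝ,
        (sdw u0 u1 u0 (u1 + κ / ε) ε x t * fderiv ℝ φ (x, t) (0, 1) +
          twoFlux fl fr x (sdw u0 u1 u0 (u1 + κ / ε) ε x t) * fderiv ℝ φ (x, t) (1, 0))
      = ((∫ t in Ioi (0:ℝ),
            (u0 * (∫ x in (-R)..(0:ℝ), fderiv ℝ φ (x, t) (0, 1))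
              + u1 * ∫ x in (0:ℝ)..R, fderiv ℝ φ (x, t) (0, 1)))
          + ∫ t in Ioi (0:ℝ), (κ/ε) * ∫ x in (0:ℝ)..(ε*t), fderiv ℝ φ (x, t) (0, 1))
        + ((∫ t in Ioi (0:ℝ), (fl u0 * φ (0, t) - fr u1 * φ (0, t)))
          + ∫ t in Ioi (0:ℝ), (fr (u1 + κ/ε) - fr u1) * (φ (ε*t, t) - φ (0, t))) := by
    have hG12int : IntegrableOn (fun t =>
        (u0 * (∫ x in (-R)..(0:ℝ), fderiv ℝ φ (x, t) (0, 1))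
          + u1 * ∫ x in (0:ℝ)..R, fderiv ℝ φ (x, t) (0, 1))
        + (κ/ε) * ∫ x in (0:ℝ)..(ε*t), fderiv ℝ φ (x, t) (0, 1)) (Ioi (0:ℝ)) :=
      hG1int.add hG2int
    have hG34int : IntegrableOn (fun t =>
        (fl u0 * φ (0, t) - fr u1 * φ (0, t))
        + (fr (u1 + κ/ε) - fr u1) * (φ (ε*t, t) - φ (0, t))) (Ioi (0:ℝ)) :=
      hG3int.add hG4int
    rw [setIntegral_congr_fun measurableSet_Ioi hinner,
      integral_add hG12int hG34int,
      integral_add hG1int hG2int, integral_add hG3int hG4int]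
  have e1 : (∫ t in Ioi (0:ℝ),
      (u0 * (∫ x in (-R)..(0:ℝ), fderiv ℝ φ (x, t) (0, 1))
        + u1 * ∫ x in (0:ℝ)..R, fderiv ℝ φ (x, t) (0, 1))) = 0 := by
    rw [setIntegral_congr_fun measurableSet_Ioi
      (fun t _ => (integral_ite_mul hptn u0 u1 t).symm)]
    exact TU_zero hts hφn hptn u0 u1
  have e2 : (∫ t in Ioi (0:ℝ), (κ/ε) * ∫ x in (0:ℝ)..(ε*t), fderiv ℝ φ (x, t) (0, 1))
      = κ * ∫ t in Ioi (0:ℝ), ε⁻¹ * ∫ x in (0:ℝ)..(ε*t), fderiv ℝ φ (x, t) (0, 1) := by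
    rw [integral_const_mul, integral_const_mul, div_eq_mul_inv, mul_assoc]
  have e3 : (∫ t in Ioi (0:ℝ), (fl u0 * φ (0, t) - fr u1 * φ (0, t)))
      = (fl u0 - fr u1) * ∫ t in Ioi (0:ℝ), φ (0, t) := by
    rw [setIntegral_congr_fun measurableSet_Ioi
      (fun t _ => by ring : EqOn _ (fun t => (fl u0 - fr u1) * φ (0, t)) (Ioi (0:ℝ))),
      integral_const_mul]
  have e4 : (∫ t in Ioi (0:ℝ), (fr (u1 + κ/ε) - fr u1) * (φ (ε*t, t) - φ (0, t)))
      = (fr (u1 + κ/ε) - fr u1) * ∫ t in Ioi (0:ℝ), (φ (ε*t, t) - φ (0, t)) :=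
    integral_const_mul _ _
  rw [hJ, e1, e2, e3, e4, zero_add]
  ring

/-- main theorem, case `ν2 < 1`, `ξ0 = 0`, `ξ1 = κ`. -/
theorem main_theorem_right_sublinear
    (fl fr : ℝ → ℝ) (hfl : Continuous fl) (hfr : Continuous fr)
    (u0 u1 ν2 : ℝ) (hν2 : ν2 ∈ Ico (0:ℝ) 1)
    (hfrinf : ∃ L : ℝ, Tendsto (fun u : ℝ => fr u / u ^ ν2) atTop (𝓝 L))
    (κ : ℝ) (hκdef : κ = fl u0 - fr u1) (hκ : 0 < κ)
    (u0e u1e : ℝ → ℝ)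
    (hu0e : u0e = fun _ : ℝ => u0) (hu1e : u1e = fun ε : ℝ => u1 + κ / ε) :
    WeakAsymptoticSolution fl fr u0 u1 u0e u1e ∧
    ConvergesToDeltaShock u0 u1 u0e u1e κ := by
  obtain ⟨L, hL⟩ := hfrinf
  have hfr0 := eps_mul_fr_tendsto hν2 hL u1 κ hκ
  subst hu0e hu1e
  constructor
  · intro φ hφt
    obtain ⟨M, R, hφn, hpxn, hptn⟩ := testFun_nice hφt
    exact part_weak fl fr u0 u1 κ hκdef hκ hfr0 hφt hφn hpxn hptn
  · intro φ hφt
    obtain ⟨M, R, hφn, -, -⟩ := testFun_nice hφt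
    exact part_delta u0 u1 κ hφn
end
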